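/- arXiv:math/0312268 — 7 statements merged into one kernel-verified Lean document; each statement's English description precedes it below -/
import Mathlib

section
/- The symmetric Traveling Salesman Polytope ST_n (the convex hull in the space of n×n real matrices of the adjacency matrices of Hamiltonian cycles on n vertices, n ≥ 4) has dimension (n² − 3n)/2. -/
/-- The set of adjacency matrices of Hamiltonian cycles on `n` vertices: the simultaneous
row-and-column permutations of the adjacency matrix of the standard cycle `0,1,…,n-1`. -/
def hamiltonianCycleMatrices (n : ℕ) [NeZero n] : Set (Matrix (ZMod n) (ZMod n) ℝ) :=
  {M | ∃ σ : Equiv.Perm (ZMod n),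
    ∀ i j, M i j = if σ i = σ j + 1 ∨ σ j = σ i + 1 then 1 else 0}

/-- The symmetric Traveling Salesman Polytope: the convex hull of the adjacency matrices of
Hamiltonian cycles on `n` vertices inside the space of `n × n` real matrices. -/
def symmetricTSP (n : ℕ) [NeZero n] : Set (Matrix (ZMod n) (ZMod n) ℝ) :=
  convexHull ℝ (hamiltonianCycleMatrices n)

set_option linter.unusedSectionVars false

namespace TSP
open Matrix Finset Equiv

variable {n : ℕ} [NeZero n]

/-- entry function of the standard cycle adjacency -/
def C (p q : ZMod n) : ℝ := if p = q + 1 ∨ q = p + 1 then 1 else 0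

/-- symmetrized elementary matrix entry -/
def ient (u v a b : ZMod n) : ℝ := if (a = u ∧ b = v) ∨ (a = v ∧ b = u) then 1 else 0




lemma cast_inj4 (hn : 4 ≤ n) {a b : ℕ} (ha : a < 4) (hb : b < 4) :
    ((a : ZMod n) = (b : ZMod n)) ↔ a = b := by
  rw [ZMod.natCast_eq_natCast_iff, Nat.ModEq,
    Nat.mod_eq_of_lt (by omega), Nat.mod_eq_of_lt (by omega)]

lemma d01 (hn : 4 ≤ n) : (0 : ZMod n) ≠ 1 := by
  have h := cast_inj4 (n := n) hn (a := 0) (b := 1) (by omega) (by omega)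
  push_cast at h; simp [h]
lemma d02 (hn : 4 ≤ n) : (0 : ZMod n) ≠ 2 := by
  have h := cast_inj4 (n := n) hn (a := 0) (b := 2) (by omega) (by omega)
  push_cast at h; simp [h]
lemma d03 (hn : 4 ≤ n) : (0 : ZMod n) ≠ 3 := by
  have h := cast_inj4 (n := n) hn (a := 0) (b := 3) (by omega) (by omega)
  push_cast at h; simp [h]
lemma d12 (hn : 4 ≤ n) : (1 : ZMod n) ≠ 2 := by
  have h := cast_inj4 (n := n) hn (a := 1) (b := 2) (by omega) (by omega)
  push_cast at h; simp [h]
lemma d13 (hn : 4 ≤ n) : (1 : ZMod n) ≠ 3 := by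
  have h := cast_inj4 (n := n) hn (a := 1) (b := 3) (by omega) (by omega)
  push_cast at h; simp [h]
lemma d23 (hn : 4 ≤ n) : (2 : ZMod n) ≠ 3 := by
  have h := cast_inj4 (n := n) hn (a := 2) (b := 3) (by omega) (by omega)
  push_cast at h; simp [h]

lemma core (hn : 4 ≤ n) (p q : ZMod n) :
    C p q - C (swap (1 : ZMod n) 2 p) (swap (1 : ZMod n) 2 q)
      = ient 0 1 p q + ient 2 3 p q - ient 0 2 p q - ient 1 3 p q := by
  have e01 := d01 hn; have e02 := d02 hn; have e03 := d03 hn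
  have e12 := d12 hn; have e13 := d13 hn; have e23 := d23 hn
  have f01 := (d01 hn).symm; have f02 := (d02 hn).symm; have f03 := (d03 hn).symm
  have f12 := (d12 hn).symm; have f13 := (d13 hn).symm; have f23 := (d23 hn).symm
  have hshift : ∀ a b : ZMod n, (a = b + 1) ↔ (b = a - 1) := by
    intro a b; constructor <;> intro h <;> simp [h]
  have c11 : (1 : ZMod n) - 1 = 0 := sub_self 1
  have c21 : (2 : ZMod n) - 1 = 1 := by norm_num
  have c31 : (3 : ZMod n) - 1 = 2 := by norm_num
  have a12 : (1 : ZMod n) + 1 = 2 := one_add_one_eq_two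
  have a23 : (2 : ZMod n) + 1 = 3 := by norm_num
  by_cases p1 : p = 1
  · subst p1
    rw [swap_apply_left]
    by_cases q1 : q = 1
    · subst q1; rw [swap_apply_left]
      simp [C, ient, hshift, c11, c21, c31, a12, a23, e01, e02, e03, e12, e13, e23,
        f01, f02, f03, f12, f13, f23]
    by_cases q2 : q = 2
    · subst q2; rw [swap_apply_right]
      simp [C, ient, hshift, c11, c21, c31, a12, a23, e01, e02, e03, e12, e13, e23,
        f01, f02, f03, f12, f13, f23]
    rw [swap_apply_of_ne_of_ne q1 q2]
    by_cases q0 : q = 0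
    · subst q0
      simp [C, ient, hshift, c11, c21, c31, a12, a23, e01, e02, e03, e12, e13, e23,
        f01, f02, f03, f12, f13, f23]
    by_cases q3 : q = 3
    · subst q3
      simp [C, ient, hshift, c11, c21, c31, a12, a23, e01, e02, e03, e12, e13, e23,
        f01, f02, f03, f12, f13, f23]
    simp [C, ient, hshift, c11, c21, c31, a12, a23, e01, e02, e03, e12, e13, e23,
      f01, f02, f03, f12, f13, f23, q0, q1, q2, q3]
  by_cases p2 : p = 2
  · subst p2
    rw [swap_apply_right]
    by_cases q1 : q = 1
    · subst q1; rw [swap_apply_left]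
      simp [C, ient, hshift, c11, c21, c31, a12, a23, e01, e02, e03, e12, e13, e23,
        f01, f02, f03, f12, f13, f23]
    by_cases q2 : q = 2
    · subst q2; rw [swap_apply_right]
      simp [C, ient, hshift, c11, c21, c31, a12, a23, e01, e02, e03, e12, e13, e23,
        f01, f02, f03, f12, f13, f23]
    rw [swap_apply_of_ne_of_ne q1 q2]
    by_cases q0 : q = 0
    · subst q0
      simp [C, ient, hshift, c11, c21, c31, a12, a23, e01, e02, e03, e12, e13, e23,
        f01, f02, f03, f12, f13, f23]
    by_cases q3 : q = 3
    · subst q3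
      simp [C, ient, hshift, c11, c21, c31, a12, a23, e01, e02, e03, e12, e13, e23,
        f01, f02, f03, f12, f13, f23]
    simp [C, ient, hshift, c11, c21, c31, a12, a23, e01, e02, e03, e12, e13, e23,
      f01, f02, f03, f12, f13, f23, q0, q1, q2, q3]
  rw [swap_apply_of_ne_of_ne p1 p2]
  by_cases q1 : q = 1
  · subst q1; rw [swap_apply_left]
    by_cases p0 : p = 0
    · subst p0
      simp [C, ient, hshift, c11, c21, c31, a12, a23, e01, e02, e03, e12, e13, e23,
        f01, f02, f03, f12, f13, f23]
    by_cases p3 : p = 3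
    · subst p3
      simp [C, ient, hshift, c11, c21, c31, a12, a23, e01, e02, e03, e12, e13, e23,
        f01, f02, f03, f12, f13, f23]
    simp [C, ient, hshift, c11, c21, c31, a12, a23, e01, e02, e03, e12, e13, e23,
      f01, f02, f03, f12, f13, f23, p0, p1, p2, p3]
  by_cases q2 : q = 2
  · subst q2; rw [swap_apply_right]
    by_cases p0 : p = 0
    · subst p0
      simp [C, ient, hshift, c11, c21, c31, a12, a23, e01, e02, e03, e12, e13, e23,
        f01, f02, f03, f12, f13, f23]
    by_cases p3 : p = 3
    · subst p3
      simp [C, ient, hshift, c11, c21, c31, a12, a23, e01, e02, e03, e12, e13, e23,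
        f01, f02, f03, f12, f13, f23]
    simp [C, ient, hshift, c11, c21, c31, a12, a23, e01, e02, e03, e12, e13, e23,
      f01, f02, f03, f12, f13, f23, p0, p1, p2, p3]
  rw [swap_apply_of_ne_of_ne q1 q2]
  simp [C, ient, p1, p2, q1, q2]



lemma exists_perm_eq {α β : Type*} [Finite β] (f g : α → β)
    (hf : Function.Injective f) (hg : Function.Injective g) :
    ∃ π : Equiv.Perm β, ∀ i, π (f i) = g i := by
  classical
  let e : {x // x ∈ Set.range f} ≃ {x // x ∈ Set.range g} :=
    (Equiv.ofInjective f hf).symm.trans (Equiv.ofInjective g hg)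
  refine ⟨e.extendSubtype, fun i => ?_⟩
  rw [Equiv.extendSubtype_apply_of_mem e (f i) ⟨i, rfl⟩]
  show ((Equiv.ofInjective g hg) ((Equiv.ofInjective f hf).symm ⟨f i, ⟨i, rfl⟩⟩) : β) = g i
  have h1 : (Equiv.ofInjective f hf).symm ⟨f i, ⟨i, rfl⟩⟩ = i := by
    rw [Equiv.symm_apply_eq, Equiv.ofInjective_apply]
  rw [h1, Equiv.ofInjective_apply]

lemma inj4 {a b c d : ZMod n} (hab : a ≠ b) (hac : a ≠ c) (had : a ≠ d)
    (hbc : b ≠ c) (hbd : b ≠ d) (hcd : c ≠ d) :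
    Function.Injective ![a, b, c, d] := by
  intro i j h
  fin_cases i <;> fin_cases j <;>
    simp_all [hab.symm, hac.symm, had.symm, hbc.symm, hbd.symm, hcd.symm]

/-- tour matrix -/
def T (σ : Equiv.Perm (ZMod n)) : Matrix (ZMod n) (ZMod n) ℝ :=
  Matrix.of fun a b => C (σ a) (σ b)

lemma T_mem (σ : Equiv.Perm (ZMod n)) : T σ ∈ hamiltonianCycleMatrices n :=
  ⟨σ, fun _ _ => rfl⟩

/-- elementary 2-exchange matrix -/
def F (w x y z : ZMod n) : Matrix (ZMod n) (ZMod n) ℝ :=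
  Matrix.of fun a b => ient w x a b + ient y z a b - ient w y a b - ient x z a b

lemma ient_comp (σ : Equiv.Perm (ZMod n)) (u v a b : ZMod n) :
    ient (σ u) (σ v) (σ a) (σ b) = ient u v a b := by
  simp [ient, σ.injective.eq_iff]

lemma F_mem (hn : 4 ≤ n) {w x y z : ZMod n} (hwx : w ≠ x) (hwy : w ≠ y) (hwz : w ≠ z)
    (hxy : x ≠ y) (hxz : x ≠ z) (hyz : y ≠ z) :
    F w x y z ∈ vectorSpan ℝ (hamiltonianCycleMatrices n) := by
  obtain ⟨π, hπ⟩ := exists_perm_eq (![w, x, y, z]) (![(0 : ZMod n), 1, 2, 3])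
    (inj4 hwx hwy hwz hxy hxz hyz)
    (inj4 (d01 hn) (d02 hn) (d03 hn) (d12 hn) (d13 hn) (d23 hn))
  have hw : π w = 0 := hπ 0
  have hx : π x = 1 := hπ 1
  have hy : π y = 2 := hπ 2
  have hz : π z = 3 := hπ 3
  have key : T π - T (π.trans (Equiv.swap 1 2)) = F w x y z := by
    ext a b
    show C (π a) (π b) - C (Equiv.swap 1 2 (π a)) (Equiv.swap 1 2 (π b)) = _
    rw [core hn, ← hw, ← hx, ← hy, ← hz,
      ient_comp, ient_comp, ient_comp, ient_comp]
    rfl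
  rw [← key, ← vsub_eq_sub]
  exact vsub_mem_vectorSpan ℝ (T_mem π) (T_mem (π.trans (Equiv.swap 1 2)))


/-- symmetric matrices with zero diagonal and zero row sums -/
def W (n : ℕ) [NeZero n] : Submodule ℝ (Matrix (ZMod n) (ZMod n) ℝ) where
  carrier := {M | (∀ a b, M a b = M b a) ∧ (∀ a, M a a = 0) ∧ ∀ a, ∑ b, M a b = 0}
  add_mem' := by
    rintro x y ⟨hs, hd, hr⟩ ⟨hs', hd', hr'⟩
    refine ⟨fun a b => ?_, fun a => ?_, fun a => ?_⟩
    · simp [Matrix.add_apply, hs a b, hs' a b]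
    · simp [Matrix.add_apply, hd a, hd' a]
    · simp [Matrix.add_apply, Finset.sum_add_distrib, hr a, hr' a]
  zero_mem' := by
    refine ⟨fun a b => rfl, fun a => rfl, fun a => ?_⟩
    simp
  smul_mem' := by
    rintro c x ⟨hs, hd, hr⟩
    refine ⟨fun a b => ?_, fun a => ?_, fun a => ?_⟩
    · simp [Matrix.smul_apply, hs a b]
    · simp [Matrix.smul_apply, hd a]
    · simp [Matrix.smul_apply, ← Finset.mul_sum, hr a]

lemma two_ne_zero' (hn : 4 ≤ n) : (2 : ZMod n) ≠ 0 := fun h => d02 hn h.symm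

lemma T_symm (σ : Equiv.Perm (ZMod n)) (a b : ZMod n) : T σ a b = T σ b a := by
  simp [T, C, or_comm]

lemma T_diag (hn : 4 ≤ n) (σ : Equiv.Perm (ZMod n)) (a : ZMod n) : T σ a a = 0 := by
  simp only [T, C, Matrix.of_apply, or_self, left_eq_add]
  rw [if_neg]
  exact fun h => d01 hn h.symm

lemma T_rowsum (hn : 4 ≤ n) (σ : Equiv.Perm (ZMod n)) (a : ZMod n) :
    ∑ b, T σ a b = 2 := by
  have h1 : ∑ b, T σ a b = ∑ c, C (σ a) c := Equiv.sum_comp σ (fun c => C (σ a) c)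
  rw [h1]
  set p := σ a
  have hml : p - 1 ≠ p + 1 := by
    intro h
    have h2 : (2 : ZMod n) = 0 := by
      have := congrArg (fun t => t - p + 1) h
      simp at this
      linear_combination -this
    exact two_ne_zero' hn h2
  have key : ∀ c, C p c = (if c = p - 1 then (1:ℝ) else 0) + (if c = p + 1 then 1 else 0) := by
    intro c
    by_cases h1 : c = p - 1 <;> by_cases h2 : c = p + 1
    · exact absurd (h1.symm.trans h2) hml
    · subst h1
      rw [if_pos rfl, if_neg hml, C, if_pos (Or.inl (sub_add_cancel p 1).symm)]
      norm_num
    · subst h2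
      rw [if_neg (fun h => hml (h.symm)), if_pos rfl, C, if_pos (Or.inr rfl)]
      norm_num
    · rw [if_neg h1, if_neg h2, C, if_neg]
      · norm_num
      · push_neg
        exact ⟨fun h => absurd (eq_sub_of_add_eq h.symm) h1, h2⟩
  rw [Finset.sum_congr rfl (fun c _ => key c), Finset.sum_add_distrib]
  simp [Finset.sum_ite_eq']
  norm_num

lemma mem_H_iff {M : Matrix (ZMod n) (ZMod n) ℝ} :
    M ∈ hamiltonianCycleMatrices n ↔ ∃ σ : Equiv.Perm (ZMod n), M = T σ := by
  constructor
  · rintro ⟨σ, h⟩; exact ⟨σ, by ext a b; exact h a b⟩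
  · rintro ⟨σ, rfl⟩; exact T_mem σ

lemma span_le_W (hn : 4 ≤ n) : vectorSpan ℝ (hamiltonianCycleMatrices n) ≤ W n := by
  rw [vectorSpan, Submodule.span_le]
  rintro v ⟨M1, hM1, M2, hM2, rfl⟩
  obtain ⟨σ, rfl⟩ := mem_H_iff.mp hM1
  obtain ⟨τ, rfl⟩ := mem_H_iff.mp hM2
  simp only [vsub_eq_sub]
  refine ⟨fun a b => ?_, fun a => ?_, fun a => ?_⟩
  · simp [Matrix.sub_apply, T_symm σ a b, T_symm τ a b]
  · simp [Matrix.sub_apply, T_diag hn σ a, T_diag hn τ a]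
  · simp [Matrix.sub_apply, Finset.sum_sub_distrib, T_rowsum hn σ a, T_rowsum hn τ a]


lemma val4 (hn : 4 ≤ n) {a : ℕ} (ha : a < 4) : ((a : ZMod n)).val = a :=
  ZMod.val_cast_of_lt (by omega)

lemma v0' : (0 : ZMod n).val = 0 := ZMod.val_zero
lemma v1' (hn : 4 ≤ n) : (1 : ZMod n).val = 1 := by
  rw [← Nat.cast_one]; exact val4 hn (by omega)
lemma v2' (hn : 4 ≤ n) : (2 : ZMod n).val = 2 := by
  rw [← Nat.cast_ofNat]; exact val4 hn (by omega)
lemma v3' (hn : 4 ≤ n) : (3 : ZMod n).val = 3 := by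
  rw [← Nat.cast_ofNat]; exact val4 hn (by omega)

lemma val_inj {a b : ZMod n} (h : a.val = b.val) : a = b := ZMod.val_injective n h

lemma ne_zero_of_val {a : ZMod n} (h : 1 ≤ a.val) : a ≠ 0 := by
  intro e; rw [e, v0'] at h; omega
lemma ne_one_of_val (hn : 4 ≤ n) {a : ZMod n} (h : 2 ≤ a.val) : a ≠ 1 := by
  intro e; rw [e, v1' hn] at h; omega
lemma ne_two_of_val (hn : 4 ≤ n) {a : ZMod n} (h : 3 ≤ a.val) : a ≠ 2 := by
  intro e; rw [e, v2' hn] at h; omega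
lemma tri (hn : 4 ≤ n) (a : ZMod n) : a = 0 ∨ a = 1 ∨ 2 ≤ a.val := by
  rcases Nat.lt_or_ge a.val 2 with h | h
  · have h' : a.val = 0 ∨ a.val = 1 := by omega
    rcases h' with h' | h'
    · exact Or.inl (val_inj (by rw [h', v0']))
    · exact Or.inr (Or.inl (val_inj (by rw [h', v1' hn])))
  · exact Or.inr (Or.inr h)

/-- index set of pivot coordinates -/
abbrev PivIdx (n : ℕ) [NeZero n] :=
  {p : ZMod n × ZMod n // (2 ≤ p.1.val ∧ p.1.val < p.2.val) ∨ (p.1 = 0 ∧ 3 ≤ p.2.val)}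

/-- the pivoted family of 2-exchange matrices -/
noncomputable def G (q : PivIdx n) : Matrix (ZMod n) (ZMod n) ℝ :=
  if q.1.1 = 0 then F 0 q.1.2 2 1 else F q.1.1 q.1.2 0 1

lemma G_cases (q : PivIdx n) :
    (2 ≤ q.1.1.val ∧ q.1.1.val < q.1.2.val ∧ G q = F q.1.1 q.1.2 0 1) ∨
    (q.1.1 = 0 ∧ 3 ≤ q.1.2.val ∧ G q = F 0 q.1.2 2 1) := by
  rcases q.2 with ⟨h1, h2⟩ | ⟨h1, h2⟩
  · exact Or.inl ⟨h1, h2, if_neg (ne_zero_of_val (by omega))⟩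
  · exact Or.inr ⟨h1, h2, if_pos h1⟩

lemma pivot1 (hn : 4 ≤ n) (q : PivIdx n) {c d : ZMod n} (hc : 2 ≤ c.val)
    (hcd : c.val < d.val) : G q c d = if q.1 = (c, d) then 1 else 0 := by
  have hc0 : c ≠ 0 := ne_zero_of_val (by omega)
  have hc1 : c ≠ 1 := ne_one_of_val hn hc
  have hd0 : d ≠ 0 := ne_zero_of_val (by omega)
  have hd1 : d ≠ 1 := ne_one_of_val hn (by omega)
  rcases G_cases q with ⟨h1, h2, h3⟩ | ⟨h1, h2, h3⟩
  · rw [h3]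
    show ient q.1.1 q.1.2 c d + ient 0 1 c d - ient q.1.1 0 c d - ient q.1.2 1 c d = _
    have e1 : ient 0 1 c d = 0 := by simp [ient, hc0, hc1]
    have e2 : ient q.1.1 0 c d = 0 := by simp [ient, hc0, hd0]
    have e3 : ient q.1.2 1 c d = 0 := by simp [ient, hc1, hd1]
    have e4 : ient q.1.1 q.1.2 c d = if q.1 = (c, d) then 1 else 0 := by
      rw [ient]
      by_cases h : q.1 = (c, d)
      · rw [if_pos h, if_pos (Or.inl ⟨(congrArg Prod.fst h).symm, (congrArg Prod.snd h).symm⟩)]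
      · rw [if_neg h, if_neg]
        rintro (⟨rfl, rfl⟩ | ⟨rfl, rfl⟩)
        · exact h rfl
        · omega
    rw [e1, e2, e3, e4]; ring
  · rw [h3]
    show ient 0 q.1.2 c d + ient 2 1 c d - ient 0 2 c d - ient q.1.2 1 c d = _
    have e1 : ient 0 q.1.2 c d = 0 := by simp [ient, hc0, hd0]
    have e2 : ient 2 1 c d = 0 := by simp [ient, hc1, hd1]
    have e3 : ient 0 2 c d = 0 := by simp [ient, hc0, hd0]
    have e4 : ient q.1.2 1 c d = 0 := by simp [ient, hc1, hd1]
    have e5 : q.1 ≠ (c, d) := by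
      intro h
      have h' := congrArg Prod.fst h
      rw [h1] at h'
      exact hc0 h'.symm
    rw [e1, e2, e3, e4, if_neg e5]; ring

lemma pivot2 (hn : 4 ≤ n) (q : PivIdx n) (hq : q.1.1 = 0) {a : ZMod n}
    (ha : 3 ≤ a.val) : G q 0 a = if q.1 = (0, a) then 1 else 0 := by
  have ha0 : a ≠ 0 := ne_zero_of_val (by omega)
  have ha1 : a ≠ 1 := ne_one_of_val hn (by omega)
  have ha2 : a ≠ 2 := ne_two_of_val hn ha
  rcases G_cases q with ⟨h1, h2, h3⟩ | ⟨h1, h2, h3⟩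
  · exfalso; rw [hq, v0'] at h1; omega
  rw [h3]
  show ient 0 q.1.2 0 a + ient 2 1 0 a - ient 0 2 0 a - ient q.1.2 1 0 a = _
  have f0 : (0 : ZMod n) ≠ 2 := d02 hn
  have f1 : (0 : ZMod n) ≠ 1 := d01 hn
  have e2 : ient 2 1 0 a = 0 := by simp [ient, f0, f1, ha1]
  have e3 : ient 0 2 0 a = 0 := by simp [ient, ha2, f0]
  have e4 : ient q.1.2 1 0 a = 0 := by
    rw [ient, if_neg]
    rintro (⟨-, h'⟩ | ⟨h'', -⟩)
    · exact ha1 h'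
    · exact f1 h''
  have e1 : ient 0 q.1.2 0 a = if q.1 = (0, a) then 1 else 0 := by
    rw [ient]
    by_cases h : a = q.1.2
    · rw [if_pos (Or.inl ⟨rfl, h⟩), if_pos]
      rw [Prod.ext_iff]; exact ⟨h1, h.symm⟩
    · rw [if_neg, if_neg]
      · rw [Prod.ext_iff]; rintro ⟨-, h2⟩; exact h h2.symm
      · rintro (⟨-, h'⟩ | ⟨h', -⟩)
        · exact h h'
        · exact ne_zero_of_val (by omega) h'.symm
  rw [e1, e2, e3, e4]; ring

lemma G_mem (hn : 4 ≤ n) (q : PivIdx n) :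
    G q ∈ vectorSpan ℝ (hamiltonianCycleMatrices n) := by
  rcases G_cases q with ⟨h1, h2, h3⟩ | ⟨h1, h2, h3⟩
  · rw [h3]
    have hc0 : q.1.1 ≠ 0 := ne_zero_of_val (by omega)
    have hc1 : q.1.1 ≠ 1 := ne_one_of_val hn h1
    have hd0 : q.1.2 ≠ 0 := ne_zero_of_val (by omega)
    have hd1 : q.1.2 ≠ 1 := ne_one_of_val hn (by omega)
    have hcd : q.1.1 ≠ q.1.2 := fun h => by rw [h] at h2; omega
    exact F_mem hn hcd hc0 hc1 hd0 hd1 (d01 hn)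
  · rw [h3]
    have hd0 : q.1.2 ≠ 0 := ne_zero_of_val (by omega)
    have hd1 : q.1.2 ≠ 1 := ne_one_of_val hn (by omega)
    have hd2 : q.1.2 ≠ 2 := ne_two_of_val hn h2
    exact F_mem hn hd0.symm (d02 hn) (d01 hn) hd2 hd1 ((d12 hn).symm)

noncomputable instance : Fintype (PivIdx n) := Subtype.fintype _

lemma G_indep (hn : 4 ≤ n) : LinearIndependent ℝ (G (n := n)) := by
  rw [Fintype.linearIndependent_iff]
  intro g hg
  have hent : ∀ c d : ZMod n, (∑ q : PivIdx n, g q * G q c d) = 0 := by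
    intro c d
    have h := congrFun (congrFun hg c) d
    rw [Matrix.sum_apply] at h
    simpa using h
  have h1 : ∀ q : PivIdx n, 2 ≤ q.1.1.val → g q = 0 := by
    intro q hq
    have hlt : q.1.1.val < q.1.2.val := by
      rcases q.2 with ⟨-, h⟩ | ⟨h, -⟩
      · exact h
      · rw [h, v0'] at hq; omega
    have h := hent q.1.1 q.1.2
    have hterm : ∀ q' : PivIdx n, g q' * G q' q.1.1 q.1.2
        = if q' = q then g q' else 0 := by
      intro q'
      rw [pivot1 hn q' hq hlt]
      by_cases h' : q'.1 = (q.1.1, q.1.2)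
      · rw [if_pos h', if_pos (Subtype.ext (by rw [h']))]
        ring
      · rw [if_neg h', if_neg, mul_zero]
        intro h''
        exact h' (by rw [h''])
    rw [Finset.sum_congr rfl (fun q' _ => hterm q'), Finset.sum_ite_eq' Finset.univ q g] at h
    simpa using h
  intro q
  rcases q.2 with ⟨hq1, -⟩ | ⟨hq1, hq2⟩
  · exact h1 q hq1
  have h := hent 0 q.1.2
  have hterm : ∀ q' : PivIdx n, g q' * G q' 0 q.1.2
      = if q' = q then g q' else 0 := by
    intro q'
    rcases G_cases q' with ⟨hh1, -, -⟩ | ⟨hh1, -, -⟩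
    · rw [h1 q' hh1, zero_mul]
      simp
    · rw [pivot2 hn q' hh1 hq2]
      by_cases h' : q'.1 = (0, q.1.2)
      · rw [if_pos h', if_pos, mul_one]
        apply Subtype.ext
        rw [h']
        exact Prod.ext hq1.symm rfl
      · rw [if_neg h', if_neg, mul_zero]
        intro h''
        apply h'
        rw [h'', Prod.ext_iff]
        exact ⟨hq1, rfl⟩
  rw [Finset.sum_congr rfl (fun q' _ => hterm q'), Finset.sum_ite_eq' Finset.univ q g] at h
  simpa using h

lemma W_pivots_zero (hn : 4 ≤ n) {M : Matrix (ZMod n) (ZMod n) ℝ} (hM : M ∈ W n)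
    (hv : ∀ q : PivIdx n, M q.1.1 q.1.2 = 0) : M = 0 := by
  obtain ⟨hs, hd, hr⟩ := hM
  have f1 : (0 : ZMod n) ≠ 1 := d01 hn
  have f2 : (0 : ZMod n) ≠ 2 := d02 hn
  have f12 : (1 : ZMod n) ≠ 2 := d12 hn
  have A : ∀ c d : ZMod n, 2 ≤ c.val → 2 ≤ d.val → c ≠ d → M c d = 0 := by
    intro c d h2c h2d hne
    rcases Nat.lt_trichotomy c.val d.val with h | h | h
    · exact hv ⟨(c, d), Or.inl ⟨h2c, h⟩⟩
    · exact absurd (val_inj h) hne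
    · rw [hs c d]; exact hv ⟨(d, c), Or.inl ⟨h2d, h⟩⟩
  have B : ∀ a : ZMod n, 3 ≤ a.val → M 0 a = 0 := fun a ha =>
    hv ⟨(0, a), Or.inr ⟨rfl, ha⟩⟩
  have hval2 : ∀ b : ZMod n, 2 ≤ b.val → b ≠ 2 → 3 ≤ b.val := by
    intro b h hb
    rcases Nat.lt_or_ge b.val 3 with h' | h'
    · exact absurd (val_inj (by rw [v2' hn]; omega)) hb
    · exact h'
  have C : ∀ a : ZMod n, 3 ≤ a.val → M a 1 = 0 := by
    intro a ha
    have ha0 : a ≠ 0 := ne_zero_of_val (by omega)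
    have hrow := hr a
    have key : ∀ b : ZMod n, M a b = if b = 1 then M a 1 else 0 := by
      intro b
      by_cases hb1 : b = 1
      · rw [if_pos hb1, hb1]
      · rw [if_neg hb1]
        rcases tri hn b with rfl | rfl | h2b
        · rw [hs a 0]; exact B a ha
        · exact absurd rfl hb1
        · by_cases hab : b = a
          · rw [hab]; exact hd a
          · exact A a b (by omega) h2b (fun h => hab h.symm)
    rw [Finset.sum_congr rfl (fun b _ => key b),
      Finset.sum_ite_eq' Finset.univ 1 (fun _ => M a 1)] at hrow
    simpa using hrow
  -- rows 0, 1, 2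
  have row0 : M 0 1 + M 0 2 = 0 := by
    have hrow := hr 0
    have key : ∀ b : ZMod n, M 0 b
        = (if b = 1 then M 0 1 else 0) + (if b = 2 then M 0 2 else 0) := by
      intro b
      rcases tri hn b with rfl | rfl | h2b
      · rw [if_neg f1, if_neg f2, hd 0, add_zero]
      · rw [if_pos rfl, if_neg f12, add_zero]
      · by_cases hb2 : b = 2
        · rw [hb2, if_neg f12.symm, if_pos rfl, zero_add]
        · rw [if_neg (ne_one_of_val hn h2b), if_neg hb2, add_zero]
          exact B b (hval2 b h2b hb2)
    rw [Finset.sum_congr rfl (fun b _ => key b), Finset.sum_add_distrib,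
      Finset.sum_ite_eq' Finset.univ 1 (fun _ => M 0 1),
      Finset.sum_ite_eq' Finset.univ 2 (fun _ => M 0 2)] at hrow
    simpa using hrow
  have row1 : M 0 1 + M 1 2 = 0 := by
    have hrow := hr 1
    have key : ∀ b : ZMod n, M 1 b
        = (if b = 0 then M 0 1 else 0) + (if b = 2 then M 1 2 else 0) := by
      intro b
      rcases tri hn b with rfl | rfl | h2b
      · rw [if_pos rfl, if_neg f2, hs 1 0, add_zero]
      · rw [if_neg f1.symm, if_neg f12, hd 1, add_zero]
      · by_cases hb2 : b = 2
        · rw [hb2, if_neg f2.symm, if_pos rfl, zero_add]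
        · rw [if_neg (ne_zero_of_val (by omega)), if_neg hb2, add_zero]
          rw [hs 1 b]
          exact C b (hval2 b h2b hb2)
    rw [Finset.sum_congr rfl (fun b _ => key b), Finset.sum_add_distrib,
      Finset.sum_ite_eq' Finset.univ 0 (fun _ => M 0 1),
      Finset.sum_ite_eq' Finset.univ 2 (fun _ => M 1 2)] at hrow
    simpa using hrow
  have row2 : M 0 2 + M 1 2 = 0 := by
    have hrow := hr 2
    have key : ∀ b : ZMod n, M 2 b
        = (if b = 0 then M 0 2 else 0) + (if b = 1 then M 1 2 else 0) := by
      intro b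
      rcases tri hn b with rfl | rfl | h2b
      · rw [if_pos rfl, if_neg f1, hs 2 0, add_zero]
      · rw [if_neg f1.symm, if_pos rfl, hs 2 1, zero_add]
      · by_cases hb2 : b = 2
        · rw [hb2, if_neg f2.symm, if_neg f12.symm, hd 2, add_zero]
        · rw [if_neg (ne_zero_of_val (by omega)), if_neg (ne_one_of_val hn h2b), add_zero]
          exact A 2 b (by rw [v2' hn]) h2b (fun h => hb2 h.symm)
    rw [Finset.sum_congr rfl (fun b _ => key b), Finset.sum_add_distrib,
      Finset.sum_ite_eq' Finset.univ 0 (fun _ => M 0 2),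
      Finset.sum_ite_eq' Finset.univ 1 (fun _ => M 1 2)] at hrow
    simpa using hrow
  have hu : M 0 1 = 0 := by linarith
  have hv2 : M 0 2 = 0 := by linarith
  have hw : M 1 2 = 0 := by linarith
  ext a b
  show M a b = 0
  by_cases hab : a = b
  · rw [hab]; exact hd b
  rcases tri hn a with rfl | rfl | ha2 <;> rcases tri hn b with rfl | rfl | hb2
  · exact absurd rfl hab
  · exact hu
  · by_cases hb2' : b = 2
    · rw [hb2']; exact hv2
    · exact B b (hval2 b hb2 hb2')
  · rw [hs 1 0]; exact hu
  · exact absurd rfl hab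
  · by_cases hb2' : b = 2
    · rw [hb2']; exact hw
    · rw [hs 1 b]; exact C b (hval2 b hb2 hb2')
  · by_cases ha2' : a = 2
    · rw [ha2', hs 2 0]; exact hv2
    · rw [hs a 0]; exact B a (hval2 a ha2 ha2')
  · by_cases ha2' : a = 2
    · rw [ha2', hs 2 1]; exact hw
    · exact C a (hval2 a ha2 ha2')
  · exact A a b ha2 hb2 hab

lemma card_range_filter (hn : 4 ≤ n) :
    (Finset.univ.filter fun a : ZMod n => 3 ≤ a.val).card = n - 3 := by
  rw [show n - 3 = (Finset.Ico 3 n).card by rw [Nat.card_Ico]]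
  refine Finset.card_nbij' (fun a => a.val) (fun k => (k : ZMod n)) ?_ ?_ ?_ ?_
  · intro a ha
    rw [Finset.mem_coe, Finset.mem_filter] at ha
    rw [Finset.mem_coe, Finset.mem_Ico]
    exact ⟨ha.2, ZMod.val_lt a⟩
  · intro k hk
    rw [Finset.mem_coe, Finset.mem_Ico] at hk
    rw [Finset.mem_coe, Finset.mem_filter, ZMod.val_cast_of_lt hk.2]
    exact ⟨Finset.mem_univ _, hk.1⟩
  · intro a _
    exact (ZMod.natCast_rightInverse a)
  · intro k hk
    rw [Finset.mem_coe, Finset.mem_Ico] at hk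
    exact ZMod.val_cast_of_lt hk.2

lemma sum_range_sub_two (n : ℕ) (hn : 4 ≤ n) :
    ∑ y ∈ Finset.range n, (y - 2) = (n - 2) * (n - 3) / 2 := by
  have h1 : ∑ y ∈ Finset.range n, (y - 2) = ∑ y ∈ Finset.Ico 2 n, (y - 2) := by
    rw [Finset.range_eq_Ico, ← Finset.sum_Ico_consecutive _ (by omega : (0:ℕ) ≤ 2) (by omega : 2 ≤ n)]
    have : ∑ y ∈ Finset.Ico 0 2, (y - 2) = 0 := by decide
    rw [this, zero_add]
  rw [h1, Finset.sum_Ico_eq_sum_range]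
  have h2 : ∀ i ∈ Finset.range (n - 2), 2 + i - 2 = i := fun i _ => by omega
  rw [Finset.sum_congr rfl h2]
  have h3 := Finset.sum_range_id_mul_two (n - 2)
  have h4 : n - 2 - 1 = n - 3 := by omega
  rw [h4] at h3
  generalize hK : (n - 2) * (n - 3) = K at h3 ⊢
  omega

lemma card_pividx (hn : 4 ≤ n) : Fintype.card (PivIdx n) = (n ^ 2 - 3 * n) / 2 := by
  classical
  rw [Fintype.card_subtype]
  have hsplit : (Finset.univ.filter fun p : ZMod n × ZMod n =>
      (2 ≤ p.1.val ∧ p.1.val < p.2.val) ∨ (p.1 = 0 ∧ 3 ≤ p.2.val)).card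
      = (Finset.univ.filter fun p : ZMod n × ZMod n =>
          2 ≤ p.1.val ∧ p.1.val < p.2.val).card
        + (Finset.univ.filter fun p : ZMod n × ZMod n => p.1 = 0 ∧ 3 ≤ p.2.val).card := by
    rw [Finset.filter_or, Finset.card_union_of_disjoint]
    rw [Finset.disjoint_left]
    intro p hp1 hp2
    rw [Finset.mem_filter] at hp1 hp2
    have := hp2.2.1
    rw [this, v0'] at hp1
    omega
  rw [hsplit]
  -- second part
  have hc2 : (Finset.univ.filter fun p : ZMod n × ZMod n => p.1 = 0 ∧ 3 ≤ p.2.val).card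
      = n - 3 := by
    rw [← card_range_filter hn]
    refine Finset.card_nbij' (fun p => p.2) (fun a => ((0 : ZMod n), a)) ?_ ?_ ?_ ?_
    · intro p hp
      rw [Finset.mem_coe, Finset.mem_filter] at hp ⊢
      exact ⟨Finset.mem_univ _, hp.2.2⟩
    · intro a ha
      rw [Finset.mem_coe, Finset.mem_filter] at ha ⊢
      exact ⟨Finset.mem_univ _, rfl, ha.2⟩
    · intro p hp
      rw [Finset.mem_coe, Finset.mem_filter] at hp
      rw [← hp.2.1]
    · intro a _
      rfl
  rw [hc2]
  -- first part
  have hc1 : (Finset.univ.filter fun p : ZMod n × ZMod n =>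
      2 ≤ p.1.val ∧ p.1.val < p.2.val).card = (n - 2) * (n - 3) / 2 := by
    rw [← sum_range_sub_two n hn]
    have hbij : (Finset.univ.filter fun p : ZMod n × ZMod n =>
        2 ≤ p.1.val ∧ p.1.val < p.2.val).card
        = ((Finset.range n ×ˢ Finset.range n).filter fun x : ℕ × ℕ =>
            2 ≤ x.1 ∧ x.1 < x.2).card := by
      refine Finset.card_nbij' (fun p => (p.1.val, p.2.val))
        (fun x => ((x.1 : ZMod n), (x.2 : ZMod n))) ?_ ?_ ?_ ?_
      · intro p hp
        rw [Finset.mem_coe, Finset.mem_filter] at hp ⊢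
        refine ⟨Finset.mem_product.mpr ⟨?_, ?_⟩, hp.2⟩
        · exact Finset.mem_range.mpr (ZMod.val_lt _)
        · exact Finset.mem_range.mpr (ZMod.val_lt _)
      · intro x hx
        rw [Finset.mem_coe, Finset.mem_filter] at hx ⊢
        obtain ⟨hm, h2⟩ := hx
        rw [Finset.mem_product, Finset.mem_range, Finset.mem_range] at hm
        rw [ZMod.val_cast_of_lt hm.1, ZMod.val_cast_of_lt hm.2]
        exact ⟨Finset.mem_univ _, h2⟩
      · intro p _
        rw [Prod.ext_iff]
        exact ⟨ZMod.natCast_rightInverse p.1, ZMod.natCast_rightInverse p.2⟩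
      · intro x hx
        rw [Finset.mem_coe, Finset.mem_filter, Finset.mem_product, Finset.mem_range, Finset.mem_range] at hx
        rw [Prod.ext_iff]
        exact ⟨ZMod.val_cast_of_lt hx.1.1, ZMod.val_cast_of_lt hx.1.2⟩
    rw [hbij]
    have hun : ((Finset.range n ×ˢ Finset.range n).filter fun x : ℕ × ℕ =>
        2 ≤ x.1 ∧ x.1 < x.2)
        = (Finset.range n).biUnion (fun y => (Finset.Ico 2 y).image (fun x => (x, y))) := by
      ext ⟨x, y⟩
      simp only [Finset.mem_filter, Finset.mem_product, Finset.mem_range,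
        Finset.mem_biUnion, Finset.mem_image, Finset.mem_Ico, Prod.mk.injEq]
      constructor
      · rintro ⟨⟨hx, hy⟩, h2, hlt⟩
        exact ⟨y, hy, x, ⟨h2, hlt⟩, rfl, rfl⟩
      · rintro ⟨y', hy', x', ⟨h2, hlt⟩, rfl, rfl⟩
        exact ⟨⟨by omega, hy'⟩, h2, hlt⟩
    rw [hun, Finset.card_biUnion]
    · apply Finset.sum_congr rfl
      intro y _
      rw [Finset.card_image_of_injective _ (fun a b h => (Prod.mk.injEq _ _ _ _ ▸ h).1),
        Nat.card_Ico]
    · intro y1 _ y2 _ hne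
      simp only [Function.onFun]
      rw [Finset.disjoint_left]
      rintro ⟨a, b⟩ h1 h2
      rw [Finset.mem_image] at h1 h2
      obtain ⟨x1, -, he1⟩ := h1
      obtain ⟨x2, -, he2⟩ := h2
      apply hne
      have e1 : y1 = b := congrArg Prod.snd he1
      have e2 : y2 = b := congrArg Prod.snd he2
      rw [e1, e2]
  rw [hc1]
  -- arithmetic
  obtain ⟨m, rfl⟩ : ∃ m, n = m + 4 := ⟨n - 4, by omega⟩
  have e2 : (m + 4 - 2) * (m + 4 - 3) = m * m + 3 * m + 2 := by
    have h1 : m + 4 - 2 = m + 2 := by omega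
    have h2 : m + 4 - 3 = m + 1 := by omega
    rw [h1, h2]; ring
  have e1 : (m + 4) ^ 2 - 3 * (m + 4) = m * m + 5 * m + 4 := by
    apply Nat.sub_eq_of_eq_add
    ring
  obtain ⟨t, ht⟩ := Nat.even_mul_succ_self m
  have ht' : m * m + m = t + t := by
    have : m * m + m = m * (m + 1) := by ring
    rw [this, ht]
  rw [e1, e2]
  generalize hM : m * m = M at ht' ⊢
  omega

/-- restriction of a matrix in `W` to its pivot coordinates -/
noncomputable def phi : W n →ₗ[ℝ] (PivIdx n → ℝ) where
  toFun := fun M q => (M : Matrix (ZMod n) (ZMod n) ℝ) q.1.1 q.1.2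
  map_add' := fun M N => by funext q; simp
  map_smul' := fun c M => by funext q; simp

lemma phi_inj (hn : 4 ≤ n) : Function.Injective (phi (n := n)) := by
  rw [← LinearMap.ker_eq_bot, LinearMap.ker_eq_bot']
  intro M hM
  apply Subtype.ext
  apply W_pivots_zero hn M.2
  intro q
  exact congrFun hM q

lemma finrank_W_le (hn : 4 ≤ n) : Module.finrank ℝ (W n) ≤ (n ^ 2 - 3 * n) / 2 := by
  have h := LinearMap.finrank_le_finrank_of_injective (phi_inj hn)
  rwa [Module.finrank_pi, card_pividx hn] at h

end TSP

/-- For `n ≥ 4`, the symmetric Traveling Salesman Polytope `ST_n` has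
dimension `(n² - 3n)/2`. -/
theorem dim_symmetricTSP (n : ℕ) [NeZero n] (hn : 4 ≤ n) :
    Module.finrank ℝ (vectorSpan ℝ (symmetricTSP n)) = (n ^ 2 - 3 * n) / 2 := by
  have h1 : vectorSpan ℝ (symmetricTSP n) = vectorSpan ℝ (hamiltonianCycleMatrices n) := by
    rw [← direction_affineSpan, ← direction_affineSpan, symmetricTSP, affineSpan_convexHull]
  rw [h1]
  apply le_antisymm
  · exact le_trans (Submodule.finrank_mono (TSP.span_le_W hn)) (TSP.finrank_W_le hn)
  · have h2 : Submodule.span ℝ (Set.range (TSP.G (n := n)))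
        ≤ vectorSpan ℝ (hamiltonianCycleMatrices n) := by
      rw [Submodule.span_le]
      rintro x ⟨q, rfl⟩
      exact TSP.G_mem hn q
    have h3 := finrank_span_eq_card (TSP.G_indep hn)
    rw [TSP.card_pividx hn] at h3
    calc (n ^ 2 - 3 * n) / 2
        = Module.finrank ℝ (Submodule.span ℝ (Set.range (TSP.G (n := n)))) := h3.symm
      _ ≤ _ := Submodule.finrank_mono h2
end

section
/- For n ≥ 4, the affine hull of the symmetric Traveling Salesman Polytope ST_n equals the set of symmetric n×n matrices with zero diagonal whose row sums and column sums all equal 2. -/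
open Matrix Finset

section Potential

variable {V : Type*} {z : V → V → ℝ}

/- If `z u v = p u + p v`, the "apex value" `z u x + z u y - z x y` is `2 p u` for all `x ≠ y`
distinct from `u`. The exchange relation makes it independent of `x, y`, which recovers `p`. -/

theorem apex_eq_of_exchange (hsymm : ∀ u v, z u v = z v u)
    (hrel : ∀ a b c d, a ≠ b → a ≠ c → a ≠ d → b ≠ c → b ≠ d → c ≠ d →
      z a b + z c d = z a c + z b d)
    {u x y y' : V} (hxu : x ≠ u) (hyu : y ≠ u) (hyx : y ≠ x) (hy'u : y' ≠ u)
    (hy'x : y' ≠ x) :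
    z u x + z u y - z x y = z u x + z u y' - z x y' := by
  rcases eq_or_ne y y' with rfl | hyy'
  · rfl
  · linarith [hrel u y y' x hyu.symm hy'u.symm hxu.symm hyy' hyx hy'x, hsymm y' x, hsymm y x]

theorem apex_congr (hsymm : ∀ u v, z u v = z v u)
    (hrel : ∀ a b c d, a ≠ b → a ≠ c → a ≠ d → b ≠ c → b ≠ d → c ≠ d →
      z a b + z c d = z a c + z b d)
    {u x y x' y' : V} (hxu : x ≠ u) (hyu : y ≠ u) (hxy : x ≠ y)
    (hx'u : x' ≠ u) (hy'u : y' ≠ u) (hx'y' : x' ≠ y') :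
    z u x + z u y - z x y = z u x' + z u y' - z x' y' := by
  have hswap : ∀ a b, z u a + z u b - z a b = z u b + z u a - z b a := fun a b => by
    linarith [hsymm a b]
  rcases eq_or_ne x' y with rfl | hx'y
  · rw [hswap]
    exact apex_eq_of_exchange hsymm hrel hx'u hxu hxy hy'u hx'y'.symm
  · rw [hswap, apex_eq_of_exchange hsymm hrel hyu hxu hxy hx'u hx'y, hswap]
    exact apex_eq_of_exchange hsymm hrel hx'u hyu hx'y.symm hy'u hx'y'.symm

theorem exists_potential (hsymm : ∀ u v, z u v = z v u)
    (hrel : ∀ a b c d, a ≠ b → a ≠ c → a ≠ d → b ≠ c → b ≠ d → c ≠ d →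
      z a b + z c d = z a c + z b d)
    (hV : ∀ u v : V, ∃ w, w ≠ u ∧ w ≠ v) :
    ∃ p : V → ℝ, ∀ u v, u ≠ v → z u v = p u + p v := by
  choose w hwu hwv using hV
  refine ⟨fun u => (z u (w u u) + z u (w u (w u u)) - z (w u u) (w u (w u u))) / 2,
    fun u v huv => ?_⟩
  have hu := apex_congr hsymm hrel (hwu u u) (hwu u (w u u)) (hwv u (w u u)).symm
    huv.symm (hwu u v) (hwv u v).symm
  have hv := apex_congr hsymm hrel (hwu v v) (hwu v (w v v)) (hwv v (w v v)).symm
    huv (hwv u v) (hwu u v).symm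
  linarith [hsymm u v, hsymm v (w u v)]

end Potential

section Degree

variable {V : Type*} [Fintype V]

variable (V) in
def degreeAffineSet (r : ℝ) : Set (Matrix V V ℝ) :=
  {M | (∀ i j, M i j = M j i) ∧ (∀ i, M i i = 0) ∧
    (∀ i, ∑ j, M i j = r) ∧ (∀ j, ∑ i, M i j = r)}

theorem mem_degreeAffineSet_of_symm {M : Matrix V V ℝ} {r : ℝ} (hsymm : ∀ i j, M i j = M j i)
    (hdiag : ∀ i, M i i = 0) (hrow : ∀ i, ∑ j, M i j = r) : M ∈ degreeAffineSet V r :=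
  ⟨hsymm, hdiag, hrow, fun j => by simpa only [hsymm _ j] using hrow j⟩

variable (V) in
def degreeDirection : Submodule ℝ (Matrix V V ℝ) where
  carrier := degreeAffineSet V 0
  add_mem' := by
    rintro x y ⟨hxs, hxd, hxr, hxc⟩ ⟨hys, hyd, hyr, hyc⟩
    refine ⟨fun i j => ?_, fun i => ?_, fun i => ?_, fun j => ?_⟩ <;>
      simp [sum_add_distrib, *]
  zero_mem' := by simp [degreeAffineSet]
  smul_mem' := by
    rintro c x ⟨hxs, hxd, hxr, hxc⟩
    refine ⟨fun i j => ?_, fun i => ?_, fun i => ?_, fun j => ?_⟩ <;>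
      simp [← mul_sum, *]

theorem sub_mem_degreeDirection_iff {C M : Matrix V V ℝ} {r : ℝ}
    (hC : C ∈ degreeAffineSet V r) :
    M - C ∈ degreeDirection V ↔ M ∈ degreeAffineSet V r := by
  obtain ⟨hCs, hCd, hCr, -⟩ := hC
  change M - C ∈ degreeAffineSet V 0 ↔ _
  simp only [degreeAffineSet, Set.mem_ofPred_eq, Matrix.sub_apply, sum_sub_distrib, hCd, hCr,
    sub_zero, sub_eq_zero, hCs _ _, sub_left_inj]

theorem submatrix_mem_degreeAffineSet {M : Matrix V V ℝ} {r : ℝ}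
    (hM : M ∈ degreeAffineSet V r) (σ : Equiv.Perm V) :
    M.submatrix σ σ ∈ degreeAffineSet V r := by
  obtain ⟨hs, hd, hr, -⟩ := hM
  refine mem_degreeAffineSet_of_symm (fun i j => hs _ _) (fun i => hd _) fun i => ?_
  simp only [submatrix_apply, Equiv.sum_comp σ (M (σ i)), hr]

theorem sum_mul_eq_zero_of_mem_degreeDirection {x : Matrix V V ℝ} (hx : x ∈ degreeDirection V)
    {z : V → V → ℝ} {p : V → ℝ} (hz : ∀ u v, u ≠ v → z u v = p u + p v) :
    ∑ i, ∑ j, x i j * z i j = 0 := by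
  obtain ⟨-, hdiag, hrow, hcol⟩ := hx
  have hxz : ∀ i j, x i j * z i j = x i j * (p i + p j) := fun i j => by
    rcases eq_or_ne i j with rfl | hij
    · simp [hdiag]
    · rw [hz i j hij]
  calc ∑ i, ∑ j, x i j * z i j = ∑ i, p i * ∑ j, x i j + ∑ j, p j * ∑ i, x i j := by
        simp only [hxz, mul_add, sum_add_distrib, mul_sum]
        rw [sum_comm (f := fun i j => x i j * p j)]
        simp only [mul_comm]
    _ = 0 := by simp [hrow, hcol]

end Degree

theorem injective_vecFour_of_ne {V : Type*} {a b c d : V} (hab : a ≠ b) (hac : a ≠ c)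
    (had : a ≠ d) (hbc : b ≠ c) (hbd : b ≠ d) (hcd : c ≠ d) :
    Function.Injective ![a, b, c, d] := by
  intro i j
  fin_cases i <;> fin_cases j <;> simp [*, Ne.symm]

section TwoOpt

variable {V : Type*} [DecidableEq V]

def symmSingle (a b : V) : Matrix V V ℝ := single a b 1 + single b a 1

def twoOpt (a b c d : V) : Matrix V V ℝ :=
  symmSingle a b + symmSingle c d - symmSingle a c - symmSingle b d

variable (V) in
def twoOptMoves : Set (Matrix V V ℝ) :=
  Set.range fun f : Fin 4 ↪ V => twoOpt (f 0) (f 1) (f 2) (f 3)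

theorem symmSingle_comm (a b : V) : symmSingle a b = symmSingle b a := add_comm _ _

theorem sum_smul_symmSingle [Fintype V] {x : Matrix V V ℝ} (hx : ∀ i j, x i j = x j i) :
    ∑ i, ∑ j, x i j • symmSingle i j = (2 : ℝ) • x := by
  ext k l
  simp [symmSingle, Matrix.sum_apply, single_apply, sum_add_distrib, ite_and, hx l k, two_mul]

theorem twoOpt_submatrix (σ : Equiv.Perm V) (a b c d : V) :
    (twoOpt (σ a) (σ b) (σ c) (σ d)).submatrix σ σ = twoOpt a b c d := by
  simp [twoOpt, symmSingle, submatrix_add, submatrix_sub]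

/-- Swapping the consecutive vertices `b, c` of a cycle `⋯ a b c d ⋯` is the 2-opt move
`twoOpt a b c d`. -/
theorem sub_submatrix_swap_eq_twoOpt {A : Matrix V V ℝ} (hsymm : ∀ i j, A i j = A j i)
    (hdiag : ∀ i, A i i = 0) {a b c d : V} (hf : Function.Injective ![a, b, c, d])
    (hb : ∀ l, l ≠ b → l ≠ c → A b l = if l = a then 1 else 0)
    (hc : ∀ l, l ≠ b → l ≠ c → A c l = if l = d then 1 else 0) :
    A - A.submatrix (Equiv.swap b c) (Equiv.swap b c) = twoOpt a b c d := by
  have hab : a ≠ b := hf.ne (by decide : (0 : Fin 4) ≠ 1)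
  have hac : a ≠ c := hf.ne (by decide : (0 : Fin 4) ≠ 2)
  have had : a ≠ d := hf.ne (by decide : (0 : Fin 4) ≠ 3)
  have hbc : b ≠ c := hf.ne (by decide : (1 : Fin 4) ≠ 2)
  have hbd : b ≠ d := hf.ne (by decide : (1 : Fin 4) ≠ 3)
  have hcd : c ≠ d := hf.ne (by decide : (2 : Fin 4) ≠ 3)
  ext k l
  have hk : k = b ∨ k = c ∨ (k ≠ b ∧ k ≠ c) := by tauto
  have hl : l = b ∨ l = c ∨ (l ≠ b ∧ l ≠ c) := by tauto
  rcases hk with rfl | rfl | ⟨hkb, hkc⟩ <;> rcases hl with rfl | rfl | ⟨hlb, hlc⟩ <;>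
  simp only [Matrix.sub_apply, submatrix_apply, twoOpt, symmSingle, Matrix.add_apply,
    single_apply, Equiv.swap_apply_left, Equiv.swap_apply_right, *] <;>
  grind

theorem degreeDirection_le_span_twoOptMoves [Fintype V] (hV : 2 < Fintype.card V) :
    degreeDirection V ≤ Submodule.span ℝ (twoOptMoves V) := by
  rw [← Subspace.dualAnnihilator_le_dualAnnihilator_iff]
  intro f hf
  rw [Submodule.mem_dualAnnihilator] at hf ⊢
  intro x hx
  have hexchange : ∀ a b c d : V, a ≠ b → a ≠ c → a ≠ d → b ≠ c → b ≠ d → c ≠ d →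
      f (symmSingle a b) + f (symmSingle c d) =
        f (symmSingle a c) + f (symmSingle b d) := by
    intro a b c d hab hac had hbc hbd hcd
    have hmove := hf _ (Submodule.subset_span
      ⟨⟨_, injective_vecFour_of_ne hab hac had hbc hbd hcd⟩, rfl⟩)
    simp only [twoOpt, map_add, map_sub, Function.Embedding.coeFn_mk, cons_val_zero,
      cons_val_one, Matrix.cons_val] at hmove
    linarith
  have hthird : ∀ u v : V, ∃ w, w ≠ u ∧ w ≠ v := fun u v => by
    obtain ⟨w, -, hw⟩ := exists_mem_notMem_of_card_lt_card (s := {u, v}) (t := univ)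
      (card_le_two.trans_lt hV)
    exact ⟨w, by simpa [not_or] using hw⟩
  obtain ⟨p, hp⟩ :=
    exists_potential (fun a b => congrArg f (symmSingle_comm a b)) hexchange hthird
  have htwice : 2 * f x = 0 := by
    calc 2 * f x = ∑ i, ∑ j, x i j * f (symmSingle i j) := by
          rw [← smul_eq_mul, ← map_smul, ← sum_smul_symmSingle hx.1]; simp
      _ = 0 := sum_mul_eq_zero_of_mem_degreeDirection hx hp
  linarith

end TwoOpt

section Cycle

theorem ZMod.natCast_ne_zero_of_lt {n k : ℕ} (hk : 0 < k) (hkn : k < n) :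
    (k : ZMod n) ≠ 0 := by
  rw [Ne, ZMod.natCast_eq_zero_iff]
  exact Nat.not_dvd_of_pos_of_lt hk hkn

theorem ZMod.injective_vecFour {n : ℕ} (hn : 4 ≤ n) :
    Function.Injective ![(0 : ZMod n), 1, 2, 3] := by
  have hcast : ![(0 : ZMod n), 1, 2, 3] = fun i : Fin 4 => ((i : ℕ) : ZMod n) := by
    ext i; fin_cases i <;> simp
  rw [hcast]
  intro i j h
  rw [ZMod.natCast_eq_natCast_iff', Nat.mod_eq_of_lt (by omega), Nat.mod_eq_of_lt (by omega)] at h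
  exact Fin.ext h

variable {n : ℕ} [NeZero n]

variable (n) in
def cycleMatrix : Matrix (ZMod n) (ZMod n) ℝ :=
  fun k l => if k = l + 1 ∨ l = k + 1 then 1 else 0

theorem hamiltonianCycleMatrices_eq_range :
    hamiltonianCycleMatrices n =
      Set.range fun σ : Equiv.Perm (ZMod n) => (cycleMatrix n).submatrix σ σ := by
  ext M
  exact exists_congr fun σ => by rw [eq_comm, ← Matrix.ext_iff]; rfl

theorem cycleMatrix_mem_degreeAffineSet (hn : 2 < n) :
    cycleMatrix n ∈ degreeAffineSet (ZMod n) 2 := by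
  have h1 : (1 : ZMod n) ≠ 0 := by exact_mod_cast ZMod.natCast_ne_zero_of_lt one_pos (by omega)
  have h2 : (2 : ZMod n) ≠ 0 := by exact_mod_cast ZMod.natCast_ne_zero_of_lt two_pos hn
  refine mem_degreeAffineSet_of_symm (fun k l => if_congr or_comm rfl rfl) (fun k => ?_)
    fun k => ?_
  · simp [cycleMatrix, h1]
  · have hnbrs : ({l | k = l + 1 ∨ l = k + 1} : Finset (ZMod n)) = {k - 1, k + 1} := by
      ext l
      simp [eq_sub_iff_add_eq, eq_comm]
    have hne : k - 1 ≠ k + 1 := fun h => h2 (by linear_combination -h)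
    simp [cycleMatrix, hnbrs, card_pair hne]

theorem cycleMatrix_sub_submatrix_swap (hn : 4 ≤ n) :
    cycleMatrix n - (cycleMatrix n).submatrix (Equiv.swap 1 2) (Equiv.swap 1 2) =
      twoOpt 0 1 2 3 := by
  obtain ⟨hsymm, hdiag, -⟩ := cycleMatrix_mem_degreeAffineSet (n := n) (by omega)
  refine sub_submatrix_swap_eq_twoOpt hsymm hdiag (ZMod.injective_vecFour hn)
    (fun l h1 h2 => if_congr ⟨?_, ?_⟩ rfl rfl) fun l h1 h2 => if_congr ⟨?_, ?_⟩ rfl rfl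
  · rintro (h | h)
    · linear_combination -h
    · exact absurd (h.trans one_add_one_eq_two) h2
  · rintro rfl; left; ring
  · rintro (h | h)
    · exact absurd (by linear_combination -h) h1
    · linear_combination h
  · rintro rfl; right; ring

theorem twoOptMoves_subset_vsub (hn : 4 ≤ n) :
    twoOptMoves (ZMod n) ⊆ hamiltonianCycleMatrices n -ᵥ hamiltonianCycleMatrices n := by
  rintro _ ⟨f, rfl⟩
  obtain ⟨σ, hσ⟩ :=
    Equiv.Perm.exists_extending_pair f _ f.injective (ZMod.injective_vecFour hn)
  rw [hamiltonianCycleMatrices_eq_range]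
  refine ⟨_, ⟨σ, rfl⟩, _, ⟨σ.trans (Equiv.swap 1 2), rfl⟩, ?_⟩
  dsimp only
  rw [vsub_eq_sub, ← twoOpt_submatrix σ, hσ, hσ, hσ, hσ]
  exact congrArg (fun A => A.submatrix σ σ) (cycleMatrix_sub_submatrix_swap hn)

theorem vectorSpan_hamiltonianCycleMatrices (hn : 4 ≤ n) :
    vectorSpan ℝ (hamiltonianCycleMatrices n) = degreeDirection (ZMod n) := by
  have hH : hamiltonianCycleMatrices n ⊆ degreeAffineSet (ZMod n) 2 := by
    rw [hamiltonianCycleMatrices_eq_range]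
    rintro _ ⟨σ, rfl⟩
    exact submatrix_mem_degreeAffineSet (cycleMatrix_mem_degreeAffineSet (by omega)) σ
  apply le_antisymm
  · rw [vectorSpan_def, Submodule.span_le]
    rintro _ ⟨M, hM, N, hN, rfl⟩
    exact (sub_mem_degreeDirection_iff (hH hN)).2 (hH hM)
  · calc degreeDirection (ZMod n) ≤ Submodule.span ℝ (twoOptMoves (ZMod n)) :=
          degreeDirection_le_span_twoOptMoves (by simp; omega)
      _ ≤ vectorSpan ℝ (hamiltonianCycleMatrices n) :=
          Submodule.span_mono (twoOptMoves_subset_vsub hn)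

end Cycle

/-- For `n ≥ 4`, the affine hull of the symmetric Traveling Salesman
Polytope `ST_n` equals the set of symmetric `n × n` matrices with zero diagonal whose row
sums and column sums all equal `2`. -/
theorem affineSpan_symmetricTSP (n : ℕ) [NeZero n] (hn : 4 ≤ n) :
    (affineSpan ℝ (symmetricTSP n) : Set (Matrix (ZMod n) (ZMod n) ℝ)) =
      {M | (∀ i j, M i j = M j i) ∧ (∀ i, M i i = 0) ∧
           (∀ i, ∑ j, M i j = 2) ∧ (∀ j, ∑ i, M i j = 2)} := by
  have hC := cycleMatrix_mem_degreeAffineSet (n := n) (by omega)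
  have hCspan : cycleMatrix n ∈ affineSpan ℝ (hamiltonianCycleMatrices n) :=
    subset_affineSpan ℝ _ ⟨1, fun _ _ => rfl⟩
  rw [symmetricTSP, affineSpan_convexHull, ← AffineSubspace.mk'_eq hCspan, direction_affineSpan,
    vectorSpan_hamiltonianCycleMatrices hn]
  ext M
  rw [SetLike.mem_coe, AffineSubspace.mem_mk', vsub_eq_sub, sub_mem_degreeDirection_iff hC]
  rfl
end

section
/- For n ≥ 4, the asymmetric Traveling Salesman Polytope AT_n (the convex hull of adjacency matrices of directed Hamiltonian circuits on n vertices) has dimension n² − 3n + 1, and its affine hull is the set of n×n matrices with zero diagonal all of whose row sums and column sums equal 1. -/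
set_option linter.unusedSectionVars false
set_option linter.unusedVariables false
set_option maxHeartbeats 1000000

/-- The set of adjacency matrices of directed Hamiltonian circuits on `n` vertices
(`M i j = 1` iff the circuit contains the directed edge `j → i`). -/
def directedHamiltonianMatrices (n : ℕ) [NeZero n] : Set (Matrix (ZMod n) (ZMod n) ℝ) :=
  {M | ∃ σ : Equiv.Perm (ZMod n), ∀ i j, M i j = if σ i = σ j + 1 then 1 else 0}

/-- The asymmetric Traveling Salesman Polytope `AT_n`. -/
def asymmetricTSP (n : ℕ) [NeZero n] : Set (Matrix (ZMod n) (ZMod n) ℝ) :=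
  convexHull ℝ (directedHamiltonianMatrices n)

open Finset

variable {n : ℕ} [NeZero n]

/-- matrix of the tour given by `σ`. -/
def tourM (σ : Equiv.Perm (ZMod n)) : Matrix (ZMod n) (ZMod n) ℝ :=
  fun i j => if σ i = σ j + 1 then 1 else 0

def Em (a b : ZMod n) : Matrix (ZMod n) (ZMod n) ℝ :=
  fun i j => if i = a ∧ j = b then 1 else 0

lemma zmod_cast_inj (hn : 4 ≤ n) {a b : ℕ} (ha : a < n) (hb : b < n) :
    ((a : ZMod n) = (b : ZMod n)) ↔ a = b := by
  constructor
  · intro h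
    have := congrArg ZMod.val h
    rwa [ZMod.val_cast_of_lt ha, ZMod.val_cast_of_lt hb] at this
  · rintro rfl; rfl

lemma sum_ind (c : ZMod n) : (∑ j : ZMod n, if j = c then (1:ℝ) else 0) = 1 := by
  simp

lemma tour_row (σ : Equiv.Perm (ZMod n)) (i : ZMod n) : ∑ j, tourM σ i j = 1 := by
  have : ∀ j : ZMod n, tourM σ i j = if j = σ.symm (σ i - 1) then (1:ℝ) else 0 := by
    intro j
    unfold tourM
    congr 1
    simp only [eq_iff_iff]
    rw [Equiv.eq_symm_apply]
    constructor
    · intro h; rw [h]; ring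
    · intro h; rw [h]; ring
  rw [Finset.sum_congr rfl (fun j _ => this j), sum_ind]

lemma tour_col (σ : Equiv.Perm (ZMod n)) (j : ZMod n) : ∑ i, tourM σ i j = 1 := by
  have : ∀ i : ZMod n, tourM σ i j = if i = σ.symm (σ j + 1) then (1:ℝ) else 0 := by
    intro i
    unfold tourM
    congr 1
    simp only [eq_iff_iff]
    rw [Equiv.eq_symm_apply]
  rw [Finset.sum_congr rfl (fun i _ => this i), sum_ind]

lemma tour_diag (hn : 4 ≤ n) (σ : Equiv.Perm (ZMod n)) (i : ZMod n) : tourM σ i i = 0 := by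
  unfold tourM
  rw [if_neg]
  intro h
  have h1 : (1 : ZMod n) = 0 := by
    have := left_eq_add.mp h
    exact this
  have : ((1:ℕ) : ZMod n) = ((0:ℕ) : ZMod n) := by simpa using h1
  rw [zmod_cast_inj hn (by omega) (by omega)] at this
  omega

/-- The direction space: zero diagonal, zero row and column sums. -/
def Wmod (n : ℕ) [NeZero n] : Submodule ℝ (Matrix (ZMod n) (ZMod n) ℝ) where
  carrier := {M | (∀ i, M i i = 0) ∧ (∀ i, ∑ j, M i j = 0) ∧ (∀ j, ∑ i, M i j = 0)}
  add_mem' := by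
    rintro a b ⟨ha1, ha2, ha3⟩ ⟨hb1, hb2, hb3⟩
    refine ⟨fun i => ?_, fun i => ?_, fun j => ?_⟩ <;>
      simp [Matrix.add_apply, Finset.sum_add_distrib, ha1, hb1, ha2 , hb2, ha3, hb3]
  zero_mem' := by refine ⟨fun i => rfl, fun i => ?_, fun j => ?_⟩ <;> simp
  smul_mem' := by
    rintro c a ⟨ha1, ha2, ha3⟩
    refine ⟨fun i => ?_, fun i => ?_, fun j => ?_⟩ <;>
      simp [Matrix.smul_apply, ← Finset.mul_sum, ha1, ha2, ha3]

lemma tour_mem_S (σ : Equiv.Perm (ZMod n)) : tourM σ ∈ directedHamiltonianMatrices n :=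
  ⟨σ, fun _ _ => rfl⟩

lemma mem_S_iff (M : Matrix (ZMod n) (ZMod n) ℝ) :
    M ∈ directedHamiltonianMatrices n ↔ ∃ σ : Equiv.Perm (ZMod n), M = tourM σ := by
  constructor
  · rintro ⟨σ, h⟩; exact ⟨σ, by funext i j; exact h i j⟩
  · rintro ⟨σ, rfl⟩; exact tour_mem_S σ

lemma vectorSpan_le_W (hn : 4 ≤ n) :
    vectorSpan ℝ (directedHamiltonianMatrices n) ≤ Wmod n := by
  rw [vectorSpan_def, Submodule.span_le]
  rintro x hx
  rw [Set.mem_vsub] at hx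
  obtain ⟨a, ha, b, hb, rfl⟩ := hx
  obtain ⟨σ, rfl⟩ := (mem_S_iff a).1 ha
  obtain ⟨τ, rfl⟩ := (mem_S_iff b).1 hb
  rw [vsub_eq_sub]
  refine ⟨fun i => ?_, fun i => ?_, fun j => ?_⟩
  · simp [Matrix.sub_apply, tour_diag hn]
  · simp [Matrix.sub_apply, Finset.sum_sub_distrib, tour_row]
  · simp [Matrix.sub_apply, Finset.sum_sub_distrib, tour_col]

lemma zne (hn : 4 ≤ n) {a b : ℕ} (ha : a < n) (hb : b < n) (h : a ≠ b) :
    (a : ZMod n) ≠ (b : ZMod n) := fun hc => h ((zmod_cast_inj hn ha hb).1 hc)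

lemma z01 (hn : 4 ≤ n) : (0 : ZMod n) ≠ 1 := by
  have := zne hn (show 0 < n by omega) (show 1 < n by omega) (by omega); simpa using this
lemma z02 (hn : 4 ≤ n) : (0 : ZMod n) ≠ 2 := by
  have := zne hn (show 0 < n by omega) (show 2 < n by omega) (by omega); simpa using this
lemma z03 (hn : 4 ≤ n) : (0 : ZMod n) ≠ 3 := by
  have := zne hn (show 0 < n by omega) (show 3 < n by omega) (by omega); simpa using this
lemma z12 (hn : 4 ≤ n) : (1 : ZMod n) ≠ 2 := by
  have := zne hn (show 1 < n by omega) (show 2 < n by omega) (by omega); simpa using this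
lemma z13 (hn : 4 ≤ n) : (1 : ZMod n) ≠ 3 := by
  have := zne hn (show 1 < n by omega) (show 3 < n by omega) (by omega); simpa using this
lemma z23 (hn : 4 ≤ n) : (2 : ZMod n) ≠ 3 := by
  have := zne hn (show 2 < n by omega) (show 3 < n by omega) (by omega); simpa using this

lemma exists_perm4 (hn : 4 ≤ n) (a b c d : ZMod n) (hab : a ≠ b) (hac : a ≠ c)
    (had : a ≠ d) (hbc : b ≠ c) (hbd : b ≠ d) (hcd : c ≠ d) :
    ∃ f : Equiv.Perm (ZMod n), f 0 = a ∧ f 1 = b ∧ f 2 = c ∧ f 3 = d := by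
  set f0 : Equiv.Perm (ZMod n) := Equiv.swap 0 a with hf0
  have e0 : f0 0 = a := Equiv.swap_apply_left 0 a
  set f1 : Equiv.Perm (ZMod n) := (Equiv.swap 1 (f0.symm b)).trans f0 with hf1
  have hs1 : f0.symm b ≠ 0 := by rw [Ne, Equiv.symm_apply_eq, e0]; exact fun h => hab h.symm
  have e10 : f1 0 = a := by
    rw [hf1]; simp only [Equiv.trans_apply]
    rw [Equiv.swap_apply_of_ne_of_ne (z01 hn) (Ne.symm hs1), e0]
  have e11 : f1 1 = b := by
    rw [hf1]; simp only [Equiv.trans_apply, Equiv.swap_apply_left, Equiv.apply_symm_apply]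
  set f2 : Equiv.Perm (ZMod n) := (Equiv.swap 2 (f1.symm c)).trans f1 with hf2
  have hs20 : f1.symm c ≠ 0 := by rw [Ne, Equiv.symm_apply_eq, e10]; exact fun h => hac h.symm
  have hs21 : f1.symm c ≠ 1 := by rw [Ne, Equiv.symm_apply_eq, e11]; exact fun h => hbc h.symm
  have e20 : f2 0 = a := by
    rw [hf2]; simp only [Equiv.trans_apply]
    rw [Equiv.swap_apply_of_ne_of_ne (z02 hn) (Ne.symm hs20), e10]
  have e21 : f2 1 = b := by
    rw [hf2]; simp only [Equiv.trans_apply]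
    rw [Equiv.swap_apply_of_ne_of_ne (z12 hn) (Ne.symm hs21), e11]
  have e22 : f2 2 = c := by
    rw [hf2]; simp only [Equiv.trans_apply, Equiv.swap_apply_left, Equiv.apply_symm_apply]
  set f3 : Equiv.Perm (ZMod n) := (Equiv.swap 3 (f2.symm d)).trans f2 with hf3
  have hs30 : f2.symm d ≠ 0 := by rw [Ne, Equiv.symm_apply_eq, e20]; exact fun h => had h.symm
  have hs31 : f2.symm d ≠ 1 := by rw [Ne, Equiv.symm_apply_eq, e21]; exact fun h => hbd h.symm
  have hs32 : f2.symm d ≠ 2 := by rw [Ne, Equiv.symm_apply_eq, e22]; exact fun h => hcd h.symm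
  refine ⟨f3, ?_, ?_, ?_, ?_⟩
  · rw [hf3]; simp only [Equiv.trans_apply]
    rw [Equiv.swap_apply_of_ne_of_ne (z03 hn) (Ne.symm hs30), e20]
  · rw [hf3]; simp only [Equiv.trans_apply]
    rw [Equiv.swap_apply_of_ne_of_ne (z13 hn) (Ne.symm hs31), e21]
  · rw [hf3]; simp only [Equiv.trans_apply]
    rw [Equiv.swap_apply_of_ne_of_ne (z23 hn) (Ne.symm hs32), e22]
  · rw [hf3]; simp only [Equiv.trans_apply, Equiv.swap_apply_left, Equiv.apply_symm_apply]

def Th (a b c d : ZMod n) : Matrix (ZMod n) (ZMod n) ℝ :=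
  Em c a + Em b c + Em d b - Em b a - Em c b - Em d c

lemma key1 (w : ZMod n) : ((1 : ZMod n) = w + 1) ↔ w = 0 := by
  constructor
  · intro h
    have h2 : w + 1 - 1 = 1 - 1 := by rw [← h]
    simpa using h2
  · rintro rfl; rw [zero_add]

lemma key2 (w : ZMod n) : ((2 : ZMod n) = w + 1) ↔ w = 1 := by
  constructor
  · intro h
    have h2 : w + 1 - 1 = 2 - 1 := by rw [← h]
    have h3 : (2:ZMod n) - 1 = 1 := by rw [← one_add_one_eq_two]; simp
    rw [add_sub_cancel_right, h3] at h2
    exact h2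
  · rintro rfl; rw [one_add_one_eq_two]

lemma key3 (w : ZMod n) : ((3 : ZMod n) = w + 1) ↔ w = 2 := by
  constructor
  · intro h
    have h2 : w + 1 - 1 = 3 - 1 := by rw [← h]
    have h3 : (3:ZMod n) - 1 = 2 := by rw [← two_add_one_eq_three]; simp
    rw [add_sub_cancel_right, h3] at h2
    exact h2
  · rintro rfl; rw [two_add_one_eq_three]

lemma swap_ind (hn : 4 ≤ n) (u v : ZMod n) :
    (if Equiv.swap 1 2 u = Equiv.swap 1 2 v + 1 then (1:ℝ) else 0)
      - (if u = v + 1 then 1 else 0) =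
    (if u = 2 ∧ v = 0 then (1:ℝ) else 0) + (if u = 1 ∧ v = 2 then 1 else 0)
      + (if u = 3 ∧ v = 1 then 1 else 0) - (if u = 1 ∧ v = 0 then 1 else 0)
      - (if u = 2 ∧ v = 1 then 1 else 0) - (if u = 3 ∧ v = 2 then 1 else 0) := by
  have z01 := z01 hn; have z02 := z02 hn; have z03 := z03 hn
  have z12 := z12 hn; have z13 := z13 hn; have z23 := z23 hn
  by_cases hu1 : u = 1 <;> by_cases hu2 : u = 2 <;> by_cases hu3 : u = 3 <;>
    by_cases hv0 : v = 0 <;> by_cases hv1 : v = 1 <;> by_cases hv2 : v = 2 <;>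
    simp_all [Equiv.swap_apply_def, key1, key2, key3, zero_add, one_add_one_eq_two,
      two_add_one_eq_three, Ne.symm z01, Ne.symm z02, Ne.symm z03, Ne.symm z12,
      Ne.symm z13, Ne.symm z23]

lemma theta_mem (hn : 4 ≤ n) {a b c d : ZMod n} (hab : a ≠ b) (hac : a ≠ c)
    (had : a ≠ d) (hbc : b ≠ c) (hbd : b ≠ d) (hcd : c ≠ d) :
    Th a b c d ∈ vectorSpan ℝ (directedHamiltonianMatrices n) := by
  obtain ⟨f, h0, h1, h2, h3⟩ := exists_perm4 hn a b c d hab hac had hbc hbd hcd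
  have hmem := vsub_mem_vectorSpan ℝ (tour_mem_S (f.symm.trans (Equiv.swap 1 2)))
    (tour_mem_S f.symm)
  rw [vsub_eq_sub] at hmem
  have hkey : Th a b c d
      = tourM (f.symm.trans (Equiv.swap 1 2)) - tourM (f.symm) := by
    funext i j
    have hia : (i = a) ↔ (f.symm i = 0) := by rw [Equiv.symm_apply_eq, h0]
    have hib : (i = b) ↔ (f.symm i = 1) := by rw [Equiv.symm_apply_eq, h1]
    have hic : (i = c) ↔ (f.symm i = 2) := by rw [Equiv.symm_apply_eq, h2]
    have hid : (i = d) ↔ (f.symm i = 3) := by rw [Equiv.symm_apply_eq, h3]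
    have hja : (j = a) ↔ (f.symm j = 0) := by rw [Equiv.symm_apply_eq, h0]
    have hjb : (j = b) ↔ (f.symm j = 1) := by rw [Equiv.symm_apply_eq, h1]
    have hjc : (j = c) ↔ (f.symm j = 2) := by rw [Equiv.symm_apply_eq, h2]
    have hjd : (j = d) ↔ (f.symm j = 3) := by rw [Equiv.symm_apply_eq, h3]
    simp only [Th, Em, Matrix.add_apply, Matrix.sub_apply, tourM, Equiv.trans_apply,
      hia, hib, hic, hid, hja, hjb, hjc, hjd]
    have := swap_ind hn (f.symm i) (f.symm j)
    exact this.symm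
  rw [hkey]
  exact hmem

def Gm (a b c d : ZMod n) : Matrix (ZMod n) (ZMod n) ℝ :=
  Em a c - Em a d - Em b c + Em b d

lemma g_eq (r1 r2 k1 k2 : ZMod n) :
    Gm r1 r2 k1 k2 = (-(1/2) : ℝ) • Th r1 k1 k2 r2 + (-(1/2) : ℝ) • Th k1 r1 k2 r2
      + ((1/2) : ℝ) • Th k2 r1 k1 r2 := by
  unfold Gm Th
  module

lemma g_mem (hn : 4 ≤ n) {r1 r2 k1 k2 : ZMod n} (h12 : r1 ≠ r2) (h1k1 : r1 ≠ k1)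
    (h1k2 : r1 ≠ k2) (h2k1 : r2 ≠ k1) (h2k2 : r2 ≠ k2) (hk : k1 ≠ k2) :
    Gm r1 r2 k1 k2 ∈ vectorSpan ℝ (directedHamiltonianMatrices n) := by
  rw [g_eq]
  refine Submodule.add_mem _ (Submodule.add_mem _ (Submodule.smul_mem _ _ ?_)
    (Submodule.smul_mem _ _ ?_)) (Submodule.smul_mem _ _ ?_)
  · exact theta_mem hn h1k1 h1k2 h12 hk (Ne.symm h2k1) (Ne.symm h2k2)
  · exact theta_mem hn (Ne.symm h1k1) hk (Ne.symm h2k1) h1k2 h12 (Ne.symm h2k2)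
  · exact theta_mem hn (Ne.symm h1k2) (Ne.symm hk) (Ne.symm h2k2) h1k1 h12 (Ne.symm h2k1)

def Hm (a b : ZMod n) : Matrix (ZMod n) (ZMod n) ℝ := Em a b - Em a 0 - Em 0 b

lemma rowmove (hn : 4 ≤ n) {a b d : ZMod n} (ha : a ≠ 0) (hb : b ≠ 0) (hd : d ≠ 0)
    (hbd : b ≠ d) (hab : a ≠ b) (had : a ≠ d) :
    Hm a b - Hm a d ∈ vectorSpan ℝ (directedHamiltonianMatrices n) := by
  have e : Hm a b - Hm a d = Gm a 0 b d := by unfold Hm Gm; module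
  rw [e]
  exact g_mem hn ha hab had (Ne.symm hb) (Ne.symm hd) hbd

lemma colmove (hn : 4 ≤ n) {a b c : ZMod n} (ha : a ≠ 0) (hb : b ≠ 0) (hc : c ≠ 0)
    (hac : a ≠ c) (hab : a ≠ b) (hcb : c ≠ b) :
    Hm a b - Hm c b ∈ vectorSpan ℝ (directedHamiltonianMatrices n) := by
  have e : Hm a b - Hm c b = Gm a c b 0 := by unfold Hm Gm; module
  rw [e]
  exact g_mem hn hac hab ha hcb hc hb

lemma exists_ne3 (hn : 4 ≤ n) (x y z : ZMod n) : ∃ m : ZMod n, m ≠ x ∧ m ≠ y ∧ m ≠ z := by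
  by_contra h
  push_neg at h
  have hsub : (Finset.univ : Finset (ZMod n)) ⊆ {x, y, z} := by
    intro m _
    by_cases h1 : m = x
    · simp [h1]
    · by_cases h2 : m = y
      · simp [h2]
      · simp [h m h1 h2]
  have h1 : (Finset.univ : Finset (ZMod n)).card ≤ ({x, y, z} : Finset (ZMod n)).card :=
    Finset.card_le_card hsub
  have h2 : ({x, y, z} : Finset (ZMod n)).card ≤ 3 := by
    apply le_trans (Finset.card_insert_le _ _)
    have := Finset.card_insert_le y ({z} : Finset (ZMod n))
    simp at this ⊢
    omega
  rw [Finset.card_univ, ZMod.card] at h1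
  omega

lemma hdiff_mem (hn : 4 ≤ n) {a b c d : ZMod n} (ha : a ≠ 0) (hb : b ≠ 0) (hab : a ≠ b)
    (hc : c ≠ 0) (hd : d ≠ 0) (hcd : c ≠ d) :
    Hm a b - Hm c d ∈ vectorSpan ℝ (directedHamiltonianMatrices n) := by
  by_cases hac : a = c
  · subst hac
    by_cases hbd : b = d
    · subst hbd; simpa using (vectorSpan ℝ (directedHamiltonianMatrices n)).zero_mem
    · exact rowmove hn ha hb hd hbd hab hcd
  · by_cases hbd : b = d
    · subst hbd; exact colmove hn ha hb hc hac hab hcd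
    · by_cases had : a = d
      · subst had
        by_cases hbc : b = c
        · subst hbc
          obtain ⟨m, hm0, hma, hmb⟩ := exists_ne3 hn 0 a b
          have e : Hm a b - Hm b a = (Hm a b - Hm a m) + ((Hm a m - Hm b m)
              + (Hm b m - Hm b a)) := by module
          rw [e]
          refine Submodule.add_mem _ (rowmove hn ha hb hm0 (fun h => hmb h.symm) hab
            (fun h => hma h.symm)) (Submodule.add_mem _ ?_ ?_)
          · exact colmove hn ha hm0 hb hab (fun h => hma h.symm) (fun h => hmb h.symm)
          · exact rowmove hn hb hm0 ha hma (fun h => hmb h.symm) (fun h => hab h.symm)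
        · have e : Hm a b - Hm c a = (Hm a b - Hm c b) + (Hm c b - Hm c a) := by module
          rw [e]
          refine Submodule.add_mem _ ?_ ?_
          · exact colmove hn ha hb hc hac hab (fun h => hbc h.symm)
          · exact rowmove hn hc hb ha hbd (fun h => hbc h.symm) (fun h => hac h.symm)
      · have e : Hm a b - Hm c d = (Hm a b - Hm a d) + (Hm a d - Hm c d) := by module
        rw [e]
        refine Submodule.add_mem _ (rowmove hn ha hb hd hbd hab had) ?_
        exact colmove hn ha hd hc hac had hcd

lemma erase_sum (F : ZMod n → ℝ) (x : ZMod n) :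
    ∑ y ∈ Finset.univ.erase x, F y = (∑ y, F y) - F x := by
  have := Finset.add_sum_erase Finset.univ F (Finset.mem_univ x)
  linarith

lemma erase2_sum (F : ZMod n → ℝ) (a : ZMod n) (ha : a ≠ 0) :
    ∑ b ∈ (Finset.univ.erase 0).erase a, F b = (∑ b, F b) - F 0 - F a := by
  have h1 := Finset.add_sum_erase (Finset.univ.erase 0) F
    (Finset.mem_erase.2 ⟨ha, Finset.mem_univ a⟩)
  rw [erase_sum F 0] at h1
  linarith

lemma entry_sum (hn : 4 ≤ n) (M : Matrix (ZMod n) (ZMod n) ℝ)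
    (hdiag : ∀ i, M i i = 0) (hrow : ∀ i, ∑ j, M i j = 0) (hcol : ∀ j, ∑ i, M i j = 0)
    (i j : ZMod n) :
    ∑ a ∈ Finset.univ.erase 0, ∑ b ∈ (Finset.univ.erase 0).erase a,
      M a b * Hm a b i j = M i j := by
  have hinner : ∀ a ∈ Finset.univ.erase 0,
      ∑ b ∈ (Finset.univ.erase 0).erase a, M a b * Hm a b i j
        = (∑ b, M a b * Hm a b i j) - M a 0 * Hm a 0 i j - M a a * Hm a a i j := by
    intro a ha
    exact erase2_sum (fun b => M a b * Hm a b i j) a (Finset.mem_erase.1 ha).1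
  rw [Finset.sum_congr rfl hinner]
  rw [erase_sum (fun a => (∑ b, M a b * Hm a b i j) - M a 0 * Hm a 0 i j
    - M a a * Hm a a i j) 0]
  simp only [Finset.sum_sub_distrib]
  have hda : ∀ a, M a a * Hm a a i j = 0 := fun a => by rw [hdiag a, zero_mul]
  simp only [hda, Finset.sum_const_zero, hdiag]
  by_cases hi0 : i = 0 <;> by_cases hj0 : j = 0 <;>
    simp [Hm, Em, Matrix.sub_apply, mul_sub, Finset.sum_sub_distrib, mul_ite, ite_and,
      Finset.sum_ite_eq, Finset.sum_ite_eq', hrow, hcol, hdiag, hi0, hj0,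
      ← Finset.sum_mul, ← Finset.mul_sum] <;>
    ring_nf <;>
    simp [hrow, hcol, hdiag]

lemma W_le_vectorSpan (hn : 4 ≤ n) :
    Wmod n ≤ vectorSpan ℝ (directedHamiltonianMatrices n) := by
  rintro M ⟨hdiag, hrow, hcol⟩
  have hcoef : ∑ a ∈ Finset.univ.erase 0, ∑ b ∈ (Finset.univ.erase 0).erase a, M a b = 0 := by
    have hinner : ∀ a ∈ Finset.univ.erase 0,
        ∑ b ∈ (Finset.univ.erase 0).erase a, M a b = - M a 0 := by
      intro a ha
      rw [erase2_sum (fun b => M a b) a (Finset.mem_erase.1 ha).1, hrow a,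
        hdiag a]
      ring
    rw [Finset.sum_congr rfl hinner, erase_sum (fun a => - M a 0) 0]
    have h2 : ∑ y : ZMod n, -M y 0 = 0 := by
      rw [Finset.sum_neg_distrib, hcol 0, neg_zero]
    rw [h2, hdiag 0]
    ring
  have hMeq : M = ∑ a ∈ Finset.univ.erase 0, ∑ b ∈ (Finset.univ.erase 0).erase a,
      M a b • (Hm a b - Hm 1 2) := by
    ext i j
    rw [Matrix.sum_apply]
    have h1 : ∀ a ∈ Finset.univ.erase 0,
        ((∑ b ∈ (Finset.univ.erase 0).erase a, M a b • (Hm a b - Hm 1 2) :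
          Matrix (ZMod n) (ZMod n) ℝ)) i j
        = ∑ b ∈ (Finset.univ.erase 0).erase a, M a b * (Hm a b i j - Hm 1 2 i j) := by
      intro a _
      rw [Matrix.sum_apply]
      refine Finset.sum_congr rfl fun b _ => ?_
      simp [Matrix.smul_apply, Matrix.sub_apply]
    rw [Finset.sum_congr rfl h1]
    simp only [mul_sub, Finset.sum_sub_distrib, ← Finset.sum_mul]
    rw [entry_sum hn M hdiag hrow hcol i j, hcoef]
    ring
  rw [hMeq]
  refine Submodule.sum_mem _ fun a ha => Submodule.sum_mem _ fun b hb =>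
    Submodule.smul_mem _ _ ?_
  have ha0 : a ≠ 0 := (Finset.mem_erase.1 ha).1
  have hba : b ≠ a := (Finset.mem_erase.1 hb).1
  have hb0 : b ≠ 0 := (Finset.mem_erase.1 (Finset.mem_erase.1 hb).2).1
  exact hdiff_mem hn ha0 hb0 (fun h => hba h.symm) (Ne.symm (z01 hn)) (Ne.symm (z02 hn))
    (z12 hn)

abbrev Jt (n : ℕ) [NeZero n] := {i : ZMod n // i ≠ 0}

def rho (n : ℕ) [NeZero n] : Wmod n →ₗ[ℝ] (Jt n × Jt n → ℝ) where
  toFun M := fun p => M.1 p.1.1 p.2.1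
  map_add' M N := by funext p; simp [Matrix.add_apply]
  map_smul' c M := by funext p; simp [Matrix.smul_apply]

def phi (n : ℕ) [NeZero n] : (Jt n × Jt n → ℝ) →ₗ[ℝ] (Jt n → ℝ) × ℝ where
  toFun g := (fun i => g (i, i), ∑ p, g p)
  map_add' g h := by
    refine Prod.ext (funext fun i => rfl) ?_
    simp [Finset.sum_add_distrib]
  map_smul' c g := by
    refine Prod.ext (funext fun i => rfl) ?_
    simp [Finset.mul_sum]

lemma sum_subtype_erase (F : ZMod n → ℝ) :
    ∑ j ∈ Finset.univ.erase 0, F j = ∑ j : Jt n, F j.1 := by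
  apply Finset.sum_subtype
  intro x
  simp [Finset.mem_erase]

lemma rho_inj (hn : 4 ≤ n) : Function.Injective (rho n) := by
  rw [← LinearMap.ker_eq_bot]
  rw [Submodule.eq_bot_iff]
  rintro ⟨M, hdiag, hrow, hcol⟩ hM
  have hblock : ∀ i j : ZMod n, i ≠ 0 → j ≠ 0 → M i j = 0 := by
    intro i j hi hj
    exact congrFun hM (⟨i, hi⟩, ⟨j, hj⟩)
  have hrow0 : ∀ i : ZMod n, i ≠ 0 → M i 0 = 0 := by
    intro i hi
    have h1 := Finset.add_sum_erase Finset.univ (fun j => M i j) (Finset.mem_univ 0)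
    rw [hrow i] at h1
    have h2 : ∑ j ∈ Finset.univ.erase 0, M i j = 0 :=
      Finset.sum_eq_zero fun j hj => hblock i j hi (Finset.mem_erase.1 hj).1
    linarith [h1, h2]
  have hcol0 : ∀ j : ZMod n, j ≠ 0 → M 0 j = 0 := by
    intro j hj
    have h1 := Finset.add_sum_erase Finset.univ (fun i => M i j) (Finset.mem_univ 0)
    rw [hcol j] at h1
    have h2 : ∑ i ∈ Finset.univ.erase 0, M i j = 0 :=
      Finset.sum_eq_zero fun i hi => hblock i j (Finset.mem_erase.1 hi).1 hj
    linarith [h1, h2]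
  apply Subtype.ext
  funext i j
  show M i j = 0
  by_cases hi : i = 0
  · by_cases hj : j = 0
    · subst hi; subst hj; exact hdiag 0
    · subst hi; exact hcol0 j hj
  · by_cases hj : j = 0
    · subst hj; exact hrow0 i hi
    · exact hblock i j hi hj

lemma range_rho_le (hn : 4 ≤ n) : LinearMap.range (rho n) ≤ LinearMap.ker (phi n) := by
  rintro g ⟨⟨M, hdiag, hrow, hcol⟩, rfl⟩
  rw [LinearMap.mem_ker]
  refine Prod.ext (funext fun i => ?_) ?_
  · show M i.1 i.1 = 0
    exact hdiag i.1
  · show ∑ p : Jt n × Jt n, M p.1.1 p.2.1 = 0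
    rw [Fintype.sum_prod_type]
    have hinner : ∀ i : Jt n, ∑ j : Jt n, M i.1 j.1 = - M i.1 0 := by
      intro i
      rw [← sum_subtype_erase (fun j => M i.1 j), erase_sum (fun j => M i.1 j) 0, hrow i.1]
      ring
    rw [Finset.sum_congr rfl (fun i _ => hinner i), Finset.sum_neg_distrib,
      ← sum_subtype_erase (fun i => M i 0), erase_sum (fun i => M i 0) 0, hcol 0, hdiag 0]
    ring

lemma ker_phi_le (hn : 4 ≤ n) : LinearMap.ker (phi n) ≤ LinearMap.range (rho n) := by
  intro g hg
  rw [LinearMap.mem_ker] at hg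
  have hgdiag : ∀ i : Jt n, g (i, i) = 0 := fun i => congrFun (congrArg Prod.fst hg) i
  have hgtot : ∑ p : Jt n × Jt n, g p = 0 := congrArg Prod.snd hg
  set ge : ZMod n → ZMod n → ℝ := fun i j =>
    ∑ p : Jt n × Jt n, if p.1.1 = i ∧ p.2.1 = j then g p else 0 with hge
  have hge_val : ∀ (i j : ZMod n) (hi : i ≠ 0) (hj : j ≠ 0),
      ge i j = g (⟨i, hi⟩, ⟨j, hj⟩) := by
    intro i j hi hj
    simp only [hge]
    rw [Finset.sum_eq_single ((⟨i, hi⟩, ⟨j, hj⟩) : Jt n × Jt n)]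
    · simp
    · intro p _ hp
      rw [if_neg]
      rintro ⟨h1, h2⟩
      apply hp
      exact Prod.ext (Subtype.ext h1) (Subtype.ext h2)
    · intro h; exact absurd (Finset.mem_univ _) h
  have hge_left : ∀ j : ZMod n, ge 0 j = 0 := by
    intro j
    simp only [hge]
    exact Finset.sum_eq_zero fun p _ => by
      rw [if_neg]; rintro ⟨h1, _⟩; exact p.1.2 h1
  have hge_right : ∀ i : ZMod n, ge i 0 = 0 := by
    intro i
    simp only [hge]
    exact Finset.sum_eq_zero fun p _ => by
      rw [if_neg]; rintro ⟨_, h2⟩; exact p.2.2 h2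
  have hge_diag : ∀ i : ZMod n, ge i i = 0 := by
    intro i
    by_cases hi : i = 0
    · rw [hi]; exact hge_left 0
    · rw [hge_val i i hi hi]; exact hgdiag _
  have hge_tot : ∑ i, ∑ j, ge i j = 0 := by
    have h1 : ∀ i : ZMod n, ∑ j, ge i j
        = ∑ p : Jt n × Jt n, ∑ j, if p.1.1 = i ∧ p.2.1 = j then g p else 0 := by
      intro i; simp only [hge]; rw [Finset.sum_comm]
    have h2 : ∑ i, ∑ j, ge i j = ∑ p : Jt n × Jt n, ∑ i : ZMod n, ∑ j : ZMod n,
        if p.1.1 = i ∧ p.2.1 = j then g p else 0 := by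
      rw [Finset.sum_congr rfl fun i _ => h1 i, Finset.sum_comm]
    have h3 : ∀ p : Jt n × Jt n, (∑ i : ZMod n, ∑ j : ZMod n,
        if p.1.1 = i ∧ p.2.1 = j then g p else 0) = g p := by
      intro p
      simp [ite_and, Finset.sum_ite_eq]
    rw [h2, Finset.sum_congr rfl fun p _ => h3 p]
    exact hgtot
  set N : Matrix (ZMod n) (ZMod n) ℝ := fun i j =>
    ge i j - (if j = 0 then ∑ j', ge i j' else 0) - (if i = 0 then ∑ i', ge i' j else 0)
    with hN
  have hNmem : N ∈ Wmod n := by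
    refine ⟨fun i => ?_, fun i => ?_, fun j => ?_⟩
    · by_cases hi : i = 0
      · subst hi
        show ge 0 0 - (if (0:ZMod n) = 0 then ∑ j', ge 0 j' else 0)
            - (if (0:ZMod n) = 0 then ∑ i', ge i' 0 else 0) = 0
        rw [if_pos rfl, if_pos rfl, hge_left 0,
          Finset.sum_congr rfl fun j _ => hge_left j,
          Finset.sum_congr rfl fun i _ => hge_right i]
        simp
      · show ge i i - (if i = (0:ZMod n) then ∑ j', ge i j' else 0)
            - (if i = (0:ZMod n) then ∑ i', ge i' i else 0) = 0
        rw [if_neg hi, if_neg hi, hge_diag i]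
        ring
    · have e1 : ∑ j, (if j = (0:ZMod n) then ∑ j', ge i j' else 0) = ∑ j', ge i j' := by
        rw [Finset.sum_ite_eq' Finset.univ (0 : ZMod n) (fun _ => ∑ j', ge i j')]
        simp
      have e2 : ∑ j, (if i = (0:ZMod n) then ∑ i', ge i' j else 0)
          = if i = 0 then ∑ j, ∑ i', ge i' j else 0 := by
        by_cases hi : i = 0 <;> simp [hi]
      have e3 : ∑ j, N i j = (∑ j, ge i j) - (∑ j', ge i j')
          - (if i = 0 then ∑ j, ∑ i', ge i' j else 0) := by
        simp only [hN, Finset.sum_sub_distrib]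
        rw [e1, e2]
      rw [e3]
      by_cases hi : i = 0
      · rw [if_pos hi]
        have hcomm : ∑ j : ZMod n, ∑ i' : ZMod n, ge i' j = 0 := by
          rw [Finset.sum_comm]; exact hge_tot
        rw [hcomm]
        simp
      · rw [if_neg hi]; ring
    · have e1 : ∑ i, (if j = (0:ZMod n) then ∑ j', ge i j' else 0)
          = if j = 0 then ∑ i, ∑ j', ge i j' else 0 := by
        by_cases hj : j = 0 <;> simp [hj]
      have e2 : ∑ i, (if i = (0:ZMod n) then ∑ i', ge i' j else 0) = ∑ i', ge i' j := by
        rw [Finset.sum_ite_eq' Finset.univ (0 : ZMod n) (fun _ => ∑ i', ge i' j)]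
        simp
      have e3 : ∑ i, N i j = (∑ i, ge i j)
          - (if j = 0 then ∑ i, ∑ j', ge i j' else 0) - (∑ i', ge i' j) := by
        simp only [hN, Finset.sum_sub_distrib]
        rw [e1, e2]
      rw [e3]
      by_cases hj : j = 0
      · rw [if_pos hj, hge_tot]
        simp
      · rw [if_neg hj]; ring
  refine ⟨⟨N, hNmem⟩, ?_⟩
  funext p
  show N p.1.1 p.2.1 = g p
  show ge p.1.1 p.2.1 - (if p.2.1 = 0 then ∑ j', ge p.1.1 j' else 0)
      - (if p.1.1 = 0 then ∑ i', ge i' p.2.1 else 0) = g p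
  rw [if_neg p.2.2, if_neg p.1.2, hge_val p.1.1 p.2.1 p.1.2 p.2.2]
  simp

lemma phi_surj (hn : 4 ≤ n) : Function.Surjective (phi n) := by
  rintro ⟨d, s⟩
  have h1 : (1 : ZMod n) ≠ 0 := Ne.symm (z01 hn)
  have h2 : (2 : ZMod n) ≠ 0 := Ne.symm (z02 hn)
  set u : Jt n := ⟨1, h1⟩
  set v : Jt n := ⟨2, h2⟩
  have huv : u ≠ v := fun h => z12 hn (congrArg Subtype.val h)
  refine ⟨fun p => (if p.1 = p.2 then d p.1 else 0)
    + (if p = (u, v) then s - ∑ i, d i else 0), ?_⟩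
  refine Prod.ext (funext fun i => ?_) ?_
  · show (if i = i then d i else 0) + (if (i, i) = (u, v) then s - ∑ i, d i else 0) = d i
    rw [if_pos rfl, if_neg]
    · ring
    · intro h
      have h' := Prod.mk.injEq i i u v ▸ h
      exact huv (h'.1.symm ▸ h'.2.symm ▸ rfl : u = v)
  · show ∑ p : Jt n × Jt n, ((if p.1 = p.2 then d p.1 else 0)
      + (if p = (u, v) then s - ∑ i, d i else 0)) = s
    rw [Finset.sum_add_distrib]
    have e1 : ∑ p : Jt n × Jt n, (if p.1 = p.2 then d p.1 else 0) = ∑ i, d i := by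
      rw [Fintype.sum_prod_type]
      simp [Finset.sum_ite_eq]
    have e2 : ∑ p : Jt n × Jt n, (if p = (u, v) then s - ∑ i, d i else 0)
        = s - ∑ i, d i := by
      rw [Finset.sum_ite_eq' Finset.univ ((u, v) : Jt n × Jt n)
        (fun _ => s - ∑ i, d i)]
      simp
    rw [e1, e2]
    ring

lemma finrank_W (hn : 4 ≤ n) : Module.finrank ℝ (Wmod n) = n ^ 2 - 3 * n + 1 := by
  have hJ : Fintype.card (Jt n) = n - 1 := by
    have h1 : Fintype.card {i : ZMod n // i = 0} = 1 := Fintype.card_subtype_eq 0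
    have h2 := Fintype.card_subtype_compl (fun i : ZMod n => i = 0)
    rw [h1, ZMod.card] at h2
    exact h2
  have hY : Module.finrank ℝ (Jt n × Jt n → ℝ) = (n - 1) * (n - 1) := by
    rw [Module.finrank_pi, Fintype.card_prod, hJ]
  have hcod : Module.finrank ℝ ((Jt n → ℝ) × ℝ) = (n - 1) + 1 := by
    rw [Module.finrank_prod, Module.finrank_pi, hJ, Module.finrank_self]
  have hrank : Module.finrank ℝ (LinearMap.range (phi n)) = (n - 1) + 1 := by
    rw [LinearMap.range_eq_top.2 (phi_surj hn), finrank_top]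
    exact hcod
  have hrn := LinearMap.finrank_range_add_finrank_ker (phi n)
  rw [hrank, hY] at hrn
  have hker : Module.finrank ℝ (LinearMap.ker (phi n)) + ((n - 1) + 1)
      = (n - 1) * (n - 1) := by omega
  have heq : LinearMap.range (rho n) = LinearMap.ker (phi n) :=
    le_antisymm (range_rho_le hn) (ker_phi_le hn)
  have hWr : Module.finrank ℝ (Wmod n) = Module.finrank ℝ (LinearMap.range (rho n)) :=
    (LinearMap.finrank_range_of_inj (rho_inj hn)).symm
  rw [heq] at hWr
  obtain ⟨m, rfl⟩ : ∃ m, n = m + 4 := ⟨n - 4, by omega⟩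
  rw [hWr]
  have h3 : m + 4 - 1 = m + 3 := by omega
  rw [h3] at hker
  have e1 : (m + 3) * (m + 3) = m * m + 6 * m + 9 := by ring
  have e2 : (m + 4) ^ 2 = m * m + 8 * m + 16 := by ring
  rw [e1] at hker
  rw [e2]
  set q := m * m with hq
  omega

theorem dim_and_affineSpan_asymmetricTSP' (n : ℕ) [NeZero n] (hn : 4 ≤ n) :
    Module.finrank ℝ (vectorSpan ℝ (asymmetricTSP n)) = n ^ 2 - 3 * n + 1 ∧
    (affineSpan ℝ (asymmetricTSP n) : Set (Matrix (ZMod n) (ZMod n) ℝ)) =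
      {M | (∀ i, M i i = 0) ∧ (∀ i, ∑ j, M i j = 1) ∧ (∀ j, ∑ i, M i j = 1)} := by
  have h1 : affineSpan ℝ (asymmetricTSP n)
      = affineSpan ℝ (directedHamiltonianMatrices n) := by
    unfold asymmetricTSP
    exact affineSpan_convexHull (s := directedHamiltonianMatrices n)
  have hvs : vectorSpan ℝ (asymmetricTSP n)
      = vectorSpan ℝ (directedHamiltonianMatrices n) := by
    rw [← direction_affineSpan, h1, direction_affineSpan]
  have hWeq : vectorSpan ℝ (directedHamiltonianMatrices n) = Wmod n :=
    le_antisymm (vectorSpan_le_W hn) (W_le_vectorSpan hn)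
  constructor
  · rw [hvs, hWeq]
    exact finrank_W hn
  · ext M
    rw [SetLike.mem_coe, h1]
    have hC0span : tourM (1 : Equiv.Perm (ZMod n))
        ∈ affineSpan ℝ (directedHamiltonianMatrices n) :=
      subset_affineSpan ℝ _ (tour_mem_S 1)
    rw [← AffineSubspace.vsub_right_mem_direction_iff_mem hC0span M,
      direction_affineSpan, hWeq]
    show M -ᵥ tourM 1 ∈ Wmod n ↔ _
    rw [vsub_eq_sub]
    constructor
    · rintro ⟨hd, hr, hc⟩
      refine ⟨fun i => ?_, fun i => ?_, fun j => ?_⟩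
      · have := hd i
        rw [Matrix.sub_apply, tour_diag hn 1 i] at this
        linarith
      · have := hr i
        simp only [Matrix.sub_apply, Finset.sum_sub_distrib, tour_row] at this
        linarith
      · have := hc j
        simp only [Matrix.sub_apply, Finset.sum_sub_distrib, tour_col] at this
        linarith
    · rintro ⟨hd, hr, hc⟩
      refine ⟨fun i => ?_, fun i => ?_, fun j => ?_⟩
      · rw [Matrix.sub_apply, tour_diag hn 1 i, hd i]
        ring
      · simp only [Matrix.sub_apply, Finset.sum_sub_distrib, tour_row]
        rw [hr i]
        ring
      · simp only [Matrix.sub_apply, Finset.sum_sub_distrib, tour_col]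
        rw [hc j]
        ring


/-- For `n ≥ 4`, `AT_n` has dimension `n² - 3n + 1`, and its affine hull is
the set of `n × n` matrices with zero diagonal all of whose row and column sums equal `1`. -/
theorem dim_and_affineSpan_asymmetricTSP (n : ℕ) [NeZero n] (hn : 4 ≤ n) :
    Module.finrank ℝ (vectorSpan ℝ (asymmetricTSP n)) = n ^ 2 - 3 * n + 1 ∧
    (affineSpan ℝ (asymmetricTSP n) : Set (Matrix (ZMod n) (ZMod n) ℝ)) =
      {M | (∀ i, M i i = 0) ∧ (∀ i, ∑ j, M i j = 1) ∧ (∀ j, ∑ i, M i j = 1)} := by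
  exact dim_and_affineSpan_asymmetricTSP' n hn
end

section
/- Let G be a compact group acting by isometries on a finite-dimensional real inner product space V of dimension d, and let v ∈ V be such that the orbit {gv : g ∈ G} affinely spans V. If c ∈ V satisfies ∫_G ⟨c, gv⟩² dg ≤ 1/d, then ⟨c, gv⟩ ≤ 1 for all g ∈ G; i.e., c lies in the polar of the convex hull of the orbit. -/
open MeasureTheory
open scoped RealInnerProductSpace

private theorem key_inner_le_one
    {G V : Type*} [Group G] [TopologicalSpace G] [IsTopologicalGroup G] [CompactSpace G]
    [MeasurableSpace G] [BorelSpace G]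
    [NormedAddCommGroup V] [InnerProductSpace ℝ V] [FiniteDimensional ℝ V]
    (μ : Measure G) [μ.IsHaarMeasure] [IsProbabilityMeasure μ]
    (ρ : G →* (V ≃ₗᵢ[ℝ] V)) (hcont : ∀ w : V, Continuous fun g : G => ρ g w)
    (v : V)
    (c : V) (hc : ∫ g, ⟪c, ρ g v⟫ ^ 2 ∂μ ≤ 1 / (Module.finrank ℝ V)) :
    ⟪c, v⟫ ≤ 1 := by
  rcases Nat.eq_zero_or_pos (Module.finrank ℝ V) with hd0 | hdpos
  · have : Subsingleton V := Module.finrank_zero_iff.mp hd0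
    rw [Subsingleton.elim v 0, inner_zero_right]
    norm_num
  -- integrability helpers
  have hintV : ∀ x : V, Integrable (fun g => ⟪x, ρ g v⟫ • ρ g v) μ := by
    intro x
    exact ((continuous_const.inner (hcont v)).smul (hcont v)).integrable_of_hasCompactSupport
      (HasCompactSupport.of_compactSpace _)
  have hintR : ∀ x y : V, Integrable (fun g => ⟪x, ρ g v⟫ * ⟪y, ρ g v⟫) μ := by
    intro x y
    exact ((continuous_const.inner (hcont v)).mul (continuous_const.inner (hcont v))).integrable_of_hasCompactSupport
      (HasCompactSupport.of_compactSpace _)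
  -- the averaged operator
  set T : V →ₗ[ℝ] V :=
    { toFun := fun x => ∫ g, ⟪x, ρ g v⟫ • ρ g v ∂μ
      map_add' := by
        intro x y
        show (∫ g, ⟪x + y, ρ g v⟫ • ρ g v ∂μ)
          = (∫ g, ⟪x, ρ g v⟫ • ρ g v ∂μ) + ∫ g, ⟪y, ρ g v⟫ • ρ g v ∂μ
        rw [← integral_add (hintV x) (hintV y)]
        congr 1; funext g
        rw [inner_add_left, add_smul]
      map_smul' := by
        intro r x
        show (∫ g, ⟪r • x, ρ g v⟫ • ρ g v ∂μ) = r • ∫ g, ⟪x, ρ g v⟫ • ρ g v ∂μ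
        rw [← integral_smul]
        congr 1; funext g
        rw [real_inner_smul_left, smul_smul] } with hTdef
  have hTapp : ∀ x : V, T x = ∫ g, ⟪x, ρ g v⟫ • ρ g v ∂μ := fun x => rfl
  have hinner : ∀ x y : V, ⟪T x, y⟫ = ∫ g, ⟪x, ρ g v⟫ * ⟪y, ρ g v⟫ ∂μ := by
    intro x y
    rw [real_inner_comm, hTapp, ← integral_inner (hintV x) y]
    congr 1; funext g
    rw [real_inner_smul_right]
  have hsym : T.IsSymmetric := by
    intro x y
    rw [real_inner_comm (T y) x, hinner, hinner]
    congr 1; funext g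
    ring
  have hequi : ∀ (g₀ : G) (x : V), T (ρ g₀ x) = ρ g₀ (T x) := by
    intro g₀ x
    have h1 : T (ρ g₀ x) = ∫ g, ⟪ρ g₀ x, ρ (g₀ * g) v⟫ • ρ (g₀ * g) v ∂μ := by
      rw [hTapp]
      exact (integral_mul_left_eq_self (fun g => (⟪ρ g₀ x, ρ g v⟫ : ℝ) • ρ g v) g₀).symm
    have h2 : ∀ g : G, (⟪ρ g₀ x, ρ (g₀ * g) v⟫ : ℝ) • ρ (g₀ * g) v
        = ρ g₀ (⟪x, ρ g v⟫ • ρ g v) := by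
      intro g
      have hmul : ρ (g₀ * g) v = ρ g₀ (ρ g v) := by rw [map_mul]; rfl
      rw [hmul, (ρ g₀).inner_map_map]
      exact ((ρ g₀).toLinearIsometry.map_smul _ _).symm
    rw [h1]
    simp_rw [h2]
    have := ((ρ g₀).toLinearIsometry.toContinuousLinearMap).integral_comp_comm (hintV x)
    simpa [hTapp] using this
  -- eigenbasis of T
  have hn : Module.finrank ℝ V = Module.finrank ℝ V := rfl
  set n := Module.finrank ℝ V with hndef
  let b : OrthonormalBasis (Fin n) ℝ V := hsym.eigenvectorBasis rfl
  let lam : Fin n → ℝ := hsym.eigenvalues rfl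
  have hTb : ∀ i, T (b i) = lam i • b i := fun i =>
    hsym.apply_eigenvectorBasis rfl i
  have hbb : ∀ i, (⟪b i, b i⟫ : ℝ) = 1 := by
    intro i
    rw [real_inner_self_eq_norm_sq, b.orthonormal.1 i]
    norm_num
  have hlam_eq : ∀ i, lam i = ∫ g, ⟪b i, ρ g v⟫ * ⟪b i, ρ g v⟫ ∂μ := by
    intro i
    rw [← hinner (b i) (b i), hTb i, real_inner_smul_left, hbb i, mul_one]
  have hlam_nonneg : ∀ i, 0 ≤ lam i := by
    intro i
    rw [hlam_eq i]
    exact integral_nonneg fun g => mul_self_nonneg _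
  have hintsq : ∀ x : V, Integrable (fun g => (⟪x, ρ g v⟫ : ℝ) ^ 2) μ := fun x =>
    ((continuous_const.inner (hcont v)).pow 2).integrable_of_hasCompactSupport
      (HasCompactSupport.of_compactSpace _)
  have hlam_sq : ∀ i, ∫ g, (⟪b i, ρ g v⟫ : ℝ) ^ 2 ∂μ = lam i := by
    intro i
    rw [hlam_eq i]
    congr 1; funext g; rw [pow_two]
  have hn0 : ((n : ℝ)) ≠ 0 := Nat.cast_ne_zero.mpr hdpos.ne'
  -- main epsilon-perturbed estimate
  have main : ∀ ε : ℝ, 0 < ε → (⟪c, v⟫ : ℝ) ^ 2 ≤ 1 + ε * ((n : ℝ) * ‖c‖ ^ 2) := by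
    intro ε hε
    have hpos : ∀ i, 0 < lam i + ε := fun i => by linarith [hlam_nonneg i]
    set R : V → V := fun x => ∑ i, ((lam i + ε)⁻¹ * ⟪b i, x⟫) • b i with hRdef
    have hRapp : ∀ x : V, R x = ∑ i, ((lam i + ε)⁻¹ * ⟪b i, x⟫) • b i := fun x => rfl
    have hbT : ∀ (i) (x : V), (⟪b i, T x⟫ : ℝ) = lam i * ⟪b i, x⟫ := by
      intro i x
      rw [← hsym (b i) x, hTb i, real_inner_smul_left]
    have hRT : ∀ x : V, R (T x + ε • x) = x := by
      intro x
      rw [hRapp]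
      have hco : ∀ i : Fin n, ((lam i + ε)⁻¹ * ⟪b i, T x + ε • x⟫) • b i
          = (⟪b i, x⟫ : ℝ) • b i := by
        intro i
        congr 1
        rw [inner_add_right, real_inner_smul_right, hbT]
        have hne : lam i + ε ≠ 0 := (hpos i).ne'
        field_simp
      calc (∑ i, ((lam i + ε)⁻¹ * ⟪b i, T x + ε • x⟫) • b i)
          = ∑ i, (⟪b i, x⟫ : ℝ) • b i := Finset.sum_congr rfl fun i _ => hco i
        _ = x := b.sum_repr' x
    have hTR : ∀ x : V, T (R x) + ε • R x = x := by
      intro x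
      have h1 : T (R x) = ∑ i, ((lam i + ε)⁻¹ * ⟪b i, x⟫ * lam i) • b i := by
        rw [hRapp, map_sum]
        refine Finset.sum_congr rfl fun i _ => ?_
        rw [LinearMap.map_smul, hTb i, smul_smul]
      have h2 : ε • R x = ∑ i, (ε * ((lam i + ε)⁻¹ * ⟪b i, x⟫)) • b i := by
        rw [hRapp, Finset.smul_sum]
        exact Finset.sum_congr rfl fun i _ => smul_smul ..
      rw [h1, h2, ← Finset.sum_add_distrib]
      have hco : ∀ i : Fin n, ((lam i + ε)⁻¹ * ⟪b i, x⟫ * lam i) • b i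
          + (ε * ((lam i + ε)⁻¹ * ⟪b i, x⟫)) • b i = (⟪b i, x⟫ : ℝ) • b i := by
        intro i
        rw [← add_smul]
        congr 1
        have hne : lam i + ε ≠ 0 := (hpos i).ne'
        field_simp
      calc (∑ i, (((lam i + ε)⁻¹ * ⟪b i, x⟫ * lam i) • b i
              + (ε * ((lam i + ε)⁻¹ * ⟪b i, x⟫)) • b i))
          = ∑ i, (⟪b i, x⟫ : ℝ) • b i := Finset.sum_congr rfl fun i _ => hco i
        _ = x := b.sum_repr' x
    have hRequi : ∀ (g : G) (x : V), R (ρ g x) = ρ g (R x) := by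
      intro g x
      conv_lhs => rw [← hTR x]
      rw [map_add]
      have hsm : (ρ g) (ε • R x) = ε • (ρ g) (R x) :=
        (ρ g).toLinearIsometry.map_smul ε (R x)
      rw [hsm, ← hequi g (R x)]
      exact hRT (ρ g (R x))
    have hRval : ∀ x : V, (⟪R x, x⟫ : ℝ) = ∑ i, (lam i + ε)⁻¹ * ⟪b i, x⟫ ^ 2 := by
      intro x
      rw [hRapp, sum_inner]
      refine Finset.sum_congr rfl fun i _ => ?_
      rw [real_inner_smul_left]
      ring
    have hconst : ∀ g : G, (⟪R (ρ g v), ρ g v⟫ : ℝ) = ⟪R v, v⟫ := by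
      intro g
      rw [hRequi g v]
      exact (ρ g).inner_map_map _ _
    have h1 : (⟪R v, v⟫ : ℝ) = ∫ g, ∑ i, (lam i + ε)⁻¹ * (⟪b i, ρ g v⟫ : ℝ) ^ 2 ∂μ := by
      have heq : (fun g : G => ∑ i, (lam i + ε)⁻¹ * (⟪b i, ρ g v⟫ : ℝ) ^ 2)
          = fun _ : G => (⟪R v, v⟫ : ℝ) := by
        funext g
        rw [← hRval (ρ g v), hconst g]
      rw [heq, integral_const, probReal_univ]
      simp
    have h2 : ∫ g, ∑ i, (lam i + ε)⁻¹ * (⟪b i, ρ g v⟫ : ℝ) ^ 2 ∂μ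
        = ∑ i, (lam i + ε)⁻¹ * lam i := by
      rw [integral_finset_sum _ (fun i _ => (hintsq (b i)).const_mul _)]
      refine Finset.sum_congr rfl fun i _ => ?_
      rw [integral_const_mul, hlam_sq i]
    have h3 : (∑ i, (lam i + ε)⁻¹ * lam i) ≤ (n : ℝ) := by
      calc (∑ i, (lam i + ε)⁻¹ * lam i) ≤ ∑ _i : Fin n, (1 : ℝ) := by
            refine Finset.sum_le_sum fun i _ => ?_
            rw [← inv_mul_cancel₀ (hpos i).ne']
            exact mul_le_mul_of_nonneg_left (by linarith) (inv_nonneg.mpr (hpos i).le)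
        _ = (n : ℝ) := by simp
    have hsum_le : (∑ i, (lam i + ε)⁻¹ * (⟪b i, v⟫ : ℝ) ^ 2) ≤ (n : ℝ) := by
      calc (∑ i, (lam i + ε)⁻¹ * (⟪b i, v⟫ : ℝ) ^ 2) = ⟪R v, v⟫ := (hRval v).symm
        _ = ∑ i, (lam i + ε)⁻¹ * lam i := by rw [h1, h2]
        _ ≤ (n : ℝ) := h3
    have hcv : (⟪c, v⟫ : ℝ) = ∑ i, (⟪b i, c⟫ : ℝ) * ⟪b i, v⟫ := by
      rw [← b.sum_inner_mul_inner c v]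
      exact Finset.sum_congr rfl fun i _ => by rw [real_inner_comm (b i) c]
    have hcc : ‖c‖ ^ 2 = ∑ i, (⟪b i, c⟫ : ℝ) ^ 2 := by
      rw [← real_inner_self_eq_norm_sq, ← b.sum_inner_mul_inner c c]
      exact Finset.sum_congr rfl fun i _ => by
        rw [real_inner_comm (b i) c, pow_two]
    have hTc : T c = ∑ i, (lam i * ⟪b i, c⟫) • b i := by
      conv_lhs => rw [← b.sum_repr' c]
      rw [map_sum]
      refine Finset.sum_congr rfl fun i _ => ?_
      rw [LinearMap.map_smul, hTb i, smul_smul, mul_comm]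
    have hTcc : (∑ i, lam i * (⟪b i, c⟫ : ℝ) ^ 2) = ∫ g, ⟪c, ρ g v⟫ ^ 2 ∂μ := by
      have e1 : (⟪T c, c⟫ : ℝ) = ∫ g, ⟪c, ρ g v⟫ ^ 2 ∂μ := by
        rw [hinner c c]
        congr 1; funext g; rw [pow_two]
      rw [← e1, hTc, sum_inner]
      refine Finset.sum_congr rfl fun i _ => ?_
      rw [real_inner_smul_left]
      ring
    have hCS : (⟪c, v⟫ : ℝ) ^ 2
        ≤ (∑ i, (lam i + ε) * (⟪b i, c⟫ : ℝ) ^ 2) * ∑ i, (lam i + ε)⁻¹ * (⟪b i, v⟫ : ℝ) ^ 2 := by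
      rw [hcv]
      have h0 := Finset.sum_mul_sq_le_sq_mul_sq Finset.univ
        (fun i => Real.sqrt (lam i + ε) * ⟪b i, c⟫)
        (fun i => (Real.sqrt (lam i + ε))⁻¹ * ⟪b i, v⟫)
      have hsne : ∀ i : Fin n, Real.sqrt (lam i + ε) ≠ 0 :=
        fun i => (Real.sqrt_pos.mpr (hpos i)).ne'
      have e1 : ∀ i : Fin n, (Real.sqrt (lam i + ε) * ⟪b i, c⟫)
          * ((Real.sqrt (lam i + ε))⁻¹ * ⟪b i, v⟫) = (⟪b i, c⟫ : ℝ) * ⟪b i, v⟫ := by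
        intro i
        rw [mul_mul_mul_comm, mul_inv_cancel₀ (hsne i), one_mul]
      have e2 : ∀ i : Fin n, (Real.sqrt (lam i + ε) * ⟪b i, c⟫) ^ 2
          = (lam i + ε) * (⟪b i, c⟫ : ℝ) ^ 2 := by
        intro i
        rw [mul_pow, Real.sq_sqrt (hpos i).le]
      have e3 : ∀ i : Fin n, ((Real.sqrt (lam i + ε))⁻¹ * ⟪b i, v⟫) ^ 2
          = (lam i + ε)⁻¹ * (⟪b i, v⟫ : ℝ) ^ 2 := by
        intro i
        rw [mul_pow, inv_pow, Real.sq_sqrt (hpos i).le]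
      calc (∑ i, (⟪b i, c⟫ : ℝ) * ⟪b i, v⟫) ^ 2
          = (∑ i, (Real.sqrt (lam i + ε) * ⟪b i, c⟫)
              * ((Real.sqrt (lam i + ε))⁻¹ * ⟪b i, v⟫)) ^ 2 := by
            rw [Finset.sum_congr rfl fun i _ => e1 i]
        _ ≤ (∑ i, (Real.sqrt (lam i + ε) * ⟪b i, c⟫) ^ 2)
              * ∑ i, ((Real.sqrt (lam i + ε))⁻¹ * ⟪b i, v⟫) ^ 2 := h0
        _ = _ := by
            congr 1
            · exact Finset.sum_congr rfl fun i _ => e2 i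
            · exact Finset.sum_congr rfl fun i _ => e3 i
    have hfac1 : (∑ i, (lam i + ε) * (⟪b i, c⟫ : ℝ) ^ 2) ≤ 1 / (n : ℝ) + ε * ‖c‖ ^ 2 := by
      have hsplit : (∑ i, (lam i + ε) * (⟪b i, c⟫ : ℝ) ^ 2)
          = (∑ i, lam i * (⟪b i, c⟫ : ℝ) ^ 2) + ε * ∑ i, (⟪b i, c⟫ : ℝ) ^ 2 := by
        rw [Finset.mul_sum, ← Finset.sum_add_distrib]
        exact Finset.sum_congr rfl fun i _ => by ring
      rw [hsplit, hTcc, ← hcc]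
      exact add_le_add hc le_rfl
    have hfac2_nonneg : 0 ≤ ∑ i, (lam i + ε)⁻¹ * (⟪b i, v⟫ : ℝ) ^ 2 :=
      Finset.sum_nonneg fun i _ => mul_nonneg (inv_nonneg.mpr (hpos i).le) (sq_nonneg _)
    calc (⟪c, v⟫ : ℝ) ^ 2
        ≤ (∑ i, (lam i + ε) * (⟪b i, c⟫ : ℝ) ^ 2)
            * ∑ i, (lam i + ε)⁻¹ * (⟪b i, v⟫ : ℝ) ^ 2 := hCS
      _ ≤ (1 / (n : ℝ) + ε * ‖c‖ ^ 2) * (n : ℝ) := by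
          apply mul_le_mul hfac1 hsum_le hfac2_nonneg
          positivity
      _ = 1 + ε * ((n : ℝ) * ‖c‖ ^ 2) := by
          rw [add_mul, one_div, inv_mul_cancel₀ hn0]
          ring
  -- conclude
  have hK0 : (0 : ℝ) ≤ (n : ℝ) * ‖c‖ ^ 2 := by positivity
  have hsq : (⟪c, v⟫ : ℝ) ^ 2 ≤ 1 := by
    by_contra hlt
    push_neg at hlt
    have hS : (0 : ℝ) < ⟪c, v⟫ ^ 2 - 1 := by linarith
    have hden : (0 : ℝ) < (n : ℝ) * ‖c‖ ^ 2 + 1 := by linarith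
    have hεpos : 0 < ((⟪c, v⟫ : ℝ) ^ 2 - 1) / ((n : ℝ) * ‖c‖ ^ 2 + 1) := div_pos hS hden
    have h := main _ hεpos
    rw [div_mul_eq_mul_div] at h
    have hlt2 : ((⟪c, v⟫ : ℝ) ^ 2 - 1) * ((n : ℝ) * ‖c‖ ^ 2) / ((n : ℝ) * ‖c‖ ^ 2 + 1)
        < (⟪c, v⟫ : ℝ) ^ 2 - 1 := by
      rw [div_lt_iff₀ hden]
      nlinarith [hS, hK0]
    linarith
  exact le_of_abs_le ((sq_le_one_iff_abs_le_one _).mp hsq)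

/-- Let a compact group `G` act by isometries on a `d`-dimensional real inner
product space `V`, and let `v ∈ V` be such that the orbit `{gv}` affinely spans `V`.  If
`∫_G ⟪c, gv⟫² dg ≤ 1/d`, then `⟪c, gv⟫ ≤ 1` for all `g ∈ G`, i.e. `c` lies in the polar of the
convex hull of the orbit. -/
theorem mem_polar_of_integral_inner_sq_le
    {G V : Type*} [Group G] [TopologicalSpace G] [IsTopologicalGroup G] [CompactSpace G]
    [MeasurableSpace G] [BorelSpace G]
    [NormedAddCommGroup V] [InnerProductSpace ℝ V] [FiniteDimensional ℝ V]
    (μ : Measure G) [μ.IsHaarMeasure] [IsProbabilityMeasure μ]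
    (ρ : G →* (V ≃ₗᵢ[ℝ] V)) (hcont : ∀ w : V, Continuous fun g : G => ρ g w)
    (v : V) (hspan : affineSpan ℝ (Set.range fun g : G => ρ g v) = ⊤)
    (c : V) (hc : ∫ g, ⟪c, ρ g v⟫ ^ 2 ∂μ ≤ 1 / (Module.finrank ℝ V)) :
    ∀ g : G, ⟪c, ρ g v⟫ ≤ 1 := by
  intro g
  have hgid : ρ g (ρ g⁻¹ c) = c := by
    have : ρ g (ρ g⁻¹ c) = (ρ g * ρ g⁻¹) c := rfl
    rw [this, ← map_mul, mul_inv_cancel, map_one]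
    rfl
  have h1 : ⟪c, ρ g v⟫ = ⟪ρ g⁻¹ c, v⟫ := by
    conv_lhs => rw [← hgid]
    exact (ρ g).inner_map_map _ _
  have h2 : ∫ g', ⟪ρ g⁻¹ c, ρ g' v⟫ ^ 2 ∂μ ≤ 1 / (Module.finrank ℝ V) := by
    have heq : (fun g' => (⟪ρ g⁻¹ c, ρ g' v⟫ : ℝ) ^ 2) = fun g' => ⟪c, ρ (g * g') v⟫ ^ 2 := by
      funext g'
      congr 1
      have : ρ (g * g') v = ρ g (ρ g' v) := by rw [map_mul]; rfl
      rw [this]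
      conv_rhs => rw [← hgid]
      rw [(ρ g).inner_map_map]
    rw [heq]
    rw [integral_mul_left_eq_self (fun g' => (⟪c, ρ g' v⟫ : ℝ) ^ 2) g]
    exact hc
  rw [h1]
  exact key_inner_le_one μ ρ hcont v (ρ g⁻¹ c) h2
end

section
/- Let G be a compact group acting by isometries on a d-dimensional real inner product space V, and v ∈ V with orbit affinely spanning V. If c ∈ V satisfies ⟨c, gv⟩ ≤ 1 for all g ∈ G, then ∫_G ⟨c, gv⟩² dg ≤ d; that is, the polar of the convex hull of the orbit is contained in d times the ellipsoid {c : ∫_G ⟨c, gv⟩² dg ≤ 1/d}. -/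
set_option linter.unusedSectionVars false
open MeasureTheory
open scoped RealInnerProductSpace

namespace Stmt9

variable {G V : Type*} [Group G] [TopologicalSpace G] [IsTopologicalGroup G] [CompactSpace G]
    [MeasurableSpace G] [BorelSpace G]
    [NormedAddCommGroup V] [InnerProductSpace ℝ V] [FiniteDimensional ℝ V]

lemma integrable_cont {E : Type*} [NormedAddCommGroup E] (μ : Measure G) [IsFiniteMeasure μ]
    {f : G → E} (hf : Continuous f) : Integrable f μ :=
  hf.integrable_of_hasCompactSupport (HasCompactSupport.of_compactSpace f)

variable (μ : Measure G) [μ.IsHaarMeasure] [IsProbabilityMeasure μ]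
    (ρ : G →* (V ≃ₗᵢ[ℝ] V)) (v : V)

noncomputable def T (hcont : ∀ w : V, Continuous fun g : G => ρ g w) : V →ₗ[ℝ] V where
  toFun w := ∫ g, ⟪w, ρ g v⟫ • (ρ g v : V) ∂μ
  map_add' w w' := by
    simp_rw [inner_add_left, add_smul]
    exact integral_add
      (integrable_cont μ ((continuous_const.inner (hcont v)).smul (hcont v)))
      (integrable_cont μ ((continuous_const.inner (hcont v)).smul (hcont v)))
  map_smul' a w := by
    simp_rw [real_inner_smul_left, mul_smul, RingHom.id_apply]
    exact integral_smul a _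

variable (hcont : ∀ w : V, Continuous fun g : G => ρ g w)

lemma inner_T (w w' : V) :
    ⟪w', T μ ρ v hcont w⟫ = ∫ g, ⟪w, ρ g v⟫ * ⟪w', ρ g v⟫ ∂μ := by
  have hint : Integrable (fun g => ⟪w, ρ g v⟫ • (ρ g v : V)) μ :=
    integrable_cont μ ((continuous_const.inner (hcont v)).smul (hcont v))
  have := (integral_inner (𝕜 := ℝ) hint w').symm
  simp only [T, LinearMap.coe_mk, AddHom.coe_mk]
  rw [this]
  refine integral_congr_ae (Filter.Eventually.of_forall fun g => ?_)
  simp only [real_inner_smul_right]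

lemma T_symm (w w' : V) : ⟪T μ ρ v hcont w, w'⟫ = ⟪w, T μ ρ v hcont w'⟫ := by
  rw [real_inner_comm, inner_T, inner_T]
  simp_rw [mul_comm]

lemma T_comm (h : G) (w : V) :
    T μ ρ v hcont (ρ h w) = ρ h (T μ ρ v hcont w) := by
  have hint : Integrable (fun g => ⟪w, ρ g v⟫ • (ρ g v : V)) μ :=
    integrable_cont μ ((continuous_const.inner (hcont v)).smul (hcont v))
  have key : ∀ g : G, ⟪ρ h w, ρ (h*g) v⟫ • (ρ (h*g) v : V)
      = (ρ h).toLinearIsometry.toContinuousLinearMap (⟪w, ρ g v⟫ • (ρ g v : V)) := by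
    intro g
    simp [map_mul, LinearIsometryEquiv.inner_map_map, mul_smul]
  show ∫ g, ⟪ρ h w, ρ g v⟫ • (ρ g v : V) ∂μ = _
  calc ∫ g, ⟪ρ h w, ρ g v⟫ • (ρ g v : V) ∂μ
      = ∫ g, ⟪ρ h w, ρ (h*g) v⟫ • (ρ (h*g) v : V) ∂μ :=
        (integral_mul_left_eq_self (fun g => ⟪ρ h w, ρ g v⟫ • (ρ g v : V)) h).symm
    _ = ∫ g, (ρ h).toLinearIsometry.toContinuousLinearMap (⟪w, ρ g v⟫ • (ρ g v : V)) ∂μ := by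
        simp_rw [key]
    _ = ρ h (T μ ρ v hcont w) := by
        rw [ContinuousLinearMap.integral_comp_comm _ hint]; rfl

lemma span_top (hspan : affineSpan ℝ (Set.range fun g : G => ρ g v) = ⊤) :
    Submodule.span ℝ (Set.range fun g : G => ρ g v) = ⊤ := by
  rw [eq_top_iff]
  intro x _
  have hx : x ∈ affineSpan ℝ (Set.range fun g : G => ρ g v) := by
    rw [hspan]; exact AffineSubspace.mem_top ℝ V x
  exact affineSpan_subset_span hx

lemma T_inj (hspan : affineSpan ℝ (Set.range fun g : G => ρ g v) = ⊤) :
    Function.Injective (T μ ρ v hcont) := by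
  have hker : ∀ w, T μ ρ v hcont w = 0 → w = 0 := by
    intro w hw
    have h0 : ∫ g, ⟪w, ρ g v⟫ * ⟪w, ρ g v⟫ ∂μ = 0 := by
      rw [← inner_T μ ρ v hcont w w, hw, inner_zero_right]
    have hintc : Continuous fun g : G => ⟪w, ρ g v⟫ * ⟪w, ρ g v⟫ :=
      (continuous_const.inner (hcont v)).mul (continuous_const.inner (hcont v))
    have hae : (fun g => ⟪w, ρ g v⟫ * ⟪w, ρ g v⟫) =ᵐ[μ] 0 :=
      (integral_eq_zero_iff_of_nonneg (fun g => mul_self_nonneg _)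
        (integrable_cont μ hintc)).mp h0
    have heq : (fun g : G => ⟪w, ρ g v⟫ * ⟪w, ρ g v⟫) = 0 :=
      (Continuous.ae_eq_iff_eq μ hintc continuous_const).mp hae
    have hzero : ∀ g : G, ⟪w, ρ g v⟫ = 0 := by
      intro g
      have := congrFun heq g
      simpa [mul_self_eq_zero] using this
    have horth : ∀ x ∈ Submodule.span ℝ (Set.range fun g : G => ρ g v), ⟪w, x⟫ = 0 := by
      intro x hx
      induction hx using Submodule.span_induction with
      | mem x hxs => obtain ⟨g, rfl⟩ := hxs; exact hzero g
      | zero => exact inner_zero_right w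
      | add x y hx hy hpx hpy => rw [inner_add_right, hpx, hpy, add_zero]
      | smul a x hx hpx => rw [real_inner_smul_right, hpx, mul_zero]
    have hww : ⟪w, w⟫ = 0 := horth w (by rw [span_top ρ v hspan]; trivial)
    exact inner_self_eq_zero.mp hww
  intro a b hab
  have := hker (a - b) (by rw [map_sub, hab, sub_self])
  exact sub_eq_zero.mp this

noncomputable def Teq (hspan : affineSpan ℝ (Set.range fun g : G => ρ g v) = ⊤) :
    V ≃ₗ[ℝ] V :=
  LinearEquiv.ofBijective (T μ ρ v hcont)
    ⟨T_inj μ ρ v hcont hspan,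
     (LinearMap.injective_iff_surjective).mp (T_inj μ ρ v hcont hspan)⟩

variable (hspan : affineSpan ℝ (Set.range fun g : G => ρ g v) = ⊤)

noncomputable def B : V →ₗ[ℝ] V := (Teq μ ρ v hcont hspan).symm.toLinearMap

lemma TB (x : V) : T μ ρ v hcont (B μ ρ v hcont hspan x) = x :=
  (Teq μ ρ v hcont hspan).apply_symm_apply x

lemma BT (x : V) : B μ ρ v hcont hspan (T μ ρ v hcont x) = x :=
  (Teq μ ρ v hcont hspan).symm_apply_apply x

lemma B_comm (h : G) (x : V) :
    ρ h (B μ ρ v hcont hspan x) = B μ ρ v hcont hspan (ρ h x) := by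
  apply T_inj μ ρ v hcont hspan
  rw [T_comm, TB, TB]

lemma B_symm (x y : V) :
    ⟪B μ ρ v hcont hspan x, y⟫ = ⟪x, B μ ρ v hcont hspan y⟫ := by
  conv_lhs => rw [← TB μ ρ v hcont hspan y]
  rw [← T_symm, TB]

lemma n_const (g : G) :
    ⟪ρ g v, B μ ρ v hcont hspan (ρ g v)⟫ = ⟪v, B μ ρ v hcont hspan v⟫ := by
  rw [← B_comm, LinearIsometryEquiv.inner_map_map]

lemma inner_B_v : ⟪v, B μ ρ v hcont hspan v⟫ = (Module.finrank ℝ V : ℝ) := by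
  classical
  set b := stdOrthonormalBasis ℝ V with hb
  set Bm := B μ ρ v hcont hspan with hBm
  have hbii : ∀ i, ⟪b i, b i⟫ = (1 : ℝ) := by
    intro i
    have := b.orthonormal
    rw [orthonormal_iff_ite] at this
    simpa using this i i
  have hsum : ∀ g : G, ∑ i, ⟪b i, ρ g v⟫ * ⟪Bm (b i), ρ g v⟫ = ⟪ρ g v, Bm (ρ g v)⟫ := by
    intro g
    rw [← b.sum_inner_mul_inner (ρ g v) (Bm (ρ g v))]
    refine Finset.sum_congr rfl fun i _ => ?_
    rw [real_inner_comm (b i) (ρ g v) ]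
    congr 1
    rw [B_symm]
  have h2 : ∀ i, (1:ℝ) = ∫ g, ⟪b i, ρ g v⟫ * ⟪Bm (b i), ρ g v⟫ ∂μ := by
    intro i
    rw [← inner_T μ ρ v hcont (b i) (Bm (b i)), real_inner_comm,
      T_symm, TB, hbii]
  have key : (Module.finrank ℝ V : ℝ) = ∫ g, ⟪ρ g v, Bm (ρ g v)⟫ ∂μ := by
    calc (Module.finrank ℝ V : ℝ) = ∑ _i : Fin (Module.finrank ℝ V), (1:ℝ) := by simp
      _ = ∑ i, ∫ g, ⟪b i, ρ g v⟫ * ⟪Bm (b i), ρ g v⟫ ∂μ :=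
          Finset.sum_congr rfl fun i _ => h2 i
      _ = ∫ g, ∑ i, ⟪b i, ρ g v⟫ * ⟪Bm (b i), ρ g v⟫ ∂μ := by
          refine (integral_finset_sum _ fun i _ => ?_).symm
          exact integrable_cont μ
            ((continuous_const.inner (hcont v)).mul (continuous_const.inner (hcont v)))
      _ = ∫ g, ⟪ρ g v, Bm (ρ g v)⟫ ∂μ := by simp_rw [hsum]
  have hconstv : ∀ g : G, ⟪ρ g v, Bm (ρ g v)⟫ = ⟪v, Bm v⟫ := fun g => n_const μ ρ v hcont hspan g
  rw [key]
  simp_rw [hconstv]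
  simp

lemma cs {u w : G → ℝ} (hu : Continuous u) (hw : Continuous w) :
    (∫ g, u g * w g ∂μ) ^ 2 ≤ (∫ g, u g * u g ∂μ) * (∫ g, w g * w g ∂μ) := by
  have hiuu : Integrable (fun g => u g * u g) μ := integrable_cont μ (hu.mul hu)
  have hiuw : Integrable (fun g => u g * w g) μ := integrable_cont μ (hu.mul hw)
  have hiww : Integrable (fun g => w g * w g) μ := integrable_cont μ (hw.mul hw)
  have key : ∀ t : ℝ, 0 ≤ (∫ g, u g * u g ∂μ) * (t * t)
      + (2 * ∫ g, u g * w g ∂μ) * t + (∫ g, w g * w g ∂μ) := by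
    intro t
    have h1 : (0:ℝ) ≤ ∫ g, (t * u g + w g) ^ 2 ∂μ := integral_nonneg fun g => sq_nonneg _
    have e : (fun g => (t * u g + w g) ^ 2)
        = fun g => (t * t) * (u g * u g) + ((2 * t) * (u g * w g) + w g * w g) := by
      funext g; ring
    have h2 : ∫ g, (t * u g + w g) ^ 2 ∂μ = (∫ g, u g * u g ∂μ) * (t * t)
        + (2 * ∫ g, u g * w g ∂μ) * t + (∫ g, w g * w g ∂μ) := by
      rw [e, integral_add (hiuu.const_mul (t*t))
          ((by exact (hiuw.const_mul (2*t)).add hiww :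
            Integrable (fun g => (2*t) * (u g * w g) + w g * w g) μ)),
        integral_add (hiuw.const_mul (2*t)) hiww, integral_const_mul, integral_const_mul]
      ring
    rw [h2] at h1
    exact h1
  have hdisc := discrim_le_zero key
  rw [discrim] at hdisc
  nlinarith [hdisc]

include hcont hspan in
lemma bary_zero : ∫ g, (ρ g v : V) ∂μ = 0 := by
  have hint : Integrable (fun g => (ρ g v : V)) μ := integrable_cont μ (hcont v)
  set bb := ∫ g, (ρ g v : V) ∂μ with hbb
  have hfix : ∀ h : G, ρ h bb = bb := by
    intro h
    have h1 : ρ h bb = ∫ g, (ρ h).toLinearIsometry.toContinuousLinearMap (ρ g v) ∂μ := by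
      rw [show ((ρ h) bb) = (ρ h).toLinearIsometry.toContinuousLinearMap bb from rfl]
      exact (ContinuousLinearMap.integral_comp_comm _ hint).symm
    rw [h1]
    calc ∫ g, (ρ h).toLinearIsometry.toContinuousLinearMap (ρ g v) ∂μ
        = ∫ g, (ρ (h * g) v : V) ∂μ := by
          refine integral_congr_ae (Filter.Eventually.of_forall fun g => ?_)
          simp [map_mul]
      _ = bb := integral_mul_left_eq_self (fun g => (ρ g v : V)) h
  have hconst : ∀ g : G, ⟪ρ g v, bb⟫ = ⟪v, bb⟫ := by
    intro g
    conv_lhs => rw [← hfix g]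
    rw [LinearIsometryEquiv.inner_map_map]
  have hall : ∀ x : V, ⟪x, bb⟫ = ⟪v, bb⟫ := by
    intro x
    have hx : x ∈ affineSpan ℝ (Set.range fun g : G => ρ g v) := by
      rw [hspan]; exact AffineSubspace.mem_top ℝ V x
    refine affineSpan_induction (p := fun y => ⟪y, bb⟫ = ⟪v, bb⟫) hx ?_ ?_
    · rintro y ⟨g, rfl⟩; exact hconst g
    · intro a u₁ u₂ u₃ h1 h2 h3
      simp only [vsub_eq_sub, vadd_eq_add, inner_add_left, inner_sub_left,
        real_inner_smul_left, h1, h2, h3]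
      ring
  have hzero : ⟪bb, bb⟫ = 0 := by
    have h1 := hall (v + bb)
    rw [inner_add_left] at h1
    linarith
  exact inner_self_eq_zero.mp hzero

end Stmt9

/-- Let a compact group `G` act by isometries on a `d`-dimensional real inner
product space `V`, with the orbit of `v` affinely spanning `V`.  If `c` lies in the polar of
the convex hull of the orbit, i.e. `⟪c, gv⟫ ≤ 1` for all `g ∈ G`, then
`∫_G ⟪c, gv⟫² dg ≤ d`. -/
theorem integral_inner_sq_le_dim_of_mem_polar
    {G V : Type*} [Group G] [TopologicalSpace G] [IsTopologicalGroup G] [CompactSpace G]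
    [MeasurableSpace G] [BorelSpace G]
    [NormedAddCommGroup V] [InnerProductSpace ℝ V] [FiniteDimensional ℝ V]
    (μ : Measure G) [μ.IsHaarMeasure] [IsProbabilityMeasure μ]
    (ρ : G →* (V ≃ₗᵢ[ℝ] V)) (hcont : ∀ w : V, Continuous fun g : G => ρ g w)
    (v : V) (hspan : affineSpan ℝ (Set.range fun g : G => ρ g v) = ⊤)
    (c : V) (hc : ∀ g : G, ⟪c, ρ g v⟫ ≤ 1) :
    ∫ g, ⟪c, ρ g v⟫ ^ 2 ∂μ ≤ (Module.finrank ℝ V : ℝ) := by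
  classical
  have hcc : Continuous fun g : G => ⟪c, ρ g v⟫ := continuous_const.inner (hcont v)
  have hQ0 : (0:ℝ) ≤ ∫ g, ⟪c, ρ g v⟫ ^ 2 ∂μ := integral_nonneg fun g => sq_nonneg _
  set Q : ℝ := ∫ g, ⟪c, ρ g v⟫ ^ 2 ∂μ with hQ
  set d : ℝ := (Module.finrank ℝ V : ℝ) with hd
  have hd0 : (0:ℝ) ≤ d := Nat.cast_nonneg _
  have hww : ∫ g, ⟪c, ρ g v⟫ * ⟪c, ρ g v⟫ ∂μ = Q := by
    rw [hQ]
    exact integral_congr_ae (Filter.Eventually.of_forall fun g => (sq ⟪c, ρ g v⟫).symm)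
  -- pointwise Cauchy–Schwarz bound
  have hptsq : ∀ g : G, ⟪c, ρ g v⟫ ^ 2 ≤ Q * d := by
    intro g
    set Bg : V := Stmt9.B μ ρ v hcont hspan (ρ g v) with hBg
    have hBc : Continuous fun h : G => ⟪Bg, ρ h v⟫ := continuous_const.inner (hcont v)
    have hval : ⟪c, ρ g v⟫ = ∫ h, ⟪Bg, ρ h v⟫ * ⟪c, ρ h v⟫ ∂μ := by
      rw [← Stmt9.inner_T μ ρ v hcont Bg c, hBg, Stmt9.TB, real_inner_comm]
    have hCS := Stmt9.cs μ hBc hcc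
    have huu : ∫ h, ⟪Bg, ρ h v⟫ * ⟪Bg, ρ h v⟫ ∂μ = d := by
      rw [← Stmt9.inner_T μ ρ v hcont Bg Bg]
      conv_lhs => rw [hBg, Stmt9.TB]
      rw [← hBg, real_inner_comm, hBg, Stmt9.n_const, Stmt9.inner_B_v]
    calc ⟪c, ρ g v⟫ ^ 2 = (∫ h, ⟪Bg, ρ h v⟫ * ⟪c, ρ h v⟫ ∂μ) ^ 2 := by rw [← hval]
      _ ≤ (∫ h, ⟪Bg, ρ h v⟫ * ⟪Bg, ρ h v⟫ ∂μ) * (∫ h, ⟪c, ρ h v⟫ * ⟪c, ρ h v⟫ ∂μ) := hCS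
      _ = Q * d := by rw [huu, hww]; ring
  -- the mean of the linear functional vanishes
  have hmean : ∫ g, ⟪c, ρ g v⟫ ∂μ = 0 := by
    rw [integral_inner (𝕜 := ℝ) (Stmt9.integrable_cont μ (hcont v)) c,
      Stmt9.bary_zero μ ρ v hcont hspan, inner_zero_right]
  set α : ℝ := Real.sqrt (Q * d) with hα
  have hα0 : (0:ℝ) ≤ α := Real.sqrt_nonneg _
  have hαsq : α ^ 2 = Q * d := Real.sq_sqrt (mul_nonneg hQ0 hd0)
  have hlow : ∀ g : G, -α ≤ ⟪c, ρ g v⟫ := by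
    intro g
    exact (abs_le_of_sq_le_sq' (by rw [hαsq]; exact hptsq g) hα0).1
  have hpt : ∀ g : G, ⟪c, ρ g v⟫ ^ 2 ≤ ⟪c, ρ g v⟫ + α * (1 - ⟪c, ρ g v⟫) := by
    intro g
    have h1 := hc g
    have h2 := hlow g
    nlinarith [mul_nonneg (by linarith : (0:ℝ) ≤ ⟪c, ρ g v⟫ + α)
      (by linarith : (0:ℝ) ≤ 1 - ⟪c, ρ g v⟫)]
  have hint1 : Integrable (fun g : G => ⟪c, ρ g v⟫) μ := Stmt9.integrable_cont μ hcc
  have hQα : Q ≤ α := by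
    have hrhs : Integrable (fun g : G => ⟪c, ρ g v⟫ + α * (1 - ⟪c, ρ g v⟫)) μ :=
      Stmt9.integrable_cont μ (by fun_prop)
    have hmono := integral_mono (μ := μ)
      (Stmt9.integrable_cont μ (by fun_prop : Continuous fun g : G => ⟪c, ρ g v⟫ ^ 2))
      hrhs hpt
    have hre : ∫ g, (⟪c, ρ g v⟫ + α * (1 - ⟪c, ρ g v⟫)) ∂μ = α := by
      have e : (fun g : G => ⟪c, ρ g v⟫ + α * (1 - ⟪c, ρ g v⟫))
          = fun g : G => (1 - α) * ⟪c, ρ g v⟫ + α := by funext g; ring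
      rw [e, integral_add (hint1.const_mul (1 - α)) (integrable_const α),
        integral_const_mul, hmean, integral_const]
      simp
    rw [← hQ] at hmono
    rw [hre] at hmono
    exact hmono
  rcases eq_or_lt_of_le hQ0 with h0 | hpos
  · rw [← h0]; exact hd0
  · nlinarith [hαsq, hQα, hα0, hpos]
end

section
/- Let f be a homogeneous polynomial of degree m on ℝⁿ and k a positive integer. Then ‖f‖_{2k} ≤ max_{x ∈ S^{n−1}} |f(x)| ≤ C(n,m,k)^{1/(2k)} ‖f‖_{2k}, where ‖f‖_{2k} = (∫_{S^{n−1}} f^{2k} dx)^{1/(2k)} with dx the rotation-invariant probability measure, and C(n,m,k) = binom(n + mk − 1, mk). -/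
open MeasureTheory

/-- The map induced on the unit sphere by a linear isometry (a "rotation"). -/
def sphereRot {E : Type*} [NormedAddCommGroup E] [InnerProductSpace ℝ E]
    (g : E ≃ₗᵢ[ℝ] E) (x : Metric.sphere (0 : E) 1) : Metric.sphere (0 : E) 1 :=
  ⟨g x, by
    have hx : ‖(x : E)‖ = 1 := by
      simpa only [Metric.mem_sphere, dist_zero_right] using x.2
    simp only [Metric.mem_sphere, dist_zero_right, g.norm_map]
    exact hx⟩

/-- Evaluation of a polynomial at a point of the unit sphere of `ℝⁿ`. -/
noncomputable def sphereEval {n : ℕ} (f : MvPolynomial (Fin n) ℝ)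
    (x : Metric.sphere (0 : EuclideanSpace ℝ (Fin n)) 1) : ℝ :=
  MvPolynomial.eval (fun i => (x : EuclideanSpace ℝ (Fin n)) i) f

namespace SphPf
open MvPolynomial
variable {n : ℕ}

lemma continuous_sphereEval (p : MvPolynomial (Fin n) ℝ) : Continuous (sphereEval p) := by
  unfold sphereEval
  exact (MvPolynomial.continuous_eval p).comp (by fun_prop)

noncomputable def restrictL (n : ℕ) : MvPolynomial (Fin n) ℝ →ₗ[ℝ]
    (Metric.sphere (0 : EuclideanSpace ℝ (Fin n)) 1 → ℝ) where
  toFun p := sphereEval p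
  map_add' p q := by ext x; simp [sphereEval]
  map_smul' c p := by ext x; simp [sphereEval, MvPolynomial.smul_eval]

noncomputable def Vd (n d : ℕ) : Submodule ℝ (Metric.sphere (0 : EuclideanSpace ℝ (Fin n)) 1 → ℝ) :=
  (homogeneousSubmodule (Fin n) ℝ d).map (restrictL n)

lemma Vd_cont {d : ℕ} {v} (hv : v ∈ Vd n d) : Continuous v := by
  obtain ⟨p, -, rfl⟩ := hv
  exact continuous_sphereEval p

lemma coord_rot (g : EuclideanSpace ℝ (Fin n) ≃ₗᵢ[ℝ] EuclideanSpace ℝ (Fin n))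
    (w : EuclideanSpace ℝ (Fin n)) (i : Fin n) :
    g w i = ∑ j, w j * g (EuclideanSpace.single j 1) i := by
  have hw : w = ∑ j, w j • EuclideanSpace.single j (1:ℝ) := by
    ext i
    rw [show ((∑ j, w j • EuclideanSpace.single j (1:ℝ)) i) = ∑ j, (w j • EuclideanSpace.single j (1:ℝ)) i from by rw [WithLp.ofLp_sum, Finset.sum_apply]]
    simp [EuclideanSpace.single_apply]
  conv_lhs => rw [hw]
  rw [map_sum]
  rw [show ((∑ j, g (w j • EuclideanSpace.single j (1:ℝ))) i) = ∑ j, (g (w j • EuclideanSpace.single j (1:ℝ))) i from by rw [WithLp.ofLp_sum, Finset.sum_apply]]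
  congr 1; ext j
  rw [show g (w j • EuclideanSpace.single j (1:ℝ)) = w j • g (EuclideanSpace.single j 1) from
    g.map_smul _ _]
  simp [smul_eq_mul]

lemma Vd_comp_rot {d : ℕ} (g : EuclideanSpace ℝ (Fin n) ≃ₗᵢ[ℝ] EuclideanSpace ℝ (Fin n))
    {v} (hv : v ∈ Vd n d) : (fun x => v (sphereRot g x)) ∈ Vd n d := by
  obtain ⟨p, hp, rfl⟩ := hv
  set s : Fin n → MvPolynomial (Fin n) ℝ :=
    fun i => ∑ j, MvPolynomial.C (g (EuclideanSpace.single j 1) i) * MvPolynomial.X j with hs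
  refine ⟨bind₁ s p, ?_, ?_⟩
  · have : (bind₁ s p).IsHomogeneous (1 * d) := by
      apply (mem_homogeneousSubmodule _ _ |>.1 hp).aeval
      intro i
      apply MvPolynomial.IsHomogeneous.sum
      intro j _
      exact MvPolynomial.isHomogeneous_C_mul_X _ _
    simpa using this
  · ext x
    show sphereEval (bind₁ s p) x = sphereEval p (sphereRot g x)
    unfold sphereEval
    have hco : (fun i => MvPolynomial.eval (fun j => (x : EuclideanSpace ℝ (Fin n)) j) (s i)) =
        fun i => (sphereRot g x : EuclideanSpace ℝ (Fin n)) i := by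
      funext i
      rw [hs]
      simp only [map_sum, map_mul, eval_C, eval_X]
      rw [show (sphereRot g x : EuclideanSpace ℝ (Fin n)) = g x from rfl, coord_rot]
      exact Finset.sum_congr rfl (fun j _ => mul_comm _ _)
    rw [show (MvPolynomial.eval (fun i => (x : EuclideanSpace ℝ (Fin n)) i) (bind₁ s p)) =
      MvPolynomial.eval (fun i => MvPolynomial.eval (fun j => (x : EuclideanSpace ℝ (Fin n)) j) (s i)) p from by
        rw [MvPolynomial.eval, eval₂Hom_bind₁]; rfl]
    rw [hco]

lemma sphereRot_symm_apply (g : EuclideanSpace ℝ (Fin n) ≃ₗᵢ[ℝ] EuclideanSpace ℝ (Fin n))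
    (x : Metric.sphere (0 : EuclideanSpace ℝ (Fin n)) 1) :
    sphereRot g (sphereRot g.symm x) = x := by
  ext1; simp [sphereRot]

noncomputable def rotHomeo (g : EuclideanSpace ℝ (Fin n) ≃ₗᵢ[ℝ] EuclideanSpace ℝ (Fin n)) :
    Metric.sphere (0 : EuclideanSpace ℝ (Fin n)) 1 ≃ₜ Metric.sphere (0 : EuclideanSpace ℝ (Fin n)) 1 where
  toFun := sphereRot g
  invFun := sphereRot g.symm
  left_inv x := by ext1; simp [sphereRot]
  right_inv x := by ext1; simp [sphereRot]
  continuous_toFun := Continuous.subtype_mk (g.continuous.comp continuous_subtype_val) _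
  continuous_invFun := Continuous.subtype_mk (g.symm.continuous.comp continuous_subtype_val) _

lemma exists_rot (x y : Metric.sphere (0 : EuclideanSpace ℝ (Fin n)) 1) :
    ∃ g : EuclideanSpace ℝ (Fin n) ≃ₗᵢ[ℝ] EuclideanSpace ℝ (Fin n), sphereRot g x = y := by
  have hx : ‖(x : EuclideanSpace ℝ (Fin n))‖ = 1 := by simpa using x.2
  have hy : ‖(y : EuclideanSpace ℝ (Fin n))‖ = 1 := by simpa using y.2
  refine ⟨Submodule.reflection (ℝ ∙ ((x : EuclideanSpace ℝ (Fin n)) - y))ᗮ, ?_⟩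
  ext1
  exact Submodule.reflection_sub (by rw [hx, hy])

variable {μ : Measure (Metric.sphere (0 : EuclideanSpace ℝ (Fin n)) 1)} [IsProbabilityMeasure μ]

lemma measure_open_pos
    (hμ : ∀ g : EuclideanSpace ℝ (Fin n) ≃ₗᵢ[ℝ] EuclideanSpace ℝ (Fin n),
      MeasurePreserving (sphereRot g) μ μ)
    {U : Set (Metric.sphere (0 : EuclideanSpace ℝ (Fin n)) 1)} (hUo : IsOpen U)
    (hUne : U.Nonempty) : 0 < μ U := by
  obtain ⟨x0, hx0⟩ := hUne
  rcases eq_zero_or_pos (μ U) with h0 | h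
  · exfalso
    -- cover the sphere by preimages of U
    have hcov : ∀ y : Metric.sphere (0 : EuclideanSpace ℝ (Fin n)) 1,
        ∃ g : EuclideanSpace ℝ (Fin n) ≃ₗᵢ[ℝ] EuclideanSpace ℝ (Fin n), sphereRot g y = x0 :=
      fun y => exists_rot y x0
    choose G hG using hcov
    have hsub : (Set.univ : Set (Metric.sphere (0 : EuclideanSpace ℝ (Fin n)) 1)) ⊆
        ⋃ y : Metric.sphere (0 : EuclideanSpace ℝ (Fin n)) 1, (sphereRot (G y)) ⁻¹' U := by
      intro y _
      exact Set.mem_iUnion.2 ⟨y, by simp [hG y, hx0]⟩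
    obtain ⟨t, ht⟩ := isCompact_univ.elim_finite_subcover
      (fun y => (sphereRot (G y)) ⁻¹' U)
      (fun y => hUo.preimage (rotHomeo (G y)).continuous) hsub
    have h1 : (1 : ENNReal) ≤ ∑ y ∈ t, μ ((sphereRot (G y)) ⁻¹' U) := by
      calc (1:ENNReal) = μ Set.univ := (measure_univ).symm
      _ ≤ μ (⋃ y ∈ t, (sphereRot (G y)) ⁻¹' U) := measure_mono ht
      _ ≤ ∑ y ∈ t, μ ((sphereRot (G y)) ⁻¹' U) := measure_biUnion_finset_le t _
    rw [Finset.sum_congr rfl (fun y _ => by rw [(hμ (G y)).measure_preimage hUo.measurableSet.nullMeasurableSet, h0])] at h1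
    simp at h1
  · exact h

lemma eq_zero_of_integral_sq_eq_zero
    (hμ : ∀ g : EuclideanSpace ℝ (Fin n) ≃ₗᵢ[ℝ] EuclideanSpace ℝ (Fin n),
      MeasurePreserving (sphereRot g) μ μ)
    {v : Metric.sphere (0 : EuclideanSpace ℝ (Fin n)) 1 → ℝ} (hv : Continuous v)
    (h : ∫ x, v x * v x ∂μ = 0) : v = 0 := by
  by_contra hne
  have hint : Integrable (fun x => v x * v x) μ :=
    (hv.mul hv).integrable_of_hasCompactSupport (HasCompactSupport.of_compactSpace _)
  have hpos : 0 < ∫ x, v x * v x ∂μ := by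
    rw [integral_pos_iff_support_of_nonneg (fun x => mul_self_nonneg (v x)) hint]
    apply measure_open_pos hμ ((hv.mul hv).isOpen_support)
    obtain ⟨x0, hx0⟩ := Function.ne_iff.1 hne
    exact ⟨x0, by simp [Function.mem_support]; simpa using hx0⟩
  exact hpos.ne' h

lemma Vd_le_span (d : ℕ) : Vd n d ≤ Submodule.span ℝ
    ((fun σ => restrictL n (monomial σ (1:ℝ))) ''
      ↑(Finset.finsuppAntidiag (Finset.univ : Finset (Fin n)) d)) := by
  rintro v ⟨p, hp, rfl⟩
  rw [← support_sum_monomial_coeff p, map_sum]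
  apply Submodule.sum_mem
  intro σ hσ
  have hσd : σ ∈ Finset.finsuppAntidiag (Finset.univ : Finset (Fin n)) d := by
    rw [Finset.mem_finsuppAntidiag]
    refine ⟨?_, Finset.subset_univ _⟩
    have hiso : p.IsHomogeneous d := hp
    have hw := hiso (Finsupp.mem_support_iff.1 hσ)
    have hdeg : Finsupp.degree σ = d := by
      rw [Finsupp.degree_eq_weight_one]; exact hw
    rw [← hdeg]
    exact (Finset.sum_subset (Finset.subset_univ _)
      (fun i _ hni => Finsupp.notMem_support_iff.1 hni)).symm
  have hmono : monomial σ (coeff σ p) = (coeff σ p) • monomial σ (1:ℝ) := by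
    rw [smul_monomial, smul_eq_mul, mul_one]
  rw [hmono, LinearMap.map_smul]
  exact Submodule.smul_mem _ _ (Submodule.subset_span (Set.mem_image_of_mem _ hσd))

lemma card_antidiag_le (d : ℕ) :
    (Finset.finsuppAntidiag (Finset.univ : Finset (Fin n)) d).card ≤ (n + d - 1).choose d := by
  have h1 : Finset.finsuppAntidiag (Finset.univ : Finset (Fin n)) d ⊆
      Finset.image (fun s : Sym (Fin n) d => Multiset.toFinsupp (s : Multiset (Fin n)))
        Finset.univ := by
    intro σ hσ
    rw [Finset.mem_finsuppAntidiag] at hσ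
    have hcard : Multiset.card (Finsupp.toMultiset σ) = d := by
      rw [Finsupp.card_toMultiset]
      rw [← hσ.1]
      exact Finsupp.sum_fintype _ _ (fun _ => rfl)
    refine Finset.mem_image.2 ⟨⟨Finsupp.toMultiset σ, hcard⟩, Finset.mem_univ _, ?_⟩
    simp
  calc (Finset.finsuppAntidiag (Finset.univ : Finset (Fin n)) d).card
      ≤ (Finset.image (fun s : Sym (Fin n) d => Multiset.toFinsupp (s : Multiset (Fin n)))
          Finset.univ).card := Finset.card_le_card h1
    _ ≤ (Finset.univ : Finset (Sym (Fin n) d)).card := Finset.card_image_le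
    _ = Fintype.card (Sym (Fin n) d) := rfl
    _ = (n + d - 1).choose d := by rw [Sym.card_sym_eq_choose, Fintype.card_fin]

lemma fd_Vd (d : ℕ) : FiniteDimensional ℝ ↥(Vd n d) := by
  haveI := FiniteDimensional.span_of_finite ℝ
    (((Finset.finsuppAntidiag (Finset.univ : Finset (Fin n)) d).finite_toSet).image
      (fun σ => restrictL n (monomial σ (1:ℝ))))
  exact Submodule.finiteDimensional_of_le (Vd_le_span d)

lemma finrank_Vd_le (d : ℕ) : Module.finrank ℝ ↥(Vd n d) ≤ (n + d - 1).choose d := by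
  have hfin : ((fun σ => restrictL n (monomial σ (1:ℝ))) ''
      ↑(Finset.finsuppAntidiag (Finset.univ : Finset (Fin n)) d)).Finite :=
    ((Finset.finsuppAntidiag (Finset.univ : Finset (Fin n)) d).finite_toSet).image _
  haveI := FiniteDimensional.span_of_finite ℝ hfin
  have h1 : Module.finrank ℝ ↥(Vd n d) ≤ Module.finrank ℝ
      ↥(Submodule.span ℝ ((fun σ => restrictL n (monomial σ (1:ℝ))) ''
        ↑(Finset.finsuppAntidiag (Finset.univ : Finset (Fin n)) d))) :=
    Submodule.finrank_mono (Vd_le_span d)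
  have h2 : Module.finrank ℝ
      ↥(Submodule.span ℝ ((fun σ => restrictL n (monomial σ (1:ℝ))) ''
        ↑(Finset.finsuppAntidiag (Finset.univ : Finset (Fin n)) d))) ≤
      hfin.toFinset.card := by
    have := finrank_span_finset_le_card (R := ℝ) hfin.toFinset
    rw [Set.Finite.coe_toFinset] at this
    exact this
  have h3 : hfin.toFinset.card ≤
      (Finset.finsuppAntidiag (Finset.univ : Finset (Fin n)) d).card := by
    apply Finset.card_le_card_of_surjOn (fun σ => restrictL n (monomial σ (1:ℝ)))
    intro y hy
    rw [Set.Finite.coe_toFinset] at hy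
    exact hy
  exact h1.trans (h2.trans (h3.trans (card_antidiag_le d)))


set_option maxHeartbeats 1000000 in
lemma key (d : ℕ)
    (hμ : ∀ g : EuclideanSpace ℝ (Fin n) ≃ₗᵢ[ℝ] EuclideanSpace ℝ (Fin n),
      MeasurePreserving (sphereRot g) μ μ)
    (p : MvPolynomial (Fin n) ℝ) (hp : p.IsHomogeneous d)
    (x : Metric.sphere (0 : EuclideanSpace ℝ (Fin n)) 1) :
    (sphereEval p x) ^ 2 ≤ ((n + d - 1).choose d : ℝ) * ∫ y, (sphereEval p y) ^ 2 ∂μ := by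
  have hint : ∀ u v : Metric.sphere (0 : EuclideanSpace ℝ (Fin n)) 1 → ℝ, Continuous u →
      Continuous v → Integrable (fun z => u z * v z) μ := fun u v hu hv =>
    (hu.mul hv).integrable_of_hasCompactSupport (HasCompactSupport.of_compactSpace _)
  letI core : InnerProductSpace.Core ℝ ↥(Vd n d) :=
    { inner := fun u v => ∫ z, (u : _ → ℝ) z * (v : _ → ℝ) z ∂μ
      conj_inner_symm := fun u v => by
        simp only [starRingEnd_apply, star_trivial]
        exact integral_congr_ae (Filter.Eventually.of_forall fun z => mul_comm _ _)
      re_inner_nonneg := fun u => by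
        have h0 : 0 ≤ ∫ z, (u : _ → ℝ) z * (u : _ → ℝ) z ∂μ :=
          integral_nonneg fun z => by simpa using mul_self_nonneg ((u : _ → ℝ) z)
        simpa using h0
      definite := fun u h => Subtype.ext (eq_zero_of_integral_sq_eq_zero hμ (Vd_cont u.2) h)
      add_left := fun u v w => by
        simp only [Submodule.coe_add, Pi.add_apply, add_mul]
        exact integral_add (hint _ _ (Vd_cont u.2) (Vd_cont w.2))
          (hint _ _ (Vd_cont v.2) (Vd_cont w.2))
      smul_left := fun u v r => by
        simp only [Submodule.coe_smul, Pi.smul_apply, smul_eq_mul, starRingEnd_apply,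
          star_trivial, mul_assoc]
        have hs := integral_smul (μ := μ) r (fun z => (u : _ → ℝ) z * (v : _ → ℝ) z)
        simpa [smul_eq_mul] using hs }
  letI : NormedAddCommGroup ↥(Vd n d) := core.toNormedAddCommGroup
  letI : InnerProductSpace ℝ ↥(Vd n d) := InnerProductSpace.ofCore core.toCore
  haveI : FiniteDimensional ℝ ↥(Vd n d) := fd_Vd d
  have hinner : ∀ u v : ↥(Vd n d),
      (inner ℝ u v : ℝ) = ∫ z, (u : _ → ℝ) z * (v : _ → ℝ) z ∂μ := fun u v => rfl
  set N := Module.finrank ℝ ↥(Vd n d) with hN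
  set b := stdOrthonormalBasis ℝ ↥(Vd n d) with hb
  set bf : Fin N → (Metric.sphere (0 : EuclideanSpace ℝ (Fin n)) 1 → ℝ) :=
    fun i => ((b i : ↥(Vd n d)) : Metric.sphere (0 : EuclideanSpace ℝ (Fin n)) 1 → ℝ) with hbf
  -- evaluation as a linear map
  set ev : (Metric.sphere (0 : EuclideanSpace ℝ (Fin n)) 1) → (↥(Vd n d) →ₗ[ℝ] ℝ) :=
    fun z => (LinearMap.proj z).comp (Vd n d).subtype with hev
  have hev_apply : ∀ z (u : ↥(Vd n d)), ev z u = (u : _ → ℝ) z := fun z u => rfl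
  -- reproducing vector
  set rv : (Metric.sphere (0 : EuclideanSpace ℝ (Fin n)) 1) → ↥(Vd n d) :=
    fun z => ∑ i, (bf i z) • b i with hrv
  have hrepr : ∀ (u : ↥(Vd n d)) z,
      (u : _ → ℝ) z = ∑ i, (inner ℝ (b i) u : ℝ) * bf i z := by
    intro u z
    conv_lhs => rw [← b.sum_repr u]
    rw [← hev_apply, map_sum]
    refine Finset.sum_congr rfl fun i _ => ?_
    rw [LinearMap.map_smul, smul_eq_mul, hev_apply, b.repr_apply_apply]
  have hrv_inner : ∀ z (u : ↥(Vd n d)), (inner ℝ (rv z) u : ℝ) = (u : _ → ℝ) z := by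
    intro z u
    rw [hrv]
    simp only
    rw [sum_inner]
    rw [hrepr u z]
    refine Finset.sum_congr rfl fun i _ => ?_
    rw [real_inner_smul_left]
    exact mul_comm _ _
  have hrv_apply : ∀ z, ((rv z : _ → ℝ)) z = ∑ i, (bf i z) ^ 2 := by
    intro z
    have h1 : ((rv z : _ → ℝ)) z = ev z (rv z) := rfl
    rw [h1, hrv]
    simp only
    rw [map_sum]
    refine Finset.sum_congr rfl fun i _ => ?_
    rw [LinearMap.map_smul, smul_eq_mul, hev_apply, sq]
  set K : (Metric.sphere (0 : EuclideanSpace ℝ (Fin n)) 1) → ℝ :=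
    fun z => ∑ i, (bf i z) ^ 2 with hK
  have hKrv : ∀ z, K z = (inner ℝ (rv z) (rv z) : ℝ) := by
    intro z
    rw [hrv_inner z (rv z), hrv_apply]
  -- pointwise bound via Cauchy-Schwarz
  have hCS : ∀ z (u : ↥(Vd n d)),
      ((u : _ → ℝ) z) ^ 2 ≤ K z * (inner ℝ u u : ℝ) := by
    intro z u
    rw [← hrv_inner z u, sq, hKrv]
    exact real_inner_mul_inner_self_le _ _
  -- K is monotone-constant: K z ≤ K z'
  have hKle : ∀ z z', K z ≤ K z' := by
    intro z z'
    obtain ⟨g, hg⟩ := exists_rot z' z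
    set c : Fin N → ↥(Vd n d) := fun i =>
      ⟨fun w => bf i (sphereRot g w), Vd_comp_rot g (b i).2⟩ with hc
    have hON : Orthonormal ℝ c := by
      rw [orthonormal_iff_ite]
      intro i j
      have hcomp : (inner ℝ (c i) (c j) : ℝ) = (inner ℝ (b i) (b j) : ℝ) := by
        rw [hinner, hinner]
        exact (hμ g).integral_comp (rotHomeo g).measurableEmbedding
          (fun w => bf i w * bf j w)
      rw [hcomp, ← orthonormal_iff_ite.1 b.orthonormal i j]
    have hbessel := hON.sum_inner_products_le (s := Finset.univ) (rv z')
    have hlhs : ∀ i, ‖(inner ℝ (c i) (rv z') : ℝ)‖ ^ 2 = (bf i z) ^ 2 := by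
      intro i
      rw [real_inner_comm, hrv_inner]
      show ‖(c i : _ → ℝ) z'‖ ^ 2 = _
      rw [hc]
      simp only
      rw [hg, Real.norm_eq_abs, sq_abs]
    calc K z = ∑ i, ‖(inner ℝ (c i) (rv z') : ℝ)‖ ^ 2 := by
          rw [hK]; exact (Finset.sum_congr rfl fun i _ => (hlhs i)).symm
      _ ≤ ‖rv z'‖ ^ 2 := hbessel
      _ = K z' := by rw [← real_inner_self_eq_norm_sq, hKrv]
  -- integral of K is N
  have hKcont : ∀ i : Fin N, Continuous fun z => (bf i z) ^ 2 := fun i => by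
    have := Vd_cont (b i).2
    fun_prop
  have hKint : Integrable K μ := by
    rw [hK]
    apply integrable_finset_sum
    intro i _
    exact ((hKcont i).integrable_of_hasCompactSupport (HasCompactSupport.of_compactSpace _))
  have hintK : ∫ z, K z ∂μ = (N : ℝ) := by
    rw [hK]
    rw [integral_finset_sum _ (fun i _ =>
      (hKcont i).integrable_of_hasCompactSupport (HasCompactSupport.of_compactSpace _))]
    have : ∀ i : Fin N, ∫ z, (bf i z) ^ 2 ∂μ = 1 := by
      intro i
      have h1 : (inner ℝ (b i) (b i) : ℝ) = 1 := by
        rw [real_inner_self_eq_norm_sq, b.orthonormal.1 i]; norm_num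
      rw [hinner] at h1
      calc ∫ z, (bf i z) ^ 2 ∂μ
          = ∫ z, ((b i : ↥(Vd n d)) : _ → ℝ) z * ((b i : ↥(Vd n d)) : _ → ℝ) z ∂μ :=
            integral_congr_ae (Filter.Eventually.of_forall fun z => sq _)
        _ = 1 := h1
    rw [Finset.sum_congr rfl fun i _ => this i]
    simp
  have hKbound : ∀ z, K z ≤ (N : ℝ) := by
    intro z
    rw [← hintK]
    have h1 : K z = ∫ _, K z ∂μ := by simp
    rw [h1]
    exact integral_mono (integrable_const _) hKint (fun z' => hKle z z')
  -- conclude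
  set u : ↥(Vd n d) := ⟨restrictL n p, ⟨p, hp, rfl⟩⟩ with hu
  have huval : ∀ z, (u : _ → ℝ) z = sphereEval p z := fun z => rfl
  have huu : (inner ℝ u u : ℝ) = ∫ z, (sphereEval p z) ^ 2 ∂μ := by
    rw [hinner]
    exact integral_congr_ae (Filter.Eventually.of_forall fun z => (sq _).symm)
  have huu_nonneg : (0:ℝ) ≤ (inner ℝ u u : ℝ) := real_inner_self_nonneg
  calc (sphereEval p x) ^ 2 = ((u : _ → ℝ) x) ^ 2 := by rw [huval]
    _ ≤ K x * (inner ℝ u u : ℝ) := hCS x u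
    _ ≤ (N : ℝ) * (inner ℝ u u : ℝ) := by
        apply mul_le_mul_of_nonneg_right (hKbound x) huu_nonneg
    _ ≤ ((n + d - 1).choose d : ℝ) * (inner ℝ u u : ℝ) := by
        apply mul_le_mul_of_nonneg_right _ huu_nonneg
        exact_mod_cast Nat.cast_le.2 (finrank_Vd_le d)
    _ = ((n + d - 1).choose d : ℝ) * ∫ z, (sphereEval p z) ^ 2 ∂μ := by rw [huu]

end SphPf

/-- Let `f` be a homogeneous polynomial of degree `m` on `ℝⁿ` and `k ≥ 1`.
Then `‖f‖_{2k} ≤ max_{x ∈ Sⁿ⁻¹} |f(x)| ≤ binom(n+mk-1, mk)^{1/(2k)} ‖f‖_{2k}`, where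
`‖f‖_{2k} = (∫_{Sⁿ⁻¹} f^{2k} dμ)^{1/(2k)}` for the rotation-invariant probability
measure `μ` on the unit sphere. -/
theorem sup_sphere_le_L2k_mul_choose_rpow {n m k : ℕ} (hk : 0 < k)
    (μ : Measure (Metric.sphere (0 : EuclideanSpace ℝ (Fin n)) 1)) [IsProbabilityMeasure μ]
    (hμ : ∀ g : EuclideanSpace ℝ (Fin n) ≃ₗᵢ[ℝ] EuclideanSpace ℝ (Fin n),
      MeasurePreserving (sphereRot g) μ μ)
    (f : MvPolynomial (Fin n) ℝ) (hf : f.IsHomogeneous m) :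
    (∫ x, sphereEval f x ^ (2 * k) ∂μ) ^ ((1 : ℝ) / (2 * k)) ≤
        (⨆ x : Metric.sphere (0 : EuclideanSpace ℝ (Fin n)) 1, |sphereEval f x|) ∧
    (⨆ x : Metric.sphere (0 : EuclideanSpace ℝ (Fin n)) 1, |sphereEval f x|) ≤
      ((n + m * k - 1).choose (m * k) : ℝ) ^ ((1 : ℝ) / (2 * k)) *
        (∫ x, sphereEval f x ^ (2 * k) ∂μ) ^ ((1 : ℝ) / (2 * k)) := by
  by_cases hne : Nonempty (Metric.sphere (0 : EuclideanSpace ℝ (Fin n)) 1)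
  case neg =>
    exfalso
    have h1 : μ Set.univ = 1 := measure_univ
    rw [Set.univ_eq_empty_iff.2 (not_nonempty_iff.1 hne)] at h1
    simp at h1
  case pos =>
  haveI := hne
  have hknR : (2 * (k:ℝ)) ≠ 0 := by positivity
  set e : ℝ := (1 : ℝ) / (2 * k) with he
  have hee : ((2 * k : ℕ) : ℝ) * e = 1 := by
    rw [he]; push_cast; field_simp
  have he0 : 0 ≤ e := by rw [he]; positivity
  set I : ℝ := ∫ x, sphereEval f x ^ (2 * k) ∂μ with hI
  have hpt_nn : ∀ x : Metric.sphere (0 : EuclideanSpace ℝ (Fin n)) 1,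
      0 ≤ sphereEval f x ^ (2 * k) := fun x => (even_two_mul k).pow_nonneg _
  have hInn : 0 ≤ I := integral_nonneg fun x => hpt_nn x
  have hIint : Integrable (fun x => sphereEval f x ^ (2 * k)) μ :=
    ((SphPf.continuous_sphereEval f).pow _).integrable_of_hasCompactSupport
      (HasCompactSupport.of_compactSpace _)
  set M : ℝ := ⨆ x : Metric.sphere (0 : EuclideanSpace ℝ (Fin n)) 1, |sphereEval f x| with hM
  have hbdd : BddAbove (Set.range fun x : Metric.sphere (0 : EuclideanSpace ℝ (Fin n)) 1 =>
      |sphereEval f x|) := (isCompact_range (SphPf.continuous_sphereEval f).abs).bddAbove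
  have hMx : ∀ x, |sphereEval f x| ≤ M := fun x => le_ciSup hbdd x
  have hM0 : 0 ≤ M := le_trans (abs_nonneg _) (hMx (Classical.arbitrary _))
  have habs : ∀ x, sphereEval f x ^ (2 * k) = |sphereEval f x| ^ (2 * k) := fun x => by
    rw [← abs_pow, abs_of_nonneg (hpt_nn x)]
  -- rpow helper: for 0 ≤ a, (a ^ (2k)) ^ e = a
  have hrw : ∀ a : ℝ, 0 ≤ a → (a ^ (2 * k)) ^ e = a := fun a ha => by
    rw [← Real.rpow_natCast a (2 * k), ← Real.rpow_mul ha, hee, Real.rpow_one]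
  constructor
  · -- first inequality
    have hIle : I ≤ M ^ (2 * k) := by
      have := integral_mono hIint (integrable_const (M ^ (2 * k)))
        (fun x => by
          rw [habs x]
          exact pow_le_pow_left₀ (abs_nonneg _) (hMx x) _)
      simpa using this
    calc I ^ e ≤ (M ^ (2 * k)) ^ e := Real.rpow_le_rpow hInn hIle he0
      _ = M := hrw M hM0
  · -- second inequality
    have hpow : ∀ z, sphereEval (f ^ k) z = sphereEval f z ^ k := fun z =>
      map_pow (MvPolynomial.eval _) f k
    have hIeq : ∫ y, (sphereEval (f ^ k) y) ^ 2 ∂μ = I := by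
      rw [hI]
      refine integral_congr_ae (Filter.Eventually.of_forall fun y => ?_)
      show sphereEval (f ^ k) y ^ 2 = sphereEval f y ^ (2 * k)
      rw [hpow, ← pow_mul, mul_comm]
    have hkey : ∀ x, sphereEval f x ^ (2 * k) ≤
        ((n + m * k - 1).choose (m * k) : ℝ) * I := by
      intro x
      have h := SphPf.key (μ := μ) (m * k) hμ (f ^ k) (hf.pow k) x
      rw [hIeq, hpow, ← pow_mul, mul_comm k 2] at h
      exact h
    apply ciSup_le
    intro x
    have h1 : |sphereEval f x| = (sphereEval f x ^ (2 * k)) ^ e := by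
      rw [habs x, hrw _ (abs_nonneg _)]
    rw [h1]
    calc (sphereEval f x ^ (2 * k)) ^ e
        ≤ (((n + m * k - 1).choose (m * k) : ℝ) * I) ^ e :=
          Real.rpow_le_rpow (hpt_nn x) (hkey x) he0
      _ = ((n + m * k - 1).choose (m * k) : ℝ) ^ e * I ^ e :=
          Real.mul_rpow (Nat.cast_nonneg _) hInn
end

section
/- There is an absolute constant α > 0 such that for every n, m and every homogeneous polynomial f of degree m on ℝⁿ, if k ≥ n ln(m+1) then ‖f‖_{2k} ≤ max_{x ∈ S^{n−1}} |f(x)| ≤ α ‖f‖_{2k}. -/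
open MeasureTheory

section Aux
set_option linter.unusedSectionVars false
set_option linter.unusedVariables false


section RKHS
variable {H : Type*} [NormedAddCommGroup H] [InnerProductSpace ℝ H] [FiniteDimensional ℝ H]

/-- For an orthonormal basis `b` and a linear functional `φ` with Riesz representative `u`,
the sum of squares `∑ φ (b i)^2` equals `⟪u, u⟫`. -/
lemma sum_sq_eq_inner_self (b : OrthonormalBasis (Fin (Module.finrank ℝ H)) ℝ H)
    {φ : H →ₗ[ℝ] ℝ} {u : H} (hu : ∀ w, inner ℝ u w = φ w) :
    ∑ i, φ (b i) ^ 2 = (inner ℝ u u : ℝ) := by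
  have := b.sum_inner_mul_inner u u
  calc ∑ i, φ (b i) ^ 2 = ∑ i, inner (𝕜 := ℝ) u (b i) * inner (𝕜 := ℝ) (b i) u := by
        refine Finset.sum_congr rfl fun i _ => ?_
        rw [← hu, real_inner_comm (b i) u, sq]
    _ = inner ℝ u u := this

lemma exists_riesz (φ : H →ₗ[ℝ] ℝ) : ∃ u : H, ∀ w, (inner ℝ u w : ℝ) = φ w := by
  refine ⟨(InnerProductSpace.toDual ℝ H).symm (LinearMap.toContinuousLinearMap φ), fun w => ?_⟩
  simp [InnerProductSpace.toDual_symm_apply]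

end RKHS

section Abstract

variable {X : Type*} [MeasurableSpace X]

/-- Evaluation at a point as a linear functional on a submodule of functions. -/
def evalLM (V : Submodule ℝ (X → ℝ)) (x : X) : V →ₗ[ℝ] ℝ where
  toFun v := (v : X → ℝ) x
  map_add' v w := rfl
  map_smul' c v := rfl

set_option maxHeartbeats 1000000 in
theorem rkhs_bound (μ : Measure X) [IsProbabilityMeasure μ]
    (V : Submodule ℝ (X → ℝ)) [FiniteDimensional ℝ V]
    (hmeas : ∀ v : V, AEStronglyMeasurable (v : X → ℝ) μ)
    (hint : ∀ v w : V, Integrable (fun x => (v : X → ℝ) x * (w : X → ℝ) x) μ)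
    (hdef : ∀ v : V, (∫ x, ((v : X → ℝ) x)^2 ∂μ) = 0 → v = 0)
    (htrans : ∀ x y : X, ∃ σ : X → X, MeasurePreserving σ μ μ ∧
      (∀ v : V, (fun z => (v : X → ℝ) (σ z)) ∈ V) ∧ σ y = x) :
    ∀ (v : V) (x : X), ((v : X → ℝ) x)^2 ≤ (Module.finrank ℝ V) * ∫ z, ((v : X → ℝ) z)^2 ∂μ := by
  intro v x
  letI core : InnerProductSpace.Core ℝ V :=
    { inner := fun v w => ∫ x, (v : X → ℝ) x * (w : X → ℝ) x ∂μ
      conj_inner_symm := fun v w => by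
        simp only [RCLike.star_def, starRingEnd_apply, star_trivial]
        simp_rw [mul_comm]
      re_inner_nonneg := fun v => by
        simpa using integral_nonneg (μ := μ) fun x => mul_self_nonneg ((v : X → ℝ) x)
      add_left := fun v w u => by
        simp only [Submodule.coe_add, Pi.add_apply, add_mul]
        exact integral_add (hint v u) (hint w u)
      smul_left := fun v w r => by
        simp only [Submodule.coe_smul, Pi.smul_apply, smul_eq_mul, mul_assoc,
          starRingEnd_apply, star_trivial]
        rw [integral_const_mul]
      definite := fun v h => hdef v (by simpa [sq] using h) }
  letI : NormedAddCommGroup V := core.toNormedAddCommGroup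
  letI : InnerProductSpace ℝ V := InnerProductSpace.ofCore core.toCore
  have hinner : ∀ v w : V, (inner ℝ v w : ℝ) = ∫ x, (v : X → ℝ) x * (w : X → ℝ) x ∂μ :=
    fun v w => rfl
  have hinner_self : ∀ v : V, (inner ℝ v v : ℝ) = ∫ x, ((v : X → ℝ) x)^2 ∂μ := by
    intro v; rw [hinner]; simp_rw [sq]
  by_cases hd0 : Module.finrank ℝ V = 0
  · have hsub : Subsingleton V := Module.finrank_zero_iff.mp hd0
    have hv0 : v = 0 := Subsingleton.elim v 0
    rw [hv0, hd0]
    simp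
  haveI : Nonempty (Fin (Module.finrank ℝ V)) := ⟨⟨0, Nat.pos_of_ne_zero hd0⟩⟩
  set b := stdOrthonormalBasis ℝ V with hb
  obtain ⟨u, hu⟩ := exists_riesz (evalLM V x)
  have key1 : ((v : X → ℝ) x)^2 ≤ (inner ℝ u u : ℝ) * (inner ℝ v v : ℝ) := by
    have h1 : (v : X → ℝ) x = (inner ℝ u v : ℝ) := (hu v).symm
    rw [h1, sq]
    exact real_inner_mul_inner_self_le u v
  have hsum : ∑ i, ((b i : X → ℝ) x) ^ 2 = (inner ℝ u u : ℝ) := sum_sq_eq_inner_self b hu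
  -- the "kernel" is constant
  have hKxy : ∀ y, (∑ i, ((b i : X → ℝ) y)^2) = ∑ i, ((b i : X → ℝ) x)^2 := by
    intro y
    obtain ⟨σ, hσ, hcomp, hσy⟩ := htrans x y
    have hpush : ∀ F : X → ℝ, AEStronglyMeasurable F μ →
        ∫ z, F (σ z) ∂μ = ∫ z, F z ∂μ := by
      intro F hF
      have hFm : AEStronglyMeasurable F (Measure.map σ μ) := by rw [hσ.map_eq]; exact hF
      have := integral_map (μ := μ) hσ.measurable.aemeasurable hFm
      rw [hσ.map_eq] at this
      exact this.symm
    set c : Fin (Module.finrank ℝ V) → V :=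
      fun i => ⟨fun z => (b i : X → ℝ) (σ z), hcomp (b i)⟩ with hc
    have hcinner : ∀ i j, (inner ℝ (c i) (c j) : ℝ) = (inner ℝ (b i) (b j) : ℝ) := by
      intro i j
      rw [hinner, hinner]
      exact hpush (fun z => (b i : X → ℝ) z * (b j : X → ℝ) z)
        ((hmeas (b i)).mul (hmeas (b j)))
    have hon : Orthonormal ℝ c := by
      rw [orthonormal_iff_ite]
      intro i j
      rw [hcinner, orthonormal_iff_ite.mp b.orthonormal i j]
    have hcard : Fintype.card (Fin (Module.finrank ℝ V)) = Module.finrank ℝ V := by simp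
    have hspan : ⊤ ≤ Submodule.span ℝ (Set.range c) := by
      rw [← Module.Basis.span_eq (basisOfLinearIndependentOfCardEqFinrank hon.linearIndependent hcard),
        coe_basisOfLinearIndependentOfCardEqFinrank]
    set cb : OrthonormalBasis (Fin (Module.finrank ℝ V)) ℝ V := OrthonormalBasis.mk hon hspan
      with hcb
    obtain ⟨uy, huy⟩ := exists_riesz (evalLM V y)
    have h1 : ∑ i, ((b i : X → ℝ) y)^2 = (inner ℝ uy uy : ℝ) := sum_sq_eq_inner_self b huy
    have h2 : ∑ i, ((cb i : X → ℝ) y)^2 = (inner ℝ uy uy : ℝ) := sum_sq_eq_inner_self cb huy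
    have h3 : ∀ i, ((cb i : X → ℝ) y) = (b i : X → ℝ) x := by
      intro i
      rw [hcb, OrthonormalBasis.coe_mk]
      show (b i : X → ℝ) (σ y) = (b i : X → ℝ) x
      rw [hσy]
    rw [h1, ← h2]
    refine Finset.sum_congr rfl fun i _ => ?_
    rw [h3]
  have hbint : ∀ i, Integrable (fun z => ((b i : X → ℝ) z)^2) μ := by
    intro i; simpa [sq] using hint (b i) (b i)
  have hinteg : ∫ z, (∑ i, ((b i : X → ℝ) z)^2) ∂μ = ∑ i, ∫ z, ((b i : X → ℝ) z)^2 ∂μ :=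
    integral_finset_sum _ fun i _ => hbint i
  have hone : ∀ i, ∫ z, ((b i : X → ℝ) z)^2 ∂μ = 1 := by
    intro i
    rw [← hinner_self]
    have := orthonormal_iff_ite.mp b.orthonormal i i
    simpa using this
  have hconst : ∫ z, (∑ i, ((b i : X → ℝ) z)^2) ∂μ = ∑ i, ((b i : X → ℝ) x)^2 := by
    have hfun : (fun z => ∑ i, ((b i : X → ℝ) z)^2) = fun _ => ∑ i, ((b i : X → ℝ) x)^2 :=
      funext hKxy
    rw [hfun, integral_const]
    simp
  have hKx : ∑ i, ((b i : X → ℝ) x)^2 = (Module.finrank ℝ V : ℝ) := by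
    rw [← hconst, hinteg]
    simp [hone]
  calc ((v : X → ℝ) x)^2 ≤ (inner ℝ u u : ℝ) * (inner ℝ v v : ℝ) := key1
    _ = (Module.finrank ℝ V : ℝ) * ∫ z, ((v : X → ℝ) z)^2 ∂μ := by
        rw [← hsum, hKx, hinner_self]

end Abstract


/-- Counting: a finite set of exponent vectors of total degree at most `D` has at most
`(D+n).choose n` elements (stars and bars). -/
lemma card_exponents_le {n D : ℕ} (T : Finset (Fin n →₀ ℕ))
    (hT : ∀ d ∈ T, (d.sum fun _ e => e) ≤ D) : T.card ≤ (D + n).choose n := by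
  classical
  have key : Fintype.card {d // d ∈ T} ≤ Fintype.card (Sym (Option (Fin n)) D) := by
    refine Fintype.card_le_of_injective (fun d =>
      ⟨(d.1.toMultiset).map some + Multiset.replicate (D - d.1.sum fun _ e => e) none, ?_⟩) ?_
    · simp only [Multiset.card_add, Multiset.card_map, Finsupp.card_toMultiset,
        Multiset.card_replicate]
      have h1 : (d.1.sum fun _ => id) = d.1.sum fun _ e => e := rfl
      rw [h1]
      exact Nat.add_sub_cancel' (hT d.1 d.2)
    · intro d e h
      have h' := congrArg Subtype.val h
      simp only at h'
      apply Subtype.ext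
      apply Finsupp.ext
      intro i
      have := congrArg (Multiset.count (some i)) h'
      simpa [Multiset.count_map_eq_count' _ _ (Option.some_injective _),
        Multiset.count_replicate] using this
  have h2 : Fintype.card {d // d ∈ T} = T.card := Fintype.card_coe T
  have h3 : Fintype.card (Sym (Option (Fin n)) D) = (D + n).choose n := by
    rw [Sym.card_sym_eq_choose]
    simp only [Fintype.card_option, Fintype.card_fin]
    have : n + 1 + D - 1 = D + n := by omega
    rw [this]
    have := Nat.choose_symm (n := D + n) (k := n) (by omega)
    rw [← this]
    congr 1
    omega
  omega





noncomputable section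

/-- Substituting polynomials of total degree at most 1 does not increase total degree. -/
lemma totalDegree_aeval_le_totalDegree {n : ℕ} (φ : Fin n → MvPolynomial (Fin n) ℝ)
    (hφ : ∀ i, (φ i).totalDegree ≤ 1) (q : MvPolynomial (Fin n) ℝ) :
    (MvPolynomial.aeval φ q).totalDegree ≤ q.totalDegree := by
  conv_lhs => rw [← MvPolynomial.support_sum_monomial_coeff q]
  rw [map_sum]
  refine (MvPolynomial.totalDegree_finset_sum _ _).trans (Finset.sup_le fun d hd => ?_)
  rw [MvPolynomial.aeval_monomial]
  refine (MvPolynomial.totalDegree_mul _ _).trans ?_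
  have h1 : (algebraMap ℝ (MvPolynomial (Fin n) ℝ) (MvPolynomial.coeff d q)).totalDegree = 0 :=
    MvPolynomial.totalDegree_C _
  rw [h1, zero_add]
  refine le_trans ?_ (MvPolynomial.le_totalDegree hd)
  rw [Finsupp.prod]
  refine (MvPolynomial.totalDegree_finset_prod _ _).trans ?_
  rw [Finsupp.sum]
  refine Finset.sum_le_sum fun i _ => ?_
  refine (MvPolynomial.totalDegree_pow _ _).trans ?_
  calc d i * (φ i).totalDegree ≤ d i * 1 := Nat.mul_le_mul_left _ (hφ i)
    _ = d i := Nat.mul_one _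

variable {n : ℕ}

/-- Evaluation on the sphere as a linear map on polynomials. -/
def polyEvalLM (n : ℕ) :
    MvPolynomial (Fin n) ℝ →ₗ[ℝ] (Metric.sphere (0 : EuclideanSpace ℝ (Fin n)) 1 → ℝ) where
  toFun p := fun x => MvPolynomial.eval (fun i => (x : EuclideanSpace ℝ (Fin n)) i) p
  map_add' p q := funext fun x => by simp
  map_smul' c p := funext fun x => by simp [MvPolynomial.smul_eval]

lemma continuous_polyEvalLM (p : MvPolynomial (Fin n) ℝ) : Continuous (polyEvalLM n p) := by
  have hc : Continuous (fun x : Metric.sphere (0 : EuclideanSpace ℝ (Fin n)) 1 =>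
      (fun i => (x : EuclideanSpace ℝ (Fin n)) i)) :=
    continuous_pi fun i =>
      ((EuclideanSpace.proj (𝕜 := ℝ) i).continuous).comp continuous_subtype_val
  exact (MvPolynomial.continuous_eval (p := p)).comp hc

/-- The linear polynomials realizing the coordinates of a rotation. -/
def rotPoly (g : EuclideanSpace ℝ (Fin n) ≃ₗᵢ[ℝ] EuclideanSpace ℝ (Fin n)) :
    Fin n → MvPolynomial (Fin n) ℝ := fun i =>
  ∑ j, MvPolynomial.C ((g (EuclideanSpace.single j 1) : EuclideanSpace ℝ (Fin n)) i) *
    MvPolynomial.X j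

lemma totalDegree_rotPoly (g : EuclideanSpace ℝ (Fin n) ≃ₗᵢ[ℝ] EuclideanSpace ℝ (Fin n)) (i : Fin n) :
    (rotPoly g i).totalDegree ≤ 1 := by
  refine (MvPolynomial.totalDegree_finset_sum _ _).trans (Finset.sup_le fun j _ => ?_)
  refine (MvPolynomial.totalDegree_mul _ _).trans ?_
  rw [MvPolynomial.totalDegree_C, zero_add]
  rw [MvPolynomial.totalDegree_X]

lemma rot_coord (g : EuclideanSpace ℝ (Fin n) ≃ₗᵢ[ℝ] EuclideanSpace ℝ (Fin n))
    (x : EuclideanSpace ℝ (Fin n)) (i : Fin n) :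
    (g x) i = ∑ j, (g (EuclideanSpace.single j 1) : EuclideanSpace ℝ (Fin n)) i * x j := by
  have hx : ∑ j, x j • (EuclideanSpace.basisFun (Fin n) ℝ) j = x := by
    simpa [EuclideanSpace.basisFun_repr] using (EuclideanSpace.basisFun (Fin n) ℝ).sum_repr x
  have hproj : (g x) i = EuclideanSpace.proj (𝕜 := ℝ) i (g x) := rfl
  rw [hproj]
  conv_lhs => rw [← hx]
  rw [map_sum, map_sum]
  refine Finset.sum_congr rfl fun j _ => ?_
  rw [_root_.map_smul, _root_.map_smul, EuclideanSpace.basisFun_apply]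
  simp [mul_comm]

lemma polyEval_rot (g : EuclideanSpace ℝ (Fin n) ≃ₗᵢ[ℝ] EuclideanSpace ℝ (Fin n))
    (q : MvPolynomial (Fin n) ℝ) (x : Metric.sphere (0 : EuclideanSpace ℝ (Fin n)) 1) :
    polyEvalLM n (MvPolynomial.aeval (rotPoly g) q) x = polyEvalLM n q (sphereRot g x) := by
  have haeval : ∀ (x' : Fin n → ℝ) (p : MvPolynomial (Fin n) ℝ),
      MvPolynomial.aeval x' p = MvPolynomial.eval x' p := fun x' p => by
    rw [MvPolynomial.aeval_def, Algebra.algebraMap_self, MvPolynomial.eval₂_id]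
  set x' := fun i => (x : EuclideanSpace ℝ (Fin n)) i with hx'
  have h1 : polyEvalLM n (MvPolynomial.aeval (rotPoly g) q) x
      = MvPolynomial.aeval (fun i => MvPolynomial.eval x' (rotPoly g i)) q := by
    show MvPolynomial.eval x' (MvPolynomial.aeval (rotPoly g) q) = _
    rw [← haeval x']
    rw [MvPolynomial.comp_aeval_apply (f := rotPoly g) (MvPolynomial.aeval x') q]
    simp_rw [haeval]
  rw [h1, haeval]
  show MvPolynomial.eval _ q = MvPolynomial.eval (fun i => (g (x : EuclideanSpace ℝ (Fin n))) i) q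
  have heq : (fun i => MvPolynomial.eval x' (rotPoly g i))
      = fun i => (g (x : EuclideanSpace ℝ (Fin n))) i := by
    funext i
    rw [rot_coord]
    simp [rotPoly, hx']
  rw [heq]

end

noncomputable section

variable {n : ℕ}

local notation "S" => Metric.sphere (0 : EuclideanSpace ℝ (Fin n)) 1

lemma continuous_sphereRot (g : EuclideanSpace ℝ (Fin n) ≃ₗᵢ[ℝ] EuclideanSpace ℝ (Fin n)) :
    Continuous (sphereRot g : S → S) :=
  (g.continuous.comp continuous_subtype_val).subtype_mk _

lemma sphereRot_symm_apply (g : EuclideanSpace ℝ (Fin n) ≃ₗᵢ[ℝ] EuclideanSpace ℝ (Fin n))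
    (x : S) : sphereRot g.symm (sphereRot g x) = x := by
  apply Subtype.ext
  exact g.symm_apply_apply _

lemma exists_sphereRot_eq (x y : S) :
    ∃ g : EuclideanSpace ℝ (Fin n) ≃ₗᵢ[ℝ] EuclideanSpace ℝ (Fin n), sphereRot g y = x := by
  have hy : ‖(y : EuclideanSpace ℝ (Fin n))‖ = 1 := by
    simpa only [Metric.mem_sphere, dist_zero_right] using y.2
  have hx : ‖(x : EuclideanSpace ℝ (Fin n))‖ = 1 := by
    simpa only [Metric.mem_sphere, dist_zero_right] using x.2
  refine ⟨Submodule.reflection (ℝ ∙ ((y : EuclideanSpace ℝ (Fin n)) - x))ᗮ, ?_⟩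
  apply Subtype.ext
  exact Submodule.reflection_sub (hy.trans hx.symm)

lemma sphere_isOpenPosMeasure (μ : Measure S) [IsProbabilityMeasure μ]
    (hrot : ∀ g : EuclideanSpace ℝ (Fin n) ≃ₗᵢ[ℝ] EuclideanSpace ℝ (Fin n),
      MeasurePreserving (sphereRot g) μ μ) : μ.IsOpenPosMeasure := by
  constructor
  intro U hU hne
  obtain ⟨u₀, hu₀⟩ := hne
  intro h0
  -- for each `y` pick a rotation sending `u₀` to `y`
  have hcov : ∀ y : S, ∃ g : EuclideanSpace ℝ (Fin n) ≃ₗᵢ[ℝ] EuclideanSpace ℝ (Fin n),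
      sphereRot g u₀ = y := fun y => exists_sphereRot_eq y u₀
  choose gy hgy using hcov
  have himg : ∀ y : S, (sphereRot (gy y) '' U) = sphereRot (gy y).symm ⁻¹' U := by
    intro y
    apply Set.ext
    intro z
    constructor
    · rintro ⟨w, hw, rfl⟩
      simpa [sphereRot_symm_apply] using hw
    · intro hz
      exact ⟨sphereRot (gy y).symm z, hz, by
        have := sphereRot_symm_apply (gy y).symm z
        simpa using (sphereRot_symm_apply ((gy y).symm) z) ▸ (by
          apply Subtype.ext
          exact (gy y).apply_symm_apply _)⟩
  have hopen : ∀ y : S, IsOpen (sphereRot (gy y) '' U) := by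
    intro y
    rw [himg]
    exact hU.preimage (continuous_sphereRot _)
  have hmem : ∀ y : S, y ∈ sphereRot (gy y) '' U := fun y => ⟨u₀, hu₀, hgy y⟩
  obtain ⟨t, ht⟩ := isCompact_univ.elim_finite_subcover (fun y : S => sphereRot (gy y) '' U)
    hopen (fun y _ => Set.mem_iUnion.mpr ⟨y, hmem y⟩)
  have hle : μ Set.univ ≤ ∑ y ∈ t, μ (sphereRot (gy y) '' U) :=
    (measure_mono ht).trans (measure_biUnion_finset_le t _)
  have hzero : ∀ y ∈ t, μ (sphereRot (gy y) '' U) = 0 := by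
    intro y _
    rw [himg, (hrot (gy y).symm).measure_preimage hU.measurableSet.nullMeasurableSet]
    exact h0
  rw [Finset.sum_eq_zero hzero, measure_univ] at hle
  simp at hle

end



noncomputable section

/-- The finset of exponent vectors of total degree at most `D`. -/
def expFinset (n D : ℕ) : Finset (Fin n →₀ ℕ) :=
  (Finset.Iic (Finsupp.equivFunOnFinite.symm fun _ : Fin n => D)).filter
    (fun d => (d.sum fun _ e => e) ≤ D)

lemma mem_expFinset {n D : ℕ} (d : Fin n →₀ ℕ) :
    d ∈ expFinset n D ↔ (d.sum fun _ e => e) ≤ D := by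
  rw [expFinset, Finset.mem_filter, Finset.mem_Iic]
  constructor
  · exact fun h => h.2
  · intro h
    refine ⟨?_, h⟩
    rw [Finsupp.le_iff]
    intro i hi
    have h1 : d i ≤ d.sum fun _ e => e := by
      rw [Finsupp.sum]
      exact Finset.single_le_sum (f := fun i => d i) (fun _ _ => Nat.zero_le _) hi
    simpa using h1.trans h


end



lemma pow_self_le_factorial_mul_exp (n : ℕ) : (n : ℝ) ^ n ≤ (n.factorial : ℝ) * Real.exp n := by
  have h0 : (0:ℝ) ≤ (n:ℝ) := Nat.cast_nonneg n
  have h1 : (n:ℝ) ^ n / (n.factorial : ℝ) ≤ Real.exp n := by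
    have h2 := Real.sum_le_exp_of_nonneg h0 (n + 1)
    refine le_trans ?_ h2
    have h3 : ∀ i ∈ Finset.range (n + 1), (0:ℝ) ≤ (n:ℝ) ^ i / i.factorial := by
      intro i _
      positivity
    simpa using Finset.single_le_sum h3 (Finset.self_mem_range_succ n)
  have hf : (0:ℝ) < (n.factorial : ℝ) := by positivity
  calc (n:ℝ) ^ n = (n:ℝ) ^ n / (n.factorial : ℝ) * n.factorial := by field_simp
    _ ≤ Real.exp n * n.factorial := by
        exact mul_le_mul_of_nonneg_right h1 hf.le
    _ = (n.factorial : ℝ) * Real.exp n := mul_comm _ _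

lemma choose_le_exp_four (n m k : ℕ) (hn : 1 ≤ n) (hk : 1 ≤ k)
    (h : (n : ℝ) * Real.log (m + 1) ≤ (k : ℝ)) (hm : 1 ≤ m) :
    ((k * m + n).choose n : ℝ) ≤ Real.exp (4 * k) := by
  have hn0 : (0:ℝ) < (n:ℝ) := by exact_mod_cast hn
  have hk0 : (0:ℝ) < (k:ℝ) := by exact_mod_cast hk
  have hfac : (0:ℝ) < (n.factorial : ℝ) := by positivity
  -- Step A : C * n! ≤ (km+n)^n
  have hA : ((k * m + n).choose n : ℝ) * (n.factorial : ℝ) ≤ ((k * m + n : ℕ) : ℝ) ^ n := by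
    have := Nat.descFactorial_eq_factorial_mul_choose (k * m + n) n
    have h2 : n.factorial * (k * m + n).choose n ≤ (k * m + n) ^ n := by
      rw [← this]; exact Nat.descFactorial_le_pow _ _
    calc ((k * m + n).choose n : ℝ) * (n.factorial : ℝ)
        = ((n.factorial * (k * m + n).choose n : ℕ) : ℝ) := by push_cast; ring
      _ ≤ (((k * m + n) ^ n : ℕ) : ℝ) := by exact_mod_cast Nat.cast_le.mpr h2
      _ = ((k * m + n : ℕ) : ℝ) ^ n := by push_cast; ring
  have hB := pow_self_le_factorial_mul_exp n
  -- C ≤ ((km+n)/n)^n * exp n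
  have hnn : (0:ℝ) < (n:ℝ)^n := pow_pos hn0 n
  have hC1 : ((k * m + n).choose n : ℝ) ≤ (((k * m + n : ℕ) : ℝ) / n) ^ n * Real.exp n := by
    have h1 : ((k*m+n).choose n : ℝ) ≤ ((k*m+n:ℕ):ℝ)^n / n.factorial := by
      rw [le_div_iff₀ hfac]; exact hA
    have h2 : ((k*m+n:ℕ):ℝ)^n / n.factorial ≤ ((k*m+n:ℕ):ℝ)^n * Real.exp n / (n:ℝ)^n := by
      rw [div_le_div_iff₀ hfac hnn]
      calc ((k*m+n:ℕ):ℝ)^n * (n:ℝ)^n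
          ≤ ((k*m+n:ℕ):ℝ)^n * ((n.factorial:ℝ) * Real.exp n) :=
            mul_le_mul_of_nonneg_left hB (by positivity)
        _ = ((k*m+n:ℕ):ℝ)^n * Real.exp n * n.factorial := by ring
    refine (h1.trans h2).trans_eq ?_
    rw [div_pow]
    ring
  -- (km+n) ≤ (k+n)(m+1)
  have hD : (((k * m + n : ℕ)) : ℝ) / n ≤ ((k:ℝ)/n + 1) * (m + 1) := by
    rw [div_le_iff₀ hn0]
    have : (((k * m + n : ℕ)) : ℝ) = (k:ℝ) * m + n := by push_cast; ring
    rw [this]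
    have hkn : (k:ℝ)/n * n = k := div_mul_cancel₀ _ hn0.ne'
    nlinarith [hkn, hk0.le, hn0.le, (by exact_mod_cast Nat.zero_le m : (0:ℝ) ≤ (m:ℝ))]
  have hD0 : (0:ℝ) ≤ (((k * m + n : ℕ)) : ℝ) / n := by positivity
  have hE : (((k * m + n : ℕ) : ℝ) / n) ^ n ≤ (((k:ℝ)/n + 1) * (m + 1)) ^ n :=
    pow_le_pow_left₀ hD0 hD n
  have hF : (((k:ℝ)/n + 1) * (m + 1)) ^ n = ((k:ℝ)/n + 1)^n * ((m:ℝ) + 1)^n := mul_pow _ _ _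
  -- (k/n+1)^n ≤ exp k
  have hG : ((k:ℝ)/n + 1)^n ≤ Real.exp k := by
    have h1 : (k:ℝ)/n + 1 ≤ Real.exp ((k:ℝ)/n) := by
      have := Real.add_one_le_exp ((k:ℝ)/n)
      linarith
    have h2 : ((k:ℝ)/n + 1)^n ≤ (Real.exp ((k:ℝ)/n))^n :=
      pow_le_pow_left₀ (by positivity) h1 n
    refine h2.trans_eq ?_
    rw [← Real.exp_nat_mul]
    congr 1
    field_simp
  -- (m+1)^n ≤ exp k
  have hH : ((m:ℝ) + 1)^n ≤ Real.exp k := by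
    have hm1 : (0:ℝ) < (m:ℝ) + 1 := by positivity
    have h1 : ((m:ℝ) + 1)^n = Real.exp ((n:ℝ) * Real.log ((m:ℝ)+1)) := by
      rw [Real.exp_nat_mul, Real.exp_log hm1]
    rw [h1]
    exact Real.exp_le_exp.mpr h
  -- n ≤ (3/2) k
  have hI : (n:ℝ) ≤ (3/2) * k := by
    have hlog2 : Real.log 2 ≤ Real.log ((m:ℝ)+1) := by
      apply Real.log_le_log (by norm_num)
      have : (1:ℝ) ≤ (m:ℝ) := by exact_mod_cast hm
      linarith
    have h2 := Real.log_two_gt_d9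
    nlinarith [h]
  have hJ : Real.exp (n:ℝ) ≤ Real.exp ((3/2) * k) := Real.exp_le_exp.mpr hI
  calc ((k * m + n).choose n : ℝ)
      ≤ (((k * m + n : ℕ) : ℝ) / n) ^ n * Real.exp n := hC1
    _ ≤ ((k:ℝ)/n + 1)^n * ((m:ℝ) + 1)^n * Real.exp n := by
        rw [← hF]
        exact mul_le_mul_of_nonneg_right hE (Real.exp_pos _).le
    _ ≤ Real.exp k * Real.exp k * Real.exp ((3/2) * k) := by
        have h1 : (0:ℝ) ≤ ((m:ℝ)+1)^n := by positivity
        have h2 : (0:ℝ) ≤ ((k:ℝ)/n + 1)^n := by positivity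
        have := mul_le_mul (mul_le_mul hG hH h1 (Real.exp_pos _).le)
          hJ (Real.exp_pos _).le (by positivity)
        exact this
    _ = Real.exp ((7/2) * k) := by rw [← Real.exp_add, ← Real.exp_add]; congr 1; ring
    _ ≤ Real.exp (4 * k) := Real.exp_le_exp.mpr (by nlinarith [hk0.le])

lemma choose_rpow_le_eight (n m k : ℕ) (hn : 1 ≤ n) (hk : 1 ≤ k)
    (h : (n : ℝ) * Real.log (m + 1) ≤ (k : ℝ)) :
    (((k * m + n).choose n : ℝ)) ^ ((1:ℝ)/(2 * k)) ≤ 8 := by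
  have hk0 : (0:ℝ) < (k:ℝ) := by exact_mod_cast hk
  have hexp2 : Real.exp 2 ≤ 8 := by
    have h1 := Real.exp_one_lt_d9
    have h2 : Real.exp 2 = Real.exp 1 * Real.exp 1 := by
      rw [← Real.exp_add]; norm_num
    nlinarith [Real.exp_pos 1]
  rcases Nat.eq_zero_or_pos m with hm | hm
  · subst hm
    simp only [Nat.mul_zero, Nat.zero_add, Nat.choose_self, Nat.cast_one]
    rw [Real.one_rpow]
    norm_num
  · have hC := choose_le_exp_four n m k hn hk h hm
    have hCpos : (0:ℝ) < ((k * m + n).choose n : ℝ) := by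
      have : 0 < (k * m + n).choose n := Nat.choose_pos (by omega)
      exact_mod_cast this
    have h1 : (((k * m + n).choose n : ℝ)) ^ ((1:ℝ)/(2 * k))
        ≤ (Real.exp (4 * k)) ^ ((1:ℝ)/(2 * k)) :=
      Real.rpow_le_rpow hCpos.le hC (by positivity)
    refine h1.trans ?_
    rw [← Real.exp_one_rpow (4 * k), ← Real.rpow_mul (Real.exp_pos 1).le,
      (show (4*(k:ℝ)) * (1/(2*k)) = 2 by
        rw [mul_one_div, div_eq_iff (by positivity : (2*(k:ℝ)) ≠ 0)]; ring),
      Real.exp_one_rpow]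
    exact hexp2

noncomputable section

variable {n : ℕ}

/-- The span of restrictions to the sphere of monomials of degree at most `D`. -/
def sphereV (n D : ℕ) :
    Submodule ℝ (Metric.sphere (0 : EuclideanSpace ℝ (Fin n)) 1 → ℝ) := by
  classical
  exact Submodule.span ℝ
    (((expFinset n D).image fun d => polyEvalLM n (MvPolynomial.monomial d 1) :
      Finset (Metric.sphere (0 : EuclideanSpace ℝ (Fin n)) 1 → ℝ)) : Set _)

instance (D : ℕ) : FiniteDimensional ℝ (sphereV n D) := by
  rw [sphereV]
  infer_instance

lemma finrank_sphereV_le (D : ℕ) : Module.finrank ℝ (sphereV n D) ≤ (D + n).choose n := by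
  classical
  refine le_trans (finrank_span_finset_le_card (R := ℝ) _) ?_
  refine le_trans (Finset.card_image_le) ?_
  exact card_exponents_le _ (fun d hd => (mem_expFinset d).mp hd)

lemma polyEvalLM_mem_sphereV {D : ℕ} {q : MvPolynomial (Fin n) ℝ} (hq : q.totalDegree ≤ D) :
    polyEvalLM n q ∈ sphereV n D := by
  classical
  have hrepr : polyEvalLM n q
      = ∑ d ∈ q.support, polyEvalLM n (MvPolynomial.monomial d (MvPolynomial.coeff d q)) := by
    rw [← map_sum]
    congr 1
    exact (MvPolynomial.support_sum_monomial_coeff q).symm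
  rw [hrepr]
  refine Submodule.sum_mem _ fun d hd => ?_
  have h1 : (MvPolynomial.monomial d) (MvPolynomial.coeff d q)
      = MvPolynomial.coeff d q • (MvPolynomial.monomial d) (1:ℝ) := by
    rw [MvPolynomial.smul_monomial, smul_eq_mul, mul_one]
  rw [h1, _root_.map_smul]
  refine Submodule.smul_mem _ _ (Submodule.subset_span ?_)
  simp only [Finset.coe_image, Set.mem_image, Finset.mem_coe]
  exact ⟨d, (mem_expFinset d).mpr ((MvPolynomial.le_totalDegree hd).trans hq),  rfl⟩

lemma sphereV_elem {D : ℕ} {v : Metric.sphere (0 : EuclideanSpace ℝ (Fin n)) 1 → ℝ}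
    (hv : v ∈ sphereV n D) :
    ∃ q : MvPolynomial (Fin n) ℝ, q.totalDegree ≤ D ∧ v = polyEvalLM n q := by
  classical
  refine Submodule.span_induction ?_ ?_ ?_ ?_ hv
  · rintro w hw
    simp only [Finset.coe_image, Set.mem_image, Finset.mem_coe] at hw
    obtain ⟨d, hd, rfl⟩ := hw
    exact ⟨MvPolynomial.monomial d 1, by
      refine le_trans (MvPolynomial.totalDegree_monomial_le _ _) ?_
      exact (mem_expFinset d).mp hd, rfl⟩
  · exact ⟨0, by simp, by simp⟩
  · rintro w₁ w₂ - - ⟨q₁, hq₁, rfl⟩ ⟨q₂, hq₂, rfl⟩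
    exact ⟨q₁ + q₂, le_trans (MvPolynomial.totalDegree_add _ _) (max_le hq₁ hq₂),
      (map_add _ _ _).symm⟩
  · rintro c w - ⟨q, hq, rfl⟩
    exact ⟨c • q, le_trans (MvPolynomial.totalDegree_smul_le _ _) hq, (map_smul _ _ _).symm⟩

end


lemma sphereEval_eq_polyEvalLM {n : ℕ} (f : MvPolynomial (Fin n) ℝ) :
    sphereEval f = polyEvalLM n f := rfl

end Aux

/-- There is an absolute constant `α > 0` such that for all `n, m`, every
homogeneous polynomial `f` of degree `m` on `ℝⁿ` and every integer `k ≥ 1` with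
`k ≥ n·ln(m+1)`, one has `‖f‖_{2k} ≤ max_{x ∈ Sⁿ⁻¹} |f(x)| ≤ α ‖f‖_{2k}`, where
`‖f‖_{2k}` is the `L^{2k}`-norm with respect to the rotation-invariant probability
measure on the unit sphere. -/
theorem exists_const_sup_sphere_le_L2k :
    ∃ α : ℝ, 0 < α ∧
      ∀ (n m k : ℕ), 0 < k → (n : ℝ) * Real.log (m + 1) ≤ (k : ℝ) →
      ∀ (μ : Measure (Metric.sphere (0 : EuclideanSpace ℝ (Fin n)) 1)),
        IsProbabilityMeasure μ →
        (∀ g : EuclideanSpace ℝ (Fin n) ≃ₗᵢ[ℝ] EuclideanSpace ℝ (Fin n),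
          MeasurePreserving (sphereRot g) μ μ) →
      ∀ f : MvPolynomial (Fin n) ℝ, f.IsHomogeneous m →
        (∫ x, sphereEval f x ^ (2 * k) ∂μ) ^ ((1 : ℝ) / (2 * k)) ≤
            (⨆ x : Metric.sphere (0 : EuclideanSpace ℝ (Fin n)) 1, |sphereEval f x|) ∧
        (⨆ x : Metric.sphere (0 : EuclideanSpace ℝ (Fin n)) 1, |sphereEval f x|) ≤
          α * (∫ x, sphereEval f x ^ (2 * k) ∂μ) ^ ((1 : ℝ) / (2 * k)) := by
    classical
  refine ⟨8, by norm_num, ?_⟩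
  intro n m k hk hkn μ hμ hrot f hf
  by_cases hne : Nonempty (Metric.sphere (0 : EuclideanSpace ℝ (Fin n)) 1)
  swap
  · exfalso
    haveI : IsEmpty (Metric.sphere (0 : EuclideanSpace ℝ (Fin n)) 1) := not_nonempty_iff.mp hne
    have h1 : (Set.univ : Set (Metric.sphere (0 : EuclideanSpace ℝ (Fin n)) 1)) = ∅ :=
      Set.univ_eq_empty_iff.mpr ‹_›
    have h2 := hμ.measure_univ
    rw [h1] at h2
    simp at h2
  have hn1 : 1 ≤ n := by
    by_contra h
    have hn0 : n = 0 := by omega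
    subst hn0
    obtain ⟨x⟩ := hne
    have h1 : (x : EuclideanSpace ℝ (Fin 0)) = 0 := Subsingleton.elim _ _
    have hx : ‖(x : EuclideanSpace ℝ (Fin 0))‖ = 1 := by
      simpa only [Metric.mem_sphere, dist_zero_right] using x.2
    rw [h1] at hx
    simp at hx
  have hk1 : 1 ≤ k := hk
  set F : Metric.sphere (0 : EuclideanSpace ℝ (Fin n)) 1 → ℝ := sphereEval f with hF
  have hFc : Continuous F := by
    rw [hF, sphereEval_eq_polyEvalLM]
    exact continuous_polyEvalLM f
  haveI : μ.IsOpenPosMeasure := sphere_isOpenPosMeasure μ hrot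
  haveI : Nonempty (Metric.sphere (0 : EuclideanSpace ℝ (Fin n)) 1) := hne
  obtain ⟨x₀, -, hx₀⟩ := isCompact_univ.exists_isMaxOn Set.univ_nonempty
    ((continuous_abs.comp hFc).continuousOn)
  have hx₀ : ∀ y, |F y| ≤ |F x₀| := fun y => hx₀ (Set.mem_univ y)
  have hbdd : BddAbove (Set.range fun x => |F x|) := by
    refine ⟨|F x₀|, ?_⟩
    rintro _ ⟨y, rfl⟩
    exact hx₀ y
  set M := ⨆ x, |F x| with hM
  have hMx₀ : M = |F x₀| :=
    le_antisymm (ciSup_le fun y => hx₀ y) (le_ciSup hbdd x₀)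
  have hM0 : 0 ≤ M := hMx₀ ▸ abs_nonneg _
  set I := ∫ x, F x ^ (2 * k) ∂μ with hI
  have hIpt : ∀ x, (0:ℝ) ≤ F x ^ (2 * k) := fun x => by
    rw [pow_mul]
    exact pow_nonneg (sq_nonneg _) k
  have hI0 : 0 ≤ I := integral_nonneg hIpt
  have hGc : Continuous fun x => F x ^ (2 * k) := hFc.pow _
  have hGint : Integrable (fun x => F x ^ (2 * k)) μ :=
    hGc.integrable_of_hasCompactSupport (HasCompactSupport.of_compactSpace _)
  have habs : ∀ a : ℝ, |a| ^ (2 * k) = a ^ (2 * k) := fun a => by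
    rw [← abs_pow, abs_of_nonneg]
    rw [pow_mul]
    exact pow_nonneg (sq_nonneg _) k
  have hk0 : ((2 : ℝ) * k) ≠ 0 := by
    have : (0:ℝ) < (k:ℝ) := by exact_mod_cast hk
    positivity
  have hrpow_pow : ∀ a : ℝ, 0 ≤ a → (a ^ (2 * k)) ^ ((1:ℝ)/(2 * k)) = a := by
    intro a ha
    rw [← Real.rpow_natCast a (2 * k), ← Real.rpow_mul ha]
    rw [show ((2 * k : ℕ) : ℝ) * ((1:ℝ)/(2 * (k:ℝ))) = 1 by
      push_cast
      field_simp]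
    exact Real.rpow_one a
  constructor
  · -- first inequality
    have hle : I ≤ M ^ (2 * k) := by
      have hpt : ∀ x, F x ^ (2 * k) ≤ M ^ (2 * k) := by
        intro x
        have h1 : |F x| ≤ M := hMx₀ ▸ hx₀ x
        calc F x ^ (2 * k) = |F x| ^ (2 * k) := (habs _).symm
          _ ≤ M ^ (2 * k) := pow_le_pow_left₀ (abs_nonneg _) h1 _
      calc I ≤ ∫ _, M ^ (2 * k) ∂μ := integral_mono hGint (integrable_const _) hpt
        _ = M ^ (2 * k) := by simp
    have h2 : I ^ ((1:ℝ)/(2 * k)) ≤ (M ^ (2 * k)) ^ ((1:ℝ)/(2 * k)) :=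
      Real.rpow_le_rpow hI0 hle (by positivity)
    exact h2.trans_eq (hrpow_pow M hM0)
  · -- second inequality
    have hdeg : (f ^ k).totalDegree ≤ k * m :=
      le_trans (MvPolynomial.totalDegree_pow _ _) (Nat.mul_le_mul le_rfl hf.totalDegree_le)
    have hmem : polyEvalLM n (f ^ k) ∈ sphereV n (k * m) := polyEvalLM_mem_sphereV hdeg
    have hcont : ∀ v : sphereV n (k * m), Continuous (v : Metric.sphere (0 : EuclideanSpace ℝ (Fin n)) 1 → ℝ) := by
      intro v
      obtain ⟨q, -, hq⟩ := sphereV_elem v.2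
      rw [hq]
      exact continuous_polyEvalLM q
    have hmeas : ∀ v : sphereV n (k * m), AEStronglyMeasurable (v : Metric.sphere (0 : EuclideanSpace ℝ (Fin n)) 1 → ℝ) μ :=
      fun v => (hcont v).aestronglyMeasurable
    have hint : ∀ v w : sphereV n (k * m),
        Integrable (fun x => (v : Metric.sphere (0 : EuclideanSpace ℝ (Fin n)) 1 → ℝ) x * (w : Metric.sphere (0 : EuclideanSpace ℝ (Fin n)) 1 → ℝ) x) μ := fun v w =>
      ((hcont v).mul (hcont w)).integrable_of_hasCompactSupport
        (HasCompactSupport.of_compactSpace _)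
    have hdef : ∀ v : sphereV n (k * m), (∫ x, ((v : Metric.sphere (0 : EuclideanSpace ℝ (Fin n)) 1 → ℝ) x)^2 ∂μ) = 0 → v = 0 := by
      intro v h0
      have hv2 : Integrable (fun x => ((v : Metric.sphere (0 : EuclideanSpace ℝ (Fin n)) 1 → ℝ) x)^2) μ := by
        simpa [sq] using hint v v
      have hae : (fun x => ((v : Metric.sphere (0 : EuclideanSpace ℝ (Fin n)) 1 → ℝ) x)^2) =ᵐ[μ] 0 :=
        (integral_eq_zero_iff_of_nonneg (fun x => sq_nonneg _) hv2).mp h0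
      have heq : (fun x => ((v : Metric.sphere (0 : EuclideanSpace ℝ (Fin n)) 1 → ℝ) x)^2) = 0 :=
        (Continuous.ae_eq_iff_eq μ ((hcont v).pow 2) continuous_const).mp hae
      apply Subtype.ext
      funext x
      have h3 := congrFun heq x
      simp only [Pi.zero_apply] at h3 ⊢
      exact pow_eq_zero_iff (n := 2) (by norm_num) |>.mp h3
    have htrans : ∀ x y : Metric.sphere (0 : EuclideanSpace ℝ (Fin n)) 1,
        ∃ σ, MeasurePreserving σ μ μ ∧
          (∀ v : sphereV n (k * m), (fun z => (v : Metric.sphere (0 : EuclideanSpace ℝ (Fin n)) 1 → ℝ) (σ z)) ∈ sphereV n (k * m)) ∧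
          σ y = x := by
      intro x y
      obtain ⟨g, hg⟩ := exists_sphereRot_eq x y
      refine ⟨sphereRot g, hrot g, ?_, hg⟩
      intro v
      obtain ⟨q, hq, hqe⟩ := sphereV_elem v.2
      have h4 : (fun z => (v : Metric.sphere (0 : EuclideanSpace ℝ (Fin n)) 1 → ℝ) (sphereRot g z))
          = polyEvalLM n (MvPolynomial.aeval (rotPoly g) q) := by
        funext z
        rw [hqe]
        exact (polyEval_rot g q z).symm
      rw [h4]
      exact polyEvalLM_mem_sphereV
        ((totalDegree_aeval_le_totalDegree _ (totalDegree_rotPoly g) q).trans hq)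
    have hkey := rkhs_bound μ (sphereV n (k * m)) hmeas hint hdef htrans
      ⟨polyEvalLM n (f ^ k), hmem⟩ x₀
    have hFk : ∀ x, (polyEvalLM n (f ^ k)) x = F x ^ k := by
      intro x
      show MvPolynomial.eval _ (f ^ k) = (MvPolynomial.eval _ f) ^ k
      exact map_pow _ _ _
    have hpow2 : ∀ a : ℝ, (a ^ k) ^ 2 = a ^ (2 * k) := fun a => by
      rw [← pow_mul, mul_comm]
    have hkey' : F x₀ ^ (2 * k) ≤ (Module.finrank ℝ (sphereV n (k * m)) : ℝ) * I := by
      have h5 : ((⟨polyEvalLM n (f ^ k), hmem⟩ : sphereV n (k * m)) : Metric.sphere (0 : EuclideanSpace ℝ (Fin n)) 1 → ℝ)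
          = polyEvalLM n (f ^ k) := rfl
      rw [h5] at hkey
      simp only [hFk, hpow2] at hkey
      exact hkey
    have hdle : (Module.finrank ℝ (sphereV n (k * m)) : ℝ) ≤ ((k * m + n).choose n : ℝ) := by
      exact_mod_cast finrank_sphereV_le (k * m)
    have hM2k : M ^ (2 * k) ≤ ((k * m + n).choose n : ℝ) * I := by
      rw [hMx₀, habs]
      exact hkey'.trans (mul_le_mul_of_nonneg_right hdle hI0)
    have hnum := choose_rpow_le_eight n m k hn1 hk1 hkn
    calc M = (M ^ (2 * k)) ^ ((1:ℝ)/(2 * k)) := (hrpow_pow M hM0).symm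
      _ ≤ (((k * m + n).choose n : ℝ) * I) ^ ((1:ℝ)/(2 * k)) :=
          Real.rpow_le_rpow (by positivity) hM2k (by positivity)
      _ = (((k * m + n).choose n : ℝ)) ^ ((1:ℝ)/(2 * k)) * I ^ ((1:ℝ)/(2 * k)) :=
          Real.mul_rpow (Nat.cast_nonneg _) hI0
      _ ≤ 8 * I ^ ((1:ℝ)/(2 * k)) :=
          mul_le_mul_of_nonneg_right hnum (Real.rpow_nonneg hI0 _)
end
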